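/- arXiv:1312.4208 — 10 statements merged into one kernel-verified Lean document; each statement's English description precedes it below -/
import Mathlib

section
/- Fix an integer p ≥ 2, let ζ = exp(2πi/p), and let Δ ∈ GL_p(ℂ). Let L₁(x) and L₂(x) be p×p matrices of complex polynomials such that Δ⁻¹·L_i(ζx)·Δ = L_i(x) for i = 1,2, and suppose the characteristic polynomial det(y·I_p − L₂(x)) ∈ ℂ[x][y] is irreducible. If g ∈ GL_p(ℂ) satisfies L₁(x) = g·L₂(x)·g⁻¹, then there exists c ∈ ℂ* with g·Δ = c·(Δ·g); that is, the classes of g and Δ in PGL_p(ℂ) commute. -/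
open scoped MatrixGroups

set_option synthInstance.maxHeartbeats 2000000
set_option maxHeartbeats 2000000

open Matrix Polynomial in
/-- A constant matrix commuting with a polynomial matrix whose characteristic
polynomial is irreducible must be a scalar matrix. -/
lemma aux_comm_scalar (p : ℕ) (hp : 2 ≤ p)
    (L : Matrix (Fin p) (Fin p) (Polynomial ℂ)) (hirr : Irreducible L.charpoly)
    (k : Matrix (Fin p) (Fin p) ℂ)
    (hk : (k.map Polynomial.C) * L = L * (k.map Polynomial.C)) :
    ∃ c : ℂ, k = c • (1 : Matrix (Fin p) (Fin p) ℂ) := by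
  have hp0 : 0 < p := by omega
  haveI : NeZero p := ⟨by omega⟩
  set F := RatFunc ℂ
  set φ : Polynomial ℂ →+* F := algebraMap (Polynomial ℂ) F with hφ
  set ψ : ℂ →+* F := φ.comp Polynomial.C with hψ
  have hψinj : Function.Injective ψ := ψ.injective
  set B : Matrix (Fin p) (Fin p) F := L.map φ with hBdef
  have hBchar : B.charpoly = L.charpoly.map φ := Matrix.charpoly_map L φ
  have hirrB : Irreducible B.charpoly := by
    rw [hBchar]
    exact ((Matrix.charpoly_monic L).irreducible_iff_irreducible_map_fraction_map).1 hirr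
  -- eigenvalue of k over ℂ
  obtain ⟨c, hc⟩ := Module.End.exists_eigenvalue (Matrix.mulVecLin k)
  obtain ⟨v, hv⟩ := hc.exists_hasEigenvector
  have hvne : v ≠ 0 := hv.right
  have hvk : k *ᵥ v = c • v := by
    have := hv.apply_eq_smul
    simpa [Matrix.mulVecLin_apply] using this
  -- move to F
  set kF : Matrix (Fin p) (Fin p) F := k.map ψ with hkFdef
  set vF : Fin p → F := fun i => ψ (v i) with hvFdef
  set c' : F := ψ c with hc'def
  have hkB : kF * B = B * kF := by
    have := congrArg (fun M => M.map φ) hk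
    simpa [Matrix.map_mul, Matrix.map_map, hkFdef, hψ] using this
  have hvF : kF *ᵥ vF = c' • vF := by
    funext i
    have h1 : (k *ᵥ v) i = c * v i := by rw [hvk]; rfl
    have : ψ ((k *ᵥ v) i) = ψ (c * v i) := congrArg ψ h1
    simp only [Matrix.mulVec, dotProduct, map_sum, _root_.map_mul] at this
    simpa [Matrix.mulVec, dotProduct, hkFdef, hvFdef, hc'def, Matrix.map_apply,
      Pi.smul_apply, smul_eq_mul, map_sum, _root_.map_mul] using this
  have hvFne : vF ≠ 0 := by
    intro h
    apply hvne
    funext i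
    have : ψ (v i) = ψ 0 := by
      have := congrFun h i
      simpa [hvFdef] using this
    exact hψinj this
  -- commuting powers
  have hkBpow : ∀ n : ℕ, kF * B ^ n = B ^ n * kF := fun n =>
    (Commute.pow_right hkB n)
  -- linear independence of B^i *ᵥ vF
  have hcharB_deg : B.charpoly.degree = (p : ℕ) := by
    rw [Matrix.charpoly_degree_eq_dim]
    simp
  have hli : LinearIndependent F (fun i : Fin p => (B ^ (i : ℕ)) *ᵥ vF) := by
    rw [Fintype.linearIndependent_iff]
    intro a ha
    set q : Polynomial F := ∑ i : Fin p, Polynomial.C (a i) * Polynomial.X ^ (i : ℕ) with hqdef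
    have haev : Polynomial.aeval B q = ∑ i : Fin p, a i • B ^ (i : ℕ) := by
      rw [hqdef, map_sum]
      refine Finset.sum_congr rfl fun i _ => ?_
      rw [_root_.map_mul, Polynomial.aeval_C, map_pow, Polynomial.aeval_X]
      rw [Algebra.algebraMap_eq_smul_one, smul_mul_assoc, one_mul]
    have hsum : (∑ i : Fin p, a i • B ^ (i : ℕ)) *ᵥ vF
        = ∑ i : Fin p, a i • (B ^ (i : ℕ) *ᵥ vF) := by
      funext j
      simp only [Matrix.mulVec, dotProduct, Matrix.sum_apply, Finset.sum_apply, Matrix.smul_apply,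
        Pi.smul_apply, smul_eq_mul, Finset.sum_mul, Finset.mul_sum, mul_assoc]
      rw [Finset.sum_comm]
      exact Finset.sum_congr rfl fun y _ => by
        rw [Finset.sum_mul]; exact Finset.sum_congr rfl fun x _ => mul_assoc _ _ _
    have hqv : (Polynomial.aeval B q) *ᵥ vF = 0 := by
      rw [haev, hsum, ha]
    have hq0 : q = 0 := by
      by_contra hqne
      have hdeg : q.degree < B.charpoly.degree := by
        rw [hcharB_deg, hqdef]
        refine lt_of_le_of_lt (Polynomial.degree_sum_le _ _) ?_
        rw [Finset.sup_lt_iff (by exact_mod_cast WithBot.bot_lt_coe p : (⊥ : WithBot ℕ) < (p : ℕ))]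
        intro i _
        refine lt_of_le_of_lt (Polynomial.degree_C_mul_X_pow_le _ _) ?_
        exact_mod_cast Nat.cast_lt.mpr i.isLt
      have hnotdvd : ¬ B.charpoly ∣ q := fun hdvd =>
        hqne (Polynomial.eq_zero_of_dvd_of_degree_lt hdvd hdeg)
      haveI : IsBezout (Polynomial F) := inferInstanceAs (IsBezout (Polynomial (RatFunc ℂ)))
      have hcop : IsCoprime B.charpoly q :=
        (dvd_or_isCoprime _ _ hirrB).resolve_left hnotdvd
      obtain ⟨A', B', hAB⟩ := hcop
      have : vF = 0 := by
        have h1 : (Polynomial.aeval B (A' * B.charpoly + B' * q)) *ᵥ vF = vF := by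
          rw [hAB]; simp
        rw [map_add, _root_.map_mul, _root_.map_mul, Matrix.aeval_self_charpoly, mul_zero,
          zero_add] at h1
        rw [← Matrix.mulVec_mulVec, hqv, Matrix.mulVec_zero] at h1
        exact h1.symm
      exact hvFne this
    intro i
    have : q.coeff (i : ℕ) = a i := by
      rw [hqdef, Polynomial.finset_sum_coeff]
      rw [Finset.sum_eq_single i]
      · simp
      · intro j _ hji
        rw [Polynomial.coeff_C_mul, Polynomial.coeff_X_pow]
        have : (j : ℕ) ≠ (i : ℕ) := fun h => hji (Fin.ext h)
        simp [Ne.symm this]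
      · simp
    rw [← this, hq0, Polynomial.coeff_zero]
  -- basis
  have hcard : Fintype.card (Fin p) = Module.finrank F (Fin p → F) := by
    simp [Module.finrank_fintype_fun_eq_card]
  let b := basisOfLinearIndependentOfCardEqFinrank hli hcard
  have hb : ∀ i, b i = (B ^ (i : ℕ)) *ᵥ vF := fun i => by
    simp [b, coe_basisOfLinearIndependentOfCardEqFinrank]
  -- kF acts as c' on everything
  have hkey : kF.mulVecLin = (c' • LinearMap.id : (Fin p → F) →ₗ[F] (Fin p → F)) := by
    refine b.ext fun i => ?_
    rw [hb i]
    simp only [Matrix.mulVecLin_apply, LinearMap.smul_apply, LinearMap.id_apply]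
    rw [Matrix.mulVec_mulVec, hkBpow, ← Matrix.mulVec_mulVec, hvF, Matrix.mulVec_smul]
  have hkF : ∀ w : Fin p → F, kF *ᵥ w = c' • w := fun w => by
    have := LinearMap.congr_fun hkey w
    simpa [Matrix.mulVecLin_apply] using this
  refine ⟨c, ?_⟩
  ext i j
  have h1 : kF i j = c' * (if i = j then 1 else 0) := by
    have := congrFun (hkF (Pi.single j 1)) i
    rw [Matrix.mulVec_single_one] at this
    simpa [Pi.single_apply, mul_comm, eq_comm] using this
  have h2 : ψ (k i j) = ψ (c * (if i = j then 1 else 0)) := by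
    rw [_root_.map_mul]
    simpa [hkFdef, Matrix.map_apply, hc'def, apply_ite ψ] using h1
  have h3 : k i j = c * (if i = j then 1 else 0) := hψinj h2
  simpa [Matrix.smul_apply, Matrix.one_apply, smul_eq_mul] using h3

/-- If `L₁, L₂` are polynomial matrices fixed by the twisted automorphism
`L(x) ↦ Δ⁻¹·L(ζx)·Δ`, the characteristic polynomial of `L₂` is irreducible, and
`L₁ = g·L₂·g⁻¹`, then the classes of `g` and `Δ` commute in `PGL_p(ℂ)`. -/
theorem stmt_6 (p : ℕ) (hp : 2 ≤ p) (ζ : ℂ)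
    (hζ : ζ = Complex.exp (2 * Real.pi * Complex.I / p))
    (Δ : GL (Fin p) ℂ)
    (L₁ L₂ : Matrix (Fin p) (Fin p) (Polynomial ℂ))
    (h1 : ((Δ⁻¹).val.map Polynomial.C) *
        (L₁.map (fun f => f.comp (Polynomial.C ζ * Polynomial.X))) *
        (Δ.val.map Polynomial.C) = L₁)
    (h2 : ((Δ⁻¹).val.map Polynomial.C) *
        (L₂.map (fun f => f.comp (Polynomial.C ζ * Polynomial.X))) *
        (Δ.val.map Polynomial.C) = L₂)
    (hirr : Irreducible L₂.charpoly)
    (g : GL (Fin p) ℂ)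
    (hg : L₁ = (g.val.map Polynomial.C) * L₂ * ((g⁻¹).val.map Polynomial.C)) :
    ∃ c : ℂ, c ≠ 0 ∧ g.val * Δ.val = c • (Δ.val * g.val) := by
  haveI : NeZero p := ⟨by omega⟩
  set q : Polynomial ℂ := Polynomial.C ζ * Polynomial.X with hqdef
  -- the substitution x ↦ ζ x as a ring hom
  set σ : Polynomial ℂ →+* Polynomial ℂ :=
    { toFun := fun f => f.comp q
      map_one' := Polynomial.one_comp
      map_mul' := fun a b => Polynomial.mul_comp a b q
      map_zero' := Polynomial.zero_comp
      map_add' := fun a b => Polynomial.add_comp } with hσdef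
  have hσC : ∀ (M : Matrix (Fin p) (Fin p) ℂ),
      (M.map Polynomial.C).map σ = M.map Polynomial.C := by
    intro M
    rw [Matrix.map_map]
    ext i j
    simp [hσdef, Matrix.map_apply, Polynomial.C_comp]
  have hmσ : ∀ (M N : Matrix (Fin p) (Fin p) (Polynomial ℂ)),
      (M * N).map σ = M.map σ * N.map σ := fun M N => Matrix.map_mul
  -- rewrite h1 h2 in terms of σ
  have h1' : ((Δ⁻¹).val.map Polynomial.C) * (L₁.map σ) * (Δ.val.map Polynomial.C) = L₁ := h1
  have h2' : ((Δ⁻¹).val.map Polynomial.C) * (L₂.map σ) * (Δ.val.map Polynomial.C) = L₂ := h2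
  -- abbreviations
  set D : Matrix (Fin p) (Fin p) (Polynomial ℂ) := Δ.val.map Polynomial.C with hD
  set D' : Matrix (Fin p) (Fin p) (Polynomial ℂ) := (Δ⁻¹).val.map Polynomial.C with hD'
  set G : Matrix (Fin p) (Fin p) (Polynomial ℂ) := g.val.map Polynomial.C with hG
  set G' : Matrix (Fin p) (Fin p) (Polynomial ℂ) := (g⁻¹).val.map Polynomial.C with hG'
  have hDD' : D * D' = 1 := by
    rw [hD, hD', ← Matrix.map_mul]
    have : Δ.val * (Δ⁻¹).val = 1 := Δ.mul_inv
    rw [this, Matrix.map_one _ (Polynomial.C_0) (Polynomial.C_1)]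
  have hD'D : D' * D = 1 := by
    rw [hD, hD', ← Matrix.map_mul]
    have : (Δ⁻¹).val * Δ.val = 1 := Δ.inv_mul
    rw [this, Matrix.map_one _ (Polynomial.C_0) (Polynomial.C_1)]
  have hGG' : G * G' = 1 := by
    rw [hG, hG', ← Matrix.map_mul]
    have : g.val * (g⁻¹).val = 1 := g.mul_inv
    rw [this, Matrix.map_one _ (Polynomial.C_0) (Polynomial.C_1)]
  have hG'G : G' * G = 1 := by
    rw [hG, hG', ← Matrix.map_mul]
    have : (g⁻¹).val * g.val = 1 := g.inv_mul
    rw [this, Matrix.map_one _ (Polynomial.C_0) (Polynomial.C_1)]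
  -- σ-images
  have conj_helper : ∀ (A B M N : Matrix (Fin p) (Fin p) (Polynomial ℂ)),
      A * B = 1 → B * M * A = N → M = A * N * B := by
    intro A B M N hAB h
    subst h
    calc M = (A * B) * M * (A * B) := by rw [hAB, Matrix.one_mul, Matrix.mul_one]
      _ = A * (B * M * A) * B := by simp only [Matrix.mul_assoc]
  have hL2σ : L₂.map σ = D * L₂ * D' := conj_helper D D' (L₂.map σ) L₂ hDD' h2'
  have hL1σ : L₁.map σ = D * L₁ * D' := conj_helper D D' (L₁.map σ) L₁ hDD' h1'
  have hgσ : L₁.map σ = G * (L₂.map σ) * G' := by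
    have := congrArg (fun M => M.map σ) hg
    simpa [hmσ, hσC, hG, hG'] using this
  -- key commutation: let k = g⁻¹ Δ⁻¹ g Δ, then (k.map C) commutes with L₂
  set u : GL (Fin p) ℂ := g⁻¹ * Δ⁻¹ * g * Δ with hu
  have huval : u.val = (g⁻¹).val * (Δ⁻¹).val * g.val * Δ.val := rfl
  have hkC : u.val.map Polynomial.C = G' * D' * G * D := by
    rw [huval, Matrix.map_mul, Matrix.map_mul, Matrix.map_mul]
  have e1 : D * L₂ = (L₂.map σ) * D := by
    rw [hL2σ, Matrix.mul_assoc (D * L₂) D' D, hD'D, Matrix.mul_one]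
  have e2 : G * (L₂.map σ) = (L₁.map σ) * G := by
    rw [hgσ, Matrix.mul_assoc (G * L₂.map σ) G' G, hG'G, Matrix.mul_one]
  have e3 : D' * (L₁.map σ) = L₁ * D' := by
    rw [hL1σ, ← Matrix.mul_assoc, ← Matrix.mul_assoc, hD'D, Matrix.one_mul]
  have e4 : G' * L₁ = L₂ * G' := by
    rw [hg, ← Matrix.mul_assoc, ← Matrix.mul_assoc, hG'G, Matrix.one_mul]
  have hcomm : (u.val.map Polynomial.C) * L₂ = L₂ * (u.val.map Polynomial.C) := by
    rw [hkC]
    simp only [Matrix.mul_assoc]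
    rw [e1]
    rw [show G * (L₂.map σ * D) = (L₁.map σ) * (G * D) by
      rw [← Matrix.mul_assoc, e2, Matrix.mul_assoc]]
    rw [show D' * (L₁.map σ * (G * D)) = L₁ * (D' * (G * D)) by
      rw [← Matrix.mul_assoc, e3, Matrix.mul_assoc]]
    rw [show G' * (L₁ * (D' * (G * D))) = L₂ * (G' * (D' * (G * D))) by
      rw [← Matrix.mul_assoc, e4, Matrix.mul_assoc]]
  obtain ⟨c, hc⟩ := aux_comm_scalar p hp L₂ hirr u.val hcomm
  have hc0 : c ≠ 0 := by
    intro h0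
    have h1' : u.val * (u⁻¹).val = 1 := u.mul_inv
    rw [hc, h0, zero_smul, Matrix.zero_mul] at h1'
    have := congrFun (congrFun h1' ⟨0, by omega⟩) ⟨0, by omega⟩
    simp [Matrix.one_apply] at this
  refine ⟨c, hc0, ?_⟩
  have hce : (g⁻¹).val * (Δ⁻¹).val * g.val * Δ.val
      = c • (1 : Matrix (Fin p) (Fin p) ℂ) := by
    rw [← huval]; exact hc
  calc g.val * Δ.val
      = Δ.val * g.val * ((g⁻¹).val * (Δ⁻¹).val * g.val * Δ.val) := by
        simp only [Matrix.mul_assoc, Units.mul_inv_cancel_left]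
    _ = c • (Δ.val * g.val) := by rw [hce, Matrix.mul_smul, Matrix.mul_one]
end

section
/- Let A be a commutative ring, let q ≥ 1 be an integer, and let ξ_0, ξ_1, …, ξ_q ∈ A; set ξ_i := 0 for i > q and for i < 0, and let ξ(x) := Σ_{i=0}^{q} ξ_i x^i ∈ A[x]. Then for any integer s with 0 ≤ s ≤ q+1, the following identity holds in the polynomial ring A[x,y]: (x − y) · ( Σ_{k=0}^{s−1} Σ_{l=0}^{s−1} ξ_{k+l+1−s} x^k y^l − Σ_{k=s}^{q} Σ_{l=s}^{q} ξ_{k+l+1−s} x^k y^l ) = ξ(y)·x^s − ξ(x)·y^s. -/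
private lemma tel {R : Type*} [CommRing R] (x y : R) (N : ℕ) :
    ∀ b a : ℕ, a ≤ b → b ≤ N + 1 →
      (x - y) * ∑ k ∈ Finset.Ico a b, x ^ k * y ^ (N - k)
        = x ^ b * y ^ (N + 1 - b) - x ^ a * y ^ (N + 1 - a) := by
  intro b
  induction b with
  | zero =>
      intro a ha hb
      interval_cases a
      simp
  | succ b ih =>
      intro a ha hb
      rcases Nat.lt_or_ge a (b + 1) with h | h
      · have ha' : a ≤ b := by omega
        rw [Finset.sum_Ico_succ_top ha', mul_add, ih a ha' (by omega),
          show N + 1 - b = (N - b) + 1 by omega, show N + 1 - (b + 1) = N - b by omega]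
        ring
      · have : a = b + 1 := by omega
        subst this
        simp

private lemma reindex1 {R : Type*} [CommRing R] (x y : R) (a : ℤ → R)
    (hneg : ∀ i : ℤ, i < 0 → a i = 0) (s : ℕ) :
    (∑ k ∈ Finset.range s, ∑ l ∈ Finset.range s,
        a ((k : ℤ) + (l : ℤ) + 1 - (s : ℤ)) * x ^ k * y ^ l)
      = ∑ m ∈ Finset.range s, a (m : ℤ) *
          ∑ k ∈ Finset.Ico m s, x ^ k * y ^ (m + s - 1 - k) := by
  have h1 : (∑ k ∈ Finset.range s, ∑ l ∈ Finset.range s,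
        a ((k : ℤ) + (l : ℤ) + 1 - (s : ℤ)) * x ^ k * y ^ l)
      = ∑ p ∈ (Finset.range s ×ˢ Finset.range s).filter (fun p => s ≤ p.1 + p.2 + 1),
          a ((p.1 : ℤ) + (p.2 : ℤ) + 1 - (s : ℤ)) * x ^ p.1 * y ^ p.2 := by
    rw [← Finset.sum_product']
    refine (Finset.sum_subset (Finset.filter_subset _ _) ?_).symm
    intro p hp hnp
    simp only [Finset.mem_filter, Finset.mem_product, Finset.mem_range] at hp hnp
    rw [hneg _ (by omega), zero_mul, zero_mul]
  have h2 : (∑ m ∈ Finset.range s, a (m : ℤ) *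
        ∑ k ∈ Finset.Ico m s, x ^ k * y ^ (m + s - 1 - k))
      = ∑ p ∈ (Finset.range s).sigma (fun m => Finset.Ico m s),
          a (p.1 : ℤ) * (x ^ p.2 * y ^ (p.1 + s - 1 - p.2)) := by
    simp_rw [Finset.mul_sum]
    rw [Finset.sum_sigma]
  rw [h1, h2]
  refine Finset.sum_nbij' (fun p => ⟨p.1 + p.2 + 1 - s, p.1⟩)
    (fun p => (p.2, p.1 + s - 1 - p.2)) ?_ ?_ ?_ ?_ ?_
  · intro p hp
    simp only [Finset.mem_filter, Finset.mem_product, Finset.mem_range] at hp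
    simp only [Finset.mem_sigma, Finset.mem_range, Finset.mem_Ico]
    omega
  · intro p hp
    simp only [Finset.mem_sigma, Finset.mem_range, Finset.mem_Ico] at hp
    simp only [Finset.mem_filter, Finset.mem_product, Finset.mem_range]
    omega
  · intro p hp
    simp only [Finset.mem_filter, Finset.mem_product, Finset.mem_range] at hp
    ext <;> simp <;> omega
  · intro p hp
    simp only [Finset.mem_sigma, Finset.mem_range, Finset.mem_Ico] at hp
    ext <;> simp <;> omega
  · intro p hp
    simp only [Finset.mem_filter, Finset.mem_product, Finset.mem_range] at hp
    have h3 : ((p.1 + p.2 + 1 - s : ℕ) : ℤ) = (p.1 : ℤ) + (p.2 : ℤ) + 1 - (s : ℤ) := by omega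
    have h4 : (p.1 + p.2 + 1 - s) + s - 1 - p.1 = p.2 := by omega
    rw [h3, h4]
    ring

private lemma reindex2 {R : Type*} [CommRing R] (x y : R) (a : ℤ → R) (q : ℕ)
    (hbig : ∀ i : ℤ, (q : ℤ) < i → a i = 0) (s : ℕ) :
    (∑ k ∈ Finset.Icc s q, ∑ l ∈ Finset.Icc s q,
        a ((k : ℤ) + (l : ℤ) + 1 - (s : ℤ)) * x ^ k * y ^ l)
      = ∑ m ∈ Finset.Icc (s + 1) q, a (m : ℤ) *
          ∑ k ∈ Finset.Ico s m, x ^ k * y ^ (m + s - 1 - k) := by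
  have h1 : (∑ k ∈ Finset.Icc s q, ∑ l ∈ Finset.Icc s q,
        a ((k : ℤ) + (l : ℤ) + 1 - (s : ℤ)) * x ^ k * y ^ l)
      = ∑ p ∈ (Finset.Icc s q ×ˢ Finset.Icc s q).filter (fun p => p.1 + p.2 + 1 ≤ q + s),
          a ((p.1 : ℤ) + (p.2 : ℤ) + 1 - (s : ℤ)) * x ^ p.1 * y ^ p.2 := by
    rw [← Finset.sum_product']
    refine (Finset.sum_subset (Finset.filter_subset _ _) ?_).symm
    intro p hp hnp
    simp only [Finset.mem_filter, Finset.mem_product, Finset.mem_Icc] at hp hnp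
    rw [hbig _ (by omega), zero_mul, zero_mul]
  have h2 : (∑ m ∈ Finset.Icc (s + 1) q, a (m : ℤ) *
        ∑ k ∈ Finset.Ico s m, x ^ k * y ^ (m + s - 1 - k))
      = ∑ p ∈ (Finset.Icc (s + 1) q).sigma (fun m => Finset.Ico s m),
          a (p.1 : ℤ) * (x ^ p.2 * y ^ (p.1 + s - 1 - p.2)) := by
    simp_rw [Finset.mul_sum]
    rw [Finset.sum_sigma]
  rw [h1, h2]
  refine Finset.sum_nbij' (fun p => ⟨p.1 + p.2 + 1 - s, p.1⟩)
    (fun p => (p.2, p.1 + s - 1 - p.2)) ?_ ?_ ?_ ?_ ?_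
  · intro p hp
    simp only [Finset.mem_filter, Finset.mem_product, Finset.mem_Icc] at hp
    simp only [Finset.mem_sigma, Finset.mem_Icc, Finset.mem_Ico]
    omega
  · intro p hp
    simp only [Finset.mem_sigma, Finset.mem_Icc, Finset.mem_Ico] at hp
    simp only [Finset.mem_filter, Finset.mem_product, Finset.mem_Icc]
    omega
  · intro p hp
    simp only [Finset.mem_filter, Finset.mem_product, Finset.mem_Icc] at hp
    ext <;> simp <;> omega
  · intro p hp
    simp only [Finset.mem_sigma, Finset.mem_Icc, Finset.mem_Ico] at hp
    ext <;> simp <;> omega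
  · intro p hp
    simp only [Finset.mem_filter, Finset.mem_product, Finset.mem_Icc] at hp
    have h3 : ((p.1 + p.2 + 1 - s : ℕ) : ℤ) = (p.1 : ℤ) + (p.2 : ℤ) + 1 - (s : ℤ) := by omega
    have h4 : (p.1 + p.2 + 1 - s) + s - 1 - p.1 = p.2 := by omega
    rw [h3, h4]
    ring

private lemma key {R : Type*} [CommRing R] (x y : R) (a : ℤ → R)
    (hneg : ∀ i : ℤ, i < 0 → a i = 0) (q : ℕ) (hbig : ∀ i : ℤ, (q : ℤ) < i → a i = 0)
    (s : ℕ) (hs : s ≤ q + 1) :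
    (x - y) *
        ((∑ k ∈ Finset.range s, ∑ l ∈ Finset.range s,
            a ((k : ℤ) + (l : ℤ) + 1 - (s : ℤ)) * x ^ k * y ^ l)
          - ∑ k ∈ Finset.Icc s q, ∑ l ∈ Finset.Icc s q,
            a ((k : ℤ) + (l : ℤ) + 1 - (s : ℤ)) * x ^ k * y ^ l)
      = (∑ i ∈ Finset.range (q + 1), a (i : ℤ) * y ^ i) * x ^ s
        - (∑ i ∈ Finset.range (q + 1), a (i : ℤ) * x ^ i) * y ^ s := by
  rw [reindex1 x y a hneg s, reindex2 x y a q hbig s, mul_sub, Finset.mul_sum, Finset.mul_sum]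
  have e1 : ∀ m ∈ Finset.range s,
      (x - y) * (a (m : ℤ) * ∑ k ∈ Finset.Ico m s, x ^ k * y ^ (m + s - 1 - k))
        = a (m : ℤ) * (x ^ s * y ^ m - x ^ m * y ^ s) := by
    intro m hm
    rw [Finset.mem_range] at hm
    rw [mul_left_comm, tel x y (m + s - 1) s m (le_of_lt hm) (by omega),
      show m + s - 1 + 1 - s = m by omega, show m + s - 1 + 1 - m = s by omega]
  have e2 : ∀ m ∈ Finset.Icc (s + 1) q,
      (x - y) * (a (m : ℤ) * ∑ k ∈ Finset.Ico s m, x ^ k * y ^ (m + s - 1 - k))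
        = a (m : ℤ) * (x ^ m * y ^ s - x ^ s * y ^ m) := by
    intro m hm
    rw [Finset.mem_Icc] at hm
    rw [mul_left_comm, tel x y (m + s - 1) m s (by omega) (by omega),
      show m + s - 1 + 1 - m = s by omega, show m + s - 1 + 1 - s = m by omega]
  rw [Finset.sum_congr rfl e1, Finset.sum_congr rfl e2]
  have hrhs : (∑ i ∈ Finset.range (q + 1), a (i : ℤ) * y ^ i) * x ^ s
        - (∑ i ∈ Finset.range (q + 1), a (i : ℤ) * x ^ i) * y ^ s
      = ∑ m ∈ Finset.range (q + 1), a (m : ℤ) * (x ^ s * y ^ m - x ^ m * y ^ s) := by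
    rw [Finset.sum_mul, Finset.sum_mul, ← Finset.sum_sub_distrib]
    exact Finset.sum_congr rfl (fun m _ => by ring)
  rw [hrhs]
  have hsplit : ∑ m ∈ Finset.range (q + 1), a (m : ℤ) * (x ^ s * y ^ m - x ^ m * y ^ s)
      = (∑ m ∈ Finset.range s, a (m : ℤ) * (x ^ s * y ^ m - x ^ m * y ^ s))
        + ∑ m ∈ Finset.Icc s q, a (m : ℤ) * (x ^ s * y ^ m - x ^ m * y ^ s) := by
    rw [Finset.range_eq_Ico,
      ← Finset.sum_Ico_consecutive _ (Nat.zero_le s) hs, Finset.Ico_add_one_right_eq_Icc, Finset.range_eq_Ico]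
  rw [hsplit]
  have hIcc : ∑ m ∈ Finset.Icc s q, a (m : ℤ) * (x ^ s * y ^ m - x ^ m * y ^ s)
      = ∑ m ∈ Finset.Icc (s + 1) q, a (m : ℤ) * (x ^ s * y ^ m - x ^ m * y ^ s) := by
    refine (Finset.sum_subset (Finset.Icc_subset_Icc (by omega) le_rfl) ?_).symm
    intro m hm hnm
    simp only [Finset.mem_Icc] at hm hnm
    have : m = s := by omega
    subst this
    rw [sub_self, mul_zero]
  rw [hIcc]
  have : ∀ m ∈ Finset.Icc (s + 1) q,
      a (m : ℤ) * (x ^ m * y ^ s - x ^ s * y ^ m)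
        = -(a (m : ℤ) * (x ^ s * y ^ m - x ^ m * y ^ s)) := fun m _ => by ring
  rw [Finset.sum_congr rfl this, Finset.sum_neg_distrib]
  ring

/-- The generating-function identity (Lemma 5.4 of the paper): with the convention
`ξ_i = 0` for `i < 0` or `i > q`, for `0 ≤ s ≤ q+1` one has
`(x-y)·(Σ_{k,l<s} ξ_{k+l+1-s} x^k y^l − Σ_{s≤k,l≤q} ξ_{k+l+1-s} x^k y^l)
  = ξ(y)x^s − ξ(x)y^s` in `A[x,y]`. -/
theorem stmt_8 (A : Type) [CommRing A] (q : ℕ) (hq : 1 ≤ q) (ξ : ℤ → A)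
    (hneg : ∀ i : ℤ, i < 0 → ξ i = 0) (hbig : ∀ i : ℤ, (q : ℤ) < i → ξ i = 0)
    (s : ℕ) (hs : s ≤ q + 1) :
    let x : Polynomial (Polynomial A) := Polynomial.C Polynomial.X
    let y : Polynomial (Polynomial A) := Polynomial.X
    let ξx : Polynomial (Polynomial A) :=
      ∑ i ∈ Finset.range (q + 1), Polynomial.C (Polynomial.C (ξ (i : ℤ))) * x ^ i
    let ξy : Polynomial (Polynomial A) :=
      ∑ i ∈ Finset.range (q + 1), Polynomial.C (Polynomial.C (ξ (i : ℤ))) * y ^ i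
    (x - y) *
        ((∑ k ∈ Finset.range s, ∑ l ∈ Finset.range s,
            Polynomial.C (Polynomial.C (ξ ((k : ℤ) + (l : ℤ) + 1 - (s : ℤ)))) *
              x ^ k * y ^ l) -
          (∑ k ∈ Finset.Icc s q, ∑ l ∈ Finset.Icc s q,
            Polynomial.C (Polynomial.C (ξ ((k : ℤ) + (l : ℤ) + 1 - (s : ℤ)))) *
              x ^ k * y ^ l)) =
      ξy * x ^ s - ξx * y ^ s := by
  intro x y ξx ξy
  exact key x y (fun i => Polynomial.C (Polynomial.C (ξ i)))
    (fun i hi => by show Polynomial.C (Polynomial.C (ξ i)) = 0; rw [hneg i hi]; simp) q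
    (fun i hi => by show Polynomial.C (Polynomial.C (ξ i)) = 0; rw [hbig i hi]; simp) s hs
end

section
/- Let p ≥ 1 be an integer and ζ ∈ ℂ a primitive p-th root of unity. Then for every integer l with 1 ≤ l ≤ p and every t ∈ ℂ with t^p ≠ 1, one has Σ_{k=1}^{p} ζ^{kl}/(t − ζ^k) = p·t^{l−1}/(t^p − 1). -/
/-- For a primitive `p`-th root of unity `ζ`, `1 ≤ l ≤ p` and `t` with `t^p ≠ 1`,
`Σ_{k=1}^{p} ζ^{kl}/(t − ζ^k) = p·t^{l−1}/(t^p − 1)`. -/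
theorem stmt_9 (p : ℕ) (hp : 1 ≤ p) (ζ : ℂ) (hζ : IsPrimitiveRoot ζ p)
    (l : ℕ) (hl1 : 1 ≤ l) (hlp : l ≤ p) (t : ℂ) (ht : t ^ p ≠ 1) :
    ∑ k ∈ Finset.Icc 1 p, ζ ^ (k * l) / (t - ζ ^ k) =
      (p : ℂ) * t ^ (l - 1) / (t ^ p - 1) := by
  have hzp : ζ ^ p = 1 := hζ.pow_eq_one
  have htp : t ^ p - 1 ≠ 0 := sub_ne_zero.mpr ht
  have hz : ∀ k : ℕ, t - ζ ^ k ≠ 0 := by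
    intro k h
    apply ht
    have : t = ζ ^ k := by linear_combination h
    rw [this, ← pow_mul, mul_comm, pow_mul, hzp, one_pow]
  -- rewrite each summand
  have hk : ∀ k ∈ Finset.Icc 1 p, ζ ^ (k * l) / (t - ζ ^ k)
      = (∑ i ∈ Finset.range p, ζ ^ (k * (l + (p - 1 - i))) * t ^ i) / (t ^ p - 1) := by
    intro k _
    rw [div_eq_div_iff (hz k) htp]
    have hg := geom_sum₂_mul t (ζ ^ k) p
    have hkp : (ζ ^ k) ^ p = 1 := by
      rw [← pow_mul, mul_comm, pow_mul, hzp, one_pow]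
    rw [hkp] at hg
    calc ζ ^ (k * l) * (t ^ p - 1)
        = ζ ^ (k * l) * ((∑ i ∈ Finset.range p, t ^ i * (ζ ^ k) ^ (p - 1 - i)) * (t - ζ ^ k)) := by
          rw [hg]
      _ = (∑ i ∈ Finset.range p, ζ ^ (k * (l + (p - 1 - i))) * t ^ i) * (t - ζ ^ k) := by
          rw [← mul_assoc, Finset.mul_sum]
          congr 1
          apply Finset.sum_congr rfl
          intro i _
          rw [Nat.mul_add, pow_add, ← pow_mul]
          ring
  rw [Finset.sum_congr rfl hk, ← Finset.sum_div]
  rw [Finset.sum_comm]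
  -- inner sums over k
  have sumzeta : ∀ n : ℕ, ∑ k ∈ Finset.Icc 1 p, ζ ^ (k * n)
      = if p ∣ n then (p : ℂ) else 0 := by
    intro n
    have : ∀ k, ζ ^ (k * n) = (ζ ^ n) ^ k := by
      intro k; rw [← pow_mul, mul_comm]
    simp only [this]
    by_cases h : p ∣ n
    · rw [if_pos h]
      have : ζ ^ n = 1 := (hζ.pow_eq_one_iff_dvd n).mpr h
      simp [this, Nat.card_Icc]
    · rw [if_neg h]
      have hw1 : ζ ^ n ≠ 1 := fun hc => h ((hζ.pow_eq_one_iff_dvd n).mp hc)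
      have hwp : (ζ ^ n) ^ p = 1 := by rw [← pow_mul, mul_comm, pow_mul, hzp, one_pow]
      have hins : Finset.range (p + 1) = insert 0 (Finset.Icc 1 p) := by
        ext x; simp [Finset.mem_range, Finset.mem_Icc]; omega
      have hgs : ∑ i ∈ Finset.range (p + 1), (ζ ^ n) ^ i = 1 := by
        rw [geom_sum_eq hw1, pow_succ, hwp, one_mul]
        exact div_self (sub_ne_zero.mpr hw1)
      rw [hins, Finset.sum_insert (by simp)] at hgs
      simpa using hgs
  have key : ∀ i ∈ Finset.range p,
      ∑ k ∈ Finset.Icc 1 p, ζ ^ (k * (l + (p - 1 - i))) * t ^ i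
      = (if p ∣ (l + (p - 1 - i)) then (p : ℂ) else 0) * t ^ i := by
    intro i _
    rw [← Finset.sum_mul, sumzeta]
  rw [Finset.sum_congr rfl key]
  have hfin : ∑ i ∈ Finset.range p,
      (if p ∣ (l + (p - 1 - i)) then (p : ℂ) else 0) * t ^ i = (p : ℂ) * t ^ (l - 1) := by
    rw [Finset.sum_eq_single_of_mem (l - 1)]
    · rw [if_pos]
      have : l + (p - 1 - (l - 1)) = p := by omega
      rw [this]
    · exact Finset.mem_range.mpr (by omega)
    · intro i hi hne
      rw [if_neg, zero_mul]
      intro hdvd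
      rcases hdvd with ⟨c, hc⟩
      have hi' : i < p := Finset.mem_range.mp hi
      have hb1 : 1 ≤ l + (p - 1 - i) := by omega
      have hb2 : l + (p - 1 - i) < 2 * p := by omega
      have hc1 : c = 1 := by
        rcases Nat.lt_or_ge c 2 with h2 | h2
        · interval_cases c <;> omega
        · have : 2 * p ≤ p * c := by
            calc 2 * p = p * 2 := by ring
            _ ≤ p * c := Nat.mul_le_mul_left p h2
          omega
      rw [hc1, mul_one] at hc
      omega
  rw [hfin]
end

section
/- Fix integers p ≥ 2 and q ≥ 1 and let R be the polynomial ring over ℂ in the variables ℓ_{ij}^k (1 ≤ i,j ≤ p, 0 ≤ k ≤ q), with the convention ℓ_{ij}^k = 0 for k < 0 or k > q. For each integer μ with 0 ≤ μ ≤ q+1 there exists a unique ℂ-bilinear map {·,·}_μ : R × R → R that is antisymmetric, a derivation in each argument, satisfies the Jacobi identity, and satisfies on generators {ℓ_{ij}^k, ℓ_{mn}^l}_μ = η_μ^{kl}·(ℓ_{mj}^{k+l+1−μ}·δ_{ni} − ℓ_{in}^{k+l+1−μ}·δ_{jm}) for all 1 ≤ i,j,m,n ≤ p and 0 ≤ k,l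 ≤ q. -/
/-- The polynomial ring `R = ℂ[ℓ_{ij}^k : 1 ≤ i,j ≤ p, 0 ≤ k ≤ q]`. -/
abbrev RR (p q : ℕ) : Type := MvPolynomial (Fin p × Fin p × Fin (q + 1)) ℂ

/-- The generator `ℓ_{ij}^k`, with the convention that it is `0` for `k < 0` or `k > q`. -/
noncomputable def ell (p q : ℕ) (i j : Fin p) (k : ℤ) : RR p q :=
  if h : 0 ≤ k ∧ k ≤ (q : ℤ) then MvPolynomial.X (i, j, ⟨k.toNat, by omega⟩) else 0

/-- `η_μ^{kl} = 1` if `k,l < μ`, `-1` if `k,l ≥ μ`, and `0` otherwise. -/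
def eta (μ k l : ℕ) : ℤ :=
  if k < μ ∧ l < μ then 1 else if μ ≤ k ∧ μ ≤ l then -1 else 0

/-- A Poisson bracket: a ℂ-bilinear map which is antisymmetric, a derivation in each
argument, and satisfies the Jacobi identity. -/
def IsPoissonBracket {R : Type} [CommRing R] [Algebra ℂ R]
    (br : R →ₗ[ℂ] R →ₗ[ℂ] R) : Prop :=
  (∀ f g, br f g = -br g f) ∧
  (∀ f g h, br (f * g) h = br f h * g + f * br g h) ∧
  (∀ f g h, br f (g * h) = br f g * h + g * br f h) ∧
  (∀ f g h, br f (br g h) + br g (br h f) + br h (br f g) = 0)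

/-- The bracket takes the prescribed values
`{ℓ_{ij}^k, ℓ_{mn}^l}_μ = η_μ^{kl}·(ℓ_{mj}^{k+l+1−μ}·δ_{ni} − ℓ_{in}^{k+l+1−μ}·δ_{jm})`
on generators. -/
def HasBracketValues (p q μ : ℕ)
    (br : RR p q →ₗ[ℂ] RR p q →ₗ[ℂ] RR p q) : Prop :=
  ∀ (i j m n : Fin p) (k l : Fin (q + 1)),
    br (MvPolynomial.X (i, j, k)) (MvPolynomial.X (m, n, l)) =
      eta μ (k : ℕ) (l : ℕ) •
        ((if n = i then ell p q m j (((k : ℕ) : ℤ) + ((l : ℕ) : ℤ) + 1 - (μ : ℤ)) else 0) -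
         (if j = m then ell p q i n (((k : ℕ) : ℤ) + ((l : ℕ) : ℤ) + 1 - (μ : ℤ)) else 0))

section Core
open MvPolynomial

variable (p q μ : ℕ)

/-- guarded eta on integers -/
def gZ (k l : ℤ) : ℤ :=
  if 0 ≤ k ∧ k ≤ q ∧ 0 ≤ l ∧ l ≤ q then
    (if k < μ ∧ l < μ then 1 else if (μ:ℤ) ≤ k ∧ (μ:ℤ) ≤ l then -1 else 0) else 0

lemma gZ_comm (k l : ℤ) : gZ q μ k l = gZ q μ l k := by
  simp only [gZ]; split_ifs <;> omega

/-- the bracket on (extended) generators -/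
noncomputable def bb (i j : Fin p) (k : ℤ) (m n : Fin p) (l : ℤ) : RR p q :=
  gZ q μ k l • ((if n = i then ell p q m j (k + l + 1 - (μ:ℤ)) else 0)
              - (if j = m then ell p q i n (k + l + 1 - (μ:ℤ)) else 0))

lemma bb_antisymm (i j m n : Fin p) (k l : ℤ) :
    bb p q μ m n l i j k = - bb p q μ i j k m n l := by
  simp only [bb, gZ_comm q μ l k]
  rw [show l + k + 1 - (μ:ℤ) = k + l + 1 - (μ:ℤ) by ring, ← smul_neg, neg_sub]

abbrev VV := Fin p × Fin p × Fin (q + 1)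

noncomputable def valv (a b : VV p q) : RR p q :=
  bb p q μ a.1 a.2.1 (a.2.2 : ℤ) b.1 b.2.1 (b.2.2 : ℤ)

noncomputable def brD : RR p q →ₗ[ℂ] RR p q →ₗ[ℂ] RR p q :=
  LinearMap.mk₂ ℂ
    (fun f g => ∑ a : VV p q, ∑ b : VV p q,
      valv p q μ a b * (pderiv a f) * (pderiv b g))
    (by intro x y z; simp [map_add, mul_add, add_mul, Finset.sum_add_distrib])
    (by intro c x y
        simp only [map_smul, smul_eq_mul, Finset.smul_sum]
        refine Finset.sum_congr rfl fun a _ => Finset.sum_congr rfl fun b _ => ?_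
        simp [Algebra.mul_smul_comm, Algebra.smul_mul_assoc])
    (by intro x y z; simp [map_add, mul_add, add_mul, Finset.sum_add_distrib])
    (by intro c x y
        simp only [map_smul, smul_eq_mul, Finset.smul_sum]
        refine Finset.sum_congr rfl fun a _ => Finset.sum_congr rfl fun b _ => ?_
        simp [Algebra.mul_smul_comm, Algebra.smul_mul_assoc])

lemma brD_apply (f g : RR p q) :
    brD p q μ f g = ∑ a : VV p q, ∑ b : VV p q,
      valv p q μ a b * (pderiv a f) * (pderiv b g) := rfl

lemma brD_XX (a b : VV p q) : brD p q μ (X a) (X b) = valv p q μ a b := by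
  classical
  simp [brD_apply, pderiv_X, Pi.single_apply, mul_ite, ite_mul, mul_one, mul_zero, zero_mul,
    Finset.sum_ite_eq, Finset.sum_ite_eq']

end Core

section More
open MvPolynomial
variable (p q μ : ℕ)

lemma brD_C_left (c : ℂ) (g : RR p q) : brD p q μ (C c) g = 0 := by
  simp [brD_apply, pderiv_C]

lemma brD_C_right (f : RR p q) (c : ℂ) : brD p q μ f (C c) = 0 := by
  simp [brD_apply, pderiv_C]

lemma brD_leib_left (f g h : RR p q) :
    brD p q μ (f * g) h = brD p q μ f h * g + f * brD p q μ g h := by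
  simp only [brD_apply, pderiv_mul, Finset.sum_mul, Finset.mul_sum]
  rw [← Finset.sum_add_distrib]
  refine Finset.sum_congr rfl fun a _ => ?_
  rw [← Finset.sum_add_distrib]
  refine Finset.sum_congr rfl fun b _ => ?_
  ring

lemma brD_leib_right (f g h : RR p q) :
    brD p q μ f (g * h) = brD p q μ f g * h + g * brD p q μ f h := by
  simp only [brD_apply, pderiv_mul, Finset.sum_mul, Finset.mul_sum]
  rw [← Finset.sum_add_distrib]
  refine Finset.sum_congr rfl fun a _ => ?_
  rw [← Finset.sum_add_distrib]
  refine Finset.sum_congr rfl fun b _ => ?_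
  ring

lemma brD_antisymm (f g : RR p q) : brD p q μ f g = - brD p q μ g f := by
  simp only [brD_apply]
  rw [← Finset.sum_neg_distrib, Finset.sum_comm]
  refine Finset.sum_congr rfl fun a _ => ?_
  rw [← Finset.sum_neg_distrib]
  refine Finset.sum_congr rfl fun b _ => ?_
  have : valv p q μ a b = - valv p q μ b a := bb_antisymm p q μ _ _ _ _ _ _
  rw [this]; ring

lemma ell_of_mem (i j : Fin p) (k : ℤ) (h0 : 0 ≤ k) (h1 : k ≤ (q:ℤ)) :
    ell p q i j k = X (i, j, ⟨k.toNat, by omega⟩) := by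
  rw [ell, dif_pos ⟨h0, h1⟩]

lemma ell_coe (i j : Fin p) (k : Fin (q+1)) :
    ell p q i j ((k : ℕ) : ℤ) = X (i, j, k) := by
  rw [ell_of_mem p q i j _ (by positivity) (by exact_mod_cast Nat.lt_succ_iff.mp k.isLt)]
  congr 1

lemma brD_ell_ell (i j m n : Fin p) (k l : ℤ) :
    brD p q μ (ell p q i j k) (ell p q m n l) = bb p q μ i j k m n l := by
  by_cases hk : 0 ≤ k ∧ k ≤ (q:ℤ)
  · by_cases hl : 0 ≤ l ∧ l ≤ (q:ℤ)
    · rw [ell_of_mem p q i j k hk.1 hk.2, ell_of_mem p q m n l hl.1 hl.2, brD_XX]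
      simp only [valv, bb]
      congr 2 <;> simp [Int.toNat_of_nonneg, hk.1, hl.1]
    · rw [show ell p q m n l = 0 by rw [ell, dif_neg hl]]
      simp only [map_zero]
      rw [bb, show gZ q μ k l = 0 by rw [gZ, if_neg (by omega)], zero_smul]
  · rw [show ell p q i j k = 0 by rw [ell, dif_neg hk]]
    simp only [map_zero, LinearMap.zero_apply]
    rw [bb, show gZ q μ k l = 0 by rw [gZ, if_neg (by omega)], zero_smul]

set_option maxHeartbeats 1600000 in
lemma keyF (i j : Fin p) (k l u x : ℤ) (hx : x = k + l + u + 2 - 2*(μ:ℤ)) :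
    (gZ q μ l u * gZ q μ k (l + u + 1 - (μ:ℤ))) • ell p q i j x =
    (gZ q μ u k * gZ q μ l (u + k + 1 - (μ:ℤ))) • ell p q i j x := by
  by_cases hxr : 0 ≤ x ∧ x ≤ (q:ℤ)
  · congr 1
    simp only [gZ]
    split_ifs <;> omega
  · rw [show ell p q i j x = 0 by rw [ell, dif_neg hxr], smul_zero, smul_zero]

end More

section Jac
open MvPolynomial
variable (p q μ : ℕ)

lemma map_ite0 {P : Prop} [Decidable P] (φ : RR p q →ₗ[ℂ] RR p q) (x : RR p q) :
    φ (if P then x else 0) = if P then φ x else 0 := by split_ifs <;> simp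

lemma ite_sub0 {P : Prop} [Decidable P] (x y : RR p q) :
    (if P then x - y else 0) = (if P then x else 0) - (if P then y else 0) := by
  split_ifs <;> simp

lemma ite_ite0 (P Q : Prop) [Decidable P] [Decidable Q] (x : RR p q) :
    (if P then (if Q then x else 0) else 0) = (if Q then (if P then x else 0) else 0) := by
  split_ifs <;> rfl

lemma jacobi_ell (i j m n r s : Fin p) (k l u : ℤ) :
    brD p q μ (ell p q i j k) (brD p q μ (ell p q m n l) (ell p q r s u))
  + brD p q μ (ell p q m n l) (brD p q μ (ell p q r s u) (ell p q i j k))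
  + brD p q μ (ell p q r s u) (brD p q μ (ell p q i j k) (ell p q m n l)) = 0 := by
  rw [brD_ell_ell, brD_ell_ell, brD_ell_ell]
  simp only [bb]
  simp only [map_zsmul, map_sub, map_ite0, brD_ell_ell]
  simp only [bb]
  simp only [smul_sub, smul_ite, smul_zero, smul_smul, ite_sub0]
  set x₀ := k + l + u + 2 - 2*(μ:ℤ) with hx₀
  have E1 : k + (l + u + 1 - (μ:ℤ)) + 1 - (μ:ℤ) = x₀ := by rw [hx₀]; ring
  have E2 : l + (u + k + 1 - (μ:ℤ)) + 1 - (μ:ℤ) = x₀ := by rw [hx₀]; ring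
  have E3 : u + (k + l + 1 - (μ:ℤ)) + 1 - (μ:ℤ) = x₀ := by rw [hx₀]; ring
  rw [E1, E2, E3]
  have h21 : ∀ (a b : Fin p),
      (gZ q μ u k * gZ q μ l (u + k + 1 - (μ:ℤ))) • ell p q a b x₀ =
      (gZ q μ l u * gZ q μ k (l + u + 1 - (μ:ℤ))) • ell p q a b x₀ :=
    fun a b => (keyF p q μ a b k l u x₀ (by rw [hx₀])).symm
  have h31 : ∀ (a b : Fin p),
      (gZ q μ k l * gZ q μ u (k + l + 1 - (μ:ℤ))) • ell p q a b x₀ =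
      (gZ q μ l u * gZ q μ k (l + u + 1 - (μ:ℤ))) • ell p q a b x₀ :=
    fun a b => ((keyF p q μ a b l u k x₀ (by rw [hx₀]; ring)).symm).trans (h21 a b)
  simp only [h21, h31]
  set c1 := gZ q μ l u * gZ q μ k (l + u + 1 - (μ:ℤ)) with hc1
  rw [ite_ite0 p q (n = i) (s = m) (c1 • ell p q r j x₀),
      ite_ite0 p q (j = r) (s = m) (c1 • ell p q i n x₀),
      ite_ite0 p q (s = i) (n = r) (c1 • ell p q m j x₀),
      ite_ite0 p q (j = m) (n = r) (c1 • ell p q i s x₀),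
      ite_ite0 p q (n = i) (j = r) (c1 • ell p q m s x₀),
      ite_ite0 p q (j = m) (s = i) (c1 • ell p q r n x₀)]
  abel

end Jac

section Boot
open MvPolynomial
variable (p q μ : ℕ)

noncomputable def Jac (f g h : RR p q) : RR p q :=
  brD p q μ f (brD p q μ g h) + brD p q μ g (brD p q μ h f) + brD p q μ h (brD p q μ f g)

lemma Jac_cyc (f g h : RR p q) : Jac p q μ f g h = Jac p q μ g h f := by
  simp only [Jac]; abel

lemma Jac_cyc' (f g h : RR p q) : Jac p q μ f g h = Jac p q μ h f g := by
  rw [Jac_cyc, Jac_cyc]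

lemma Jac_C (c : ℂ) (g h : RR p q) : Jac p q μ (C c) g h = 0 := by
  simp only [Jac, brD_C_left, brD_C_right, map_zero]
  abel

lemma Jac_add (f₁ f₂ g h : RR p q) :
    Jac p q μ (f₁ + f₂) g h = Jac p q μ f₁ g h + Jac p q μ f₂ g h := by
  simp only [Jac, map_add, LinearMap.add_apply]
  abel

lemma Jac_mul (f₁ f₂ g h : RR p q) :
    Jac p q μ (f₁ * f₂) g h = f₁ * Jac p q μ f₂ g h + Jac p q μ f₁ g h * f₂ := by
  simp only [Jac]
  rw [brD_leib_left p q μ f₁ f₂ (brD p q μ g h),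
      brD_leib_right p q μ h f₁ f₂,
      brD_leib_left p q μ f₁ f₂ g,
      map_add, map_add,
      brD_leib_right p q μ g (brD p q μ h f₁) f₂,
      brD_leib_right p q μ g f₁ (brD p q μ h f₂),
      brD_leib_right p q μ h (brD p q μ f₁ g) f₂,
      brD_leib_right p q μ h f₁ (brD p q μ f₂ g)]
  linear_combination (brD p q μ h f₂) * (brD_antisymm p q μ f₁ g) +
    (brD p q μ h f₁) * (brD_antisymm p q μ f₂ g)

end Boot

section Final
open MvPolynomial
variable (p q μ : ℕ)

lemma Jac_base (a b c : VV p q) : Jac p q μ (X a) (X b) (X c) = 0 := by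
  obtain ⟨i, j, k⟩ := a; obtain ⟨m, n, l⟩ := b; obtain ⟨r, s, u⟩ := c
  have := jacobi_ell p q μ i j m n r s ((k:ℕ):ℤ) ((l:ℕ):ℤ) ((u:ℕ):ℤ)
  rw [ell_coe, ell_coe, ell_coe] at this
  exact this

lemma Jac_XX (a b : VV p q) : ∀ h, Jac p q μ (X a) (X b) h = 0 := by
  intro h
  induction h using MvPolynomial.induction_on with
  | C c => rw [Jac_cyc' p q μ (X a) (X b) (C c)]; exact Jac_C p q μ c _ _
  | add f g hf hg =>
      rw [Jac_cyc' p q μ (X a) (X b) (f + g), Jac_add, Jac_cyc p q μ f (X a) (X b),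
        Jac_cyc p q μ g (X a) (X b), hf, hg, add_zero]
  | mul_X f c hf =>
      rw [Jac_cyc' p q μ (X a) (X b) (f * X c), Jac_mul, Jac_cyc p q μ (X c) (X a) (X b),
        Jac_cyc p q μ f (X a) (X b), hf, Jac_base, mul_zero, zero_mul, add_zero]

lemma Jac_Xg (a : VV p q) : ∀ g h, Jac p q μ (X a) g h = 0 := by
  intro g
  induction g using MvPolynomial.induction_on with
  | C c =>
      intro h
      rw [Jac_cyc p q μ (X a) (C c) h]
      exact Jac_C p q μ c _ _
  | add f g hf hg =>
      intro h
      rw [Jac_cyc p q μ (X a) (f + g) h, Jac_add, Jac_cyc' p q μ f h (X a),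
        Jac_cyc' p q μ g h (X a), hf h, hg h, add_zero]
  | mul_X f c hf =>
      intro h
      rw [Jac_cyc p q μ (X a) (f * X c) h, Jac_mul, Jac_cyc' p q μ (X c) h (X a),
        Jac_cyc' p q μ f h (X a), hf h, Jac_XX, mul_zero, zero_mul, add_zero]

lemma Jac_all (f g h : RR p q) : Jac p q μ f g h = 0 := by
  induction f using MvPolynomial.induction_on with
  | C c => exact Jac_C p q μ c g h
  | add f₁ f₂ h₁ h₂ => rw [Jac_add, h₁, h₂, add_zero]
  | mul_X f c hf => rw [Jac_mul, hf, Jac_Xg, mul_zero, zero_mul, add_zero]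

lemma gZ_coe (k l : Fin (q+1)) :
    gZ q μ ((k : ℕ) : ℤ) ((l : ℕ) : ℤ) = eta μ (k : ℕ) (l : ℕ) := by
  have hk := k.isLt; have hl := l.isLt
  simp only [gZ, eta]
  split_ifs <;> omega

lemma brD_values : ∀ (i j m n : Fin p) (k l : Fin (q + 1)),
    brD p q μ (X (i, j, k)) (X (m, n, l)) =
      eta μ (k : ℕ) (l : ℕ) •
        ((if n = i then ell p q m j (((k : ℕ) : ℤ) + ((l : ℕ) : ℤ) + 1 - (μ : ℤ)) else 0) -
         (if j = m then ell p q i n (((k : ℕ) : ℤ) + ((l : ℕ) : ℤ) + 1 - (μ : ℤ)) else 0)) := by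
  intro i j m n k l
  rw [brD_XX]
  simp only [valv, bb, gZ_coe]

/-- Any bracket which is a biderivation kills constants. -/
lemma br_one_left (br : RR p q →ₗ[ℂ] RR p q →ₗ[ℂ] RR p q)
    (hL : ∀ f g h, br (f * g) h = br f h * g + f * br g h) (g : RR p q) :
    br 1 g = 0 := by
  have := hL 1 1 g
  rw [mul_one, mul_one, one_mul] at this
  exact add_eq_left.mp this.symm

lemma br_C_left (br : RR p q →ₗ[ℂ] RR p q →ₗ[ℂ] RR p q)
    (hL : ∀ f g h, br (f * g) h = br f h * g + f * br g h) (c : ℂ) (g : RR p q) :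
    br (C c) g = 0 := by
  have h1 : (C c : RR p q) = c • 1 := by rw [smul_eq_C_mul, mul_one]
  rw [h1, map_smul, LinearMap.smul_apply, br_one_left p q br hL g, smul_zero]

lemma br_one_right (br : RR p q →ₗ[ℂ] RR p q →ₗ[ℂ] RR p q)
    (hR : ∀ f g h, br f (g * h) = br f g * h + g * br f h) (g : RR p q) :
    br g 1 = 0 := by
  have := hR g 1 1
  rw [mul_one, mul_one, one_mul] at this
  exact add_eq_left.mp this.symm

lemma br_C_right (br : RR p q →ₗ[ℂ] RR p q →ₗ[ℂ] RR p q)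
    (hR : ∀ f g h, br f (g * h) = br f g * h + g * br f h) (g : RR p q) (c : ℂ) :
    br g (C c) = 0 := by
  have h1 : (C c : RR p q) = c • 1 := by rw [smul_eq_C_mul, mul_one]
  rw [h1, map_smul, br_one_right p q br hR g, smul_zero]

lemma agree (br₁ br₂ : RR p q →ₗ[ℂ] RR p q →ₗ[ℂ] RR p q)
    (hL₁ : ∀ f g h, br₁ (f * g) h = br₁ f h * g + f * br₁ g h)
    (hR₁ : ∀ f g h, br₁ f (g * h) = br₁ f g * h + g * br₁ f h)
    (hL₂ : ∀ f g h, br₂ (f * g) h = br₂ f h * g + f * br₂ g h)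
    (hR₂ : ∀ f g h, br₂ f (g * h) = br₂ f g * h + g * br₂ f h)
    (hX : ∀ a b : VV p q, br₁ (X a) (X b) = br₂ (X a) (X b)) :
    br₁ = br₂ := by
  have key : ∀ a : VV p q, ∀ g, br₁ (X a) g = br₂ (X a) g := by
    intro a g
    induction g using MvPolynomial.induction_on with
    | C c => rw [br_C_right p q br₁ hR₁, br_C_right p q br₂ hR₂]
    | add f g hf hg => rw [map_add, map_add, hf, hg]
    | mul_X f c hf => rw [hR₁ _ f (X c), hR₂ _ f (X c), hf, hX a c]
  refine LinearMap.ext fun f => LinearMap.ext fun g => ?_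
  induction f using MvPolynomial.induction_on with
  | C c => rw [br_C_left p q br₁ hL₁, br_C_left p q br₂ hL₂]
  | add f₁ f₂ h₁ h₂ => simp only [map_add, LinearMap.add_apply, h₁, h₂]
  | mul_X f c hf => rw [hL₁ f (X c) g, hL₂ f (X c) g, hf, key c g]

end Final


/-- For each `0 ≤ μ ≤ q+1` there is a unique Poisson bracket on `R` with the
prescribed values on generators. -/
theorem stmt_10 (p q : ℕ) (hp : 2 ≤ p) (hq : 1 ≤ q) (μ : ℕ) (hμ : μ ≤ q + 1) :
    ∃! br : RR p q →ₗ[ℂ] RR p q →ₗ[ℂ] RR p q,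
      IsPoissonBracket br ∧ HasBracketValues p q μ br := by
  refine ⟨brD p q μ, ⟨⟨brD_antisymm p q μ, brD_leib_left p q μ, brD_leib_right p q μ,
    fun f g h => Jac_all p q μ f g h⟩, brD_values p q μ⟩, ?_⟩
  rintro br' ⟨⟨ha, hl, hr, hj⟩, hv⟩
  refine agree p q br' (brD p q μ) hl hr (brD_leib_left p q μ) (brD_leib_right p q μ) ?_
  rintro ⟨i, j, k⟩ ⟨m, n, l⟩
  rw [hv i j m n k l, brD_values p q μ i j m n k l]
end

section
/- Fix integers p ≥ 2 and q ≥ 1, and for each 0 ≤ μ ≤ q+1 let {·,·}_μ be the Poisson bracket on R determined on generators by {ℓ_{ij}^k, ℓ_{mn}^l}_μ = η_μ^{kl}·(ℓ_{mj}^{k+l+1−μ}·δ_{ni} − ℓ_{in}^{k+l+1−μ}·δ_{jm}). Then the brackets {·,·}_0, …, {·,·}_{q+1} are compatible: for any c_0, …, c_{q+1} ∈ ℂ, the ℂ-bilinear antisymmetric biderivation Σ_{μ=0}^{q+1} c_μ·{·,·}_μ satisfies the Jacobi identity, hence is again a Poisson bracket on R. -/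
def zchi (q μ k : ℕ) (t : ℤ) : ℤ :=
  if 0 ≤ t ∧ t ≤ (q : ℤ) then
    (if (k : ℤ) < μ ∧ t < (μ : ℤ) then 1 else if (μ : ℤ) ≤ k ∧ (μ : ℤ) ≤ t then -1 else 0)
  else 0

noncomputable def Hc (p q : ℕ) (s : ℤ) (i1 j1 i2 j2 i3 j3 : Fin p) : RR p q :=
  (if j3 = i2 then ((if j2 = i1 then ell p q i3 j1 s else 0) -
      (if j1 = i3 then ell p q i1 j2 s else 0)) else 0) -
  (if j2 = i3 then ((if j3 = i1 then ell p q i2 j1 s else 0) -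
      (if j1 = i2 then ell p q i1 j3 s else 0)) else 0)

lemma brell {p q μ : ℕ} {br1 : RR p q →ₗ[ℂ] RR p q →ₗ[ℂ] RR p q}
    (h1 : HasBracketValues p q μ br1) (i j m n : Fin p) (k : Fin (q + 1)) (t : ℤ) :
    br1 (MvPolynomial.X (i, j, k)) (ell p q m n t) =
      zchi q μ k t •
        ((if n = i then ell p q m j (((k : ℕ) : ℤ) + t + 1 - (μ : ℤ)) else 0) -
         (if j = m then ell p q i n (((k : ℕ) : ℤ) + t + 1 - (μ : ℤ)) else 0)) := by
  by_cases ht : 0 ≤ t ∧ t ≤ (q : ℤ)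
  · have hd : ell p q m n t = MvPolynomial.X (m, n, ⟨t.toNat, by omega⟩) := dif_pos ht
    rw [hd, h1 i j m n k ⟨t.toNat, by omega⟩]
    simp only [show ((⟨t.toNat, by omega⟩ : Fin (q + 1)) : ℕ) = t.toNat from rfl]
    rw [show ((t.toNat : ℕ) : ℤ) = t from Int.toNat_of_nonneg ht.1]
    congr 1
    show eta μ (k : ℕ) t.toNat = zchi q μ k t
    unfold eta zchi
    split_ifs <;> omega
  · rw [show ell p q m n t = 0 from dif_neg ht, map_zero,
        show zchi q μ k t = 0 from if_neg ht, zero_smul]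

lemma double {p q μ ν : ℕ} {br1 br2 : RR p q →ₗ[ℂ] RR p q →ₗ[ℂ] RR p q}
    (h1 : HasBracketValues p q μ br1) (h2 : HasBracketValues p q ν br2)
    (i1 j1 i2 j2 i3 j3 : Fin p) (k1 k2 k3 : Fin (q + 1)) :
    br1 (MvPolynomial.X (i1, j1, k1))
        (br2 (MvPolynomial.X (i2, j2, k2)) (MvPolynomial.X (i3, j3, k3))) =
      (eta ν (k2 : ℕ) (k3 : ℕ) * zchi q μ k1 (((k2 : ℕ) : ℤ) + ((k3 : ℕ) : ℤ) + 1 - (ν : ℤ))) •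
        Hc p q (((k1 : ℕ) : ℤ) + (((k2 : ℕ) : ℤ) + ((k3 : ℕ) : ℤ) + 1 - (ν : ℤ)) + 1 - (μ : ℤ))
          i1 j1 i2 j2 i3 j3 := by
  rw [h2 i2 j2 i3 j3 k2 k3, map_zsmul, map_sub,
      apply_ite (br1 (MvPolynomial.X (i1, j1, k1))),
      apply_ite (br1 (MvPolynomial.X (i1, j1, k1))),
      map_zero, brell h1, brell h1]
  unfold Hc
  split_ifs <;> simp [mul_smul, smul_sub]

lemma ell_zero {p q : ℕ} {s : ℤ} (hs : ¬(0 ≤ s ∧ s ≤ (q : ℤ))) (a b : Fin p) :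
    ell p q a b s = 0 := dif_neg hs

lemma Hc_zero {p q : ℕ} {s : ℤ} (hs : ¬(0 ≤ s ∧ s ≤ (q : ℤ)))
    (i1 j1 i2 j2 i3 j3 : Fin p) : Hc p q s i1 j1 i2 j2 i3 j3 = 0 := by
  simp [Hc, ell_zero hs]

set_option maxHeartbeats 2000000 in
lemma Hc_cyc {p q : ℕ} (s : ℤ) (i1 j1 i2 j2 i3 j3 : Fin p) :
    Hc p q s i1 j1 i2 j2 i3 j3 + Hc p q s i2 j2 i3 j3 i1 j1 +
      Hc p q s i3 j3 i1 j1 i2 j2 = 0 := by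
  unfold Hc
  split_ifs <;> subst_vars <;> abel

lemma eta_eq (m a b : ℕ) :
    eta m a b = (if a < m then 1 else 0) + (if b < m then 1 else 0) - 1 := by
  unfold eta; split_ifs <;> omega

lemma zchi_eq (q μ k : ℕ) (t : ℤ) (hμ : μ ≤ q + 1)
    (h0 : 0 ≤ (k : ℤ) + t + 1 - μ) (h1 : (k : ℤ) + t + 1 - μ ≤ q) :
    zchi q μ k t =
      (if k < μ then 1 else 0) + (if (k : ℤ) + t + 1 - (μ : ℤ) ≤ k then 1 else 0) - 1 := by
  unfold zchi; split_ifs <;> omega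

set_option maxHeartbeats 4000000 in
lemma scalar (q μ ν k1 k2 k3 : ℕ) (hμ : μ ≤ q + 1) (hν : ν ≤ q + 1) (s : ℤ)
    (hs : s = (k1 : ℤ) + k2 + k3 + 2 - μ - ν) (hs0 : 0 ≤ s) (hsq : s ≤ q) :
    eta ν k2 k3 * zchi q μ k1 ((k2 : ℤ) + k3 + 1 - ν) +
      eta μ k2 k3 * zchi q ν k1 ((k2 : ℤ) + k3 + 1 - μ) =
    eta ν k3 k1 * zchi q μ k2 ((k3 : ℤ) + k1 + 1 - ν) +
      eta μ k3 k1 * zchi q ν k2 ((k3 : ℤ) + k1 + 1 - μ) := by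
  rw [eta_eq, eta_eq, eta_eq, eta_eq,
      zchi_eq q μ k1 _ hμ (by omega) (by omega),
      zchi_eq q ν k1 _ hν (by omega) (by omega),
      zchi_eq q μ k2 _ hμ (by omega) (by omega),
      zchi_eq q ν k2 _ hν (by omega) (by omega)]
  rw [show (k1 : ℤ) + ((k2 : ℤ) + k3 + 1 - ν) + 1 - (μ : ℤ) = s by omega,
      show (k1 : ℤ) + ((k2 : ℤ) + k3 + 1 - μ) + 1 - (ν : ℤ) = s by omega,
      show (k2 : ℤ) + ((k3 : ℤ) + k1 + 1 - ν) + 1 - (μ : ℤ) = s by omega,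
      show (k2 : ℤ) + ((k3 : ℤ) + k1 + 1 - μ) + 1 - (ν : ℤ) = s by omega]
  split_ifs <;> omega

lemma key_s11 {p q μ ν : ℕ} (hμ : μ ≤ q + 1) (hν : ν ≤ q + 1)
    {br1 br2 : RR p q →ₗ[ℂ] RR p q →ₗ[ℂ] RR p q}
    (h1 : HasBracketValues p q μ br1) (h2 : HasBracketValues p q ν br2)
    (v1 v2 v3 : Fin p × Fin p × Fin (q + 1)) :
    (br1 (MvPolynomial.X v1) (br2 (MvPolynomial.X v2) (MvPolynomial.X v3)) +
     br1 (MvPolynomial.X v2) (br2 (MvPolynomial.X v3) (MvPolynomial.X v1)) +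
     br1 (MvPolynomial.X v3) (br2 (MvPolynomial.X v1) (MvPolynomial.X v2))) +
    (br2 (MvPolynomial.X v1) (br1 (MvPolynomial.X v2) (MvPolynomial.X v3)) +
     br2 (MvPolynomial.X v2) (br1 (MvPolynomial.X v3) (MvPolynomial.X v1)) +
     br2 (MvPolynomial.X v3) (br1 (MvPolynomial.X v1) (MvPolynomial.X v2))) = 0 := by
  obtain ⟨i1, j1, k1⟩ := v1
  obtain ⟨i2, j2, k2⟩ := v2
  obtain ⟨i3, j3, k3⟩ := v3
  rw [double h1 h2 i1 j1 i2 j2 i3 j3 k1 k2 k3,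
      double h1 h2 i2 j2 i3 j3 i1 j1 k2 k3 k1,
      double h1 h2 i3 j3 i1 j1 i2 j2 k3 k1 k2,
      double h2 h1 i1 j1 i2 j2 i3 j3 k1 k2 k3,
      double h2 h1 i2 j2 i3 j3 i1 j1 k2 k3 k1,
      double h2 h1 i3 j3 i1 j1 i2 j2 k3 k1 k2]
  set s : ℤ := ((k1 : ℕ) : ℤ) + ((k2 : ℕ) : ℤ) + ((k3 : ℕ) : ℤ) + 2 - μ - ν with hs
  rw [show ((k1:ℕ):ℤ) + (((k2:ℕ):ℤ) + ((k3:ℕ):ℤ) + 1 - (ν:ℤ)) + 1 - (μ:ℤ) = s by rw [hs]; ring,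
      show ((k2:ℕ):ℤ) + (((k3:ℕ):ℤ) + ((k1:ℕ):ℤ) + 1 - (ν:ℤ)) + 1 - (μ:ℤ) = s by rw [hs]; ring,
      show ((k3:ℕ):ℤ) + (((k1:ℕ):ℤ) + ((k2:ℕ):ℤ) + 1 - (ν:ℤ)) + 1 - (μ:ℤ) = s by rw [hs]; ring,
      show ((k1:ℕ):ℤ) + (((k2:ℕ):ℤ) + ((k3:ℕ):ℤ) + 1 - (μ:ℤ)) + 1 - (ν:ℤ) = s by rw [hs]; ring,
      show ((k2:ℕ):ℤ) + (((k3:ℕ):ℤ) + ((k1:ℕ):ℤ) + 1 - (μ:ℤ)) + 1 - (ν:ℤ) = s by rw [hs]; ring,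
      show ((k3:ℕ):ℤ) + (((k1:ℕ):ℤ) + ((k2:ℕ):ℤ) + 1 - (μ:ℤ)) + 1 - (ν:ℤ) = s by rw [hs]; ring]
  by_cases hrange : 0 ≤ s ∧ s ≤ (q : ℤ)
  · have W12 := scalar q μ ν k1 k2 k3 hμ hν s (by rw [hs]) hrange.1 hrange.2
    have W23 := scalar q μ ν k2 k3 k1 hμ hν s (by rw [hs]; ring) hrange.1 hrange.2
    have hgoal : ∀ a b c : ℤ, a = b → b = c →
        ∀ H1 H2 H3 : RR p q, H1 + H2 + H3 = 0 →
        (a • H1 + b • H2 + c • H3) + 0 = 0 := by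
      intro a b c hab hbc H1 H2 H3 hH
      rw [hab, hbc, ← smul_add, ← smul_add, hH, smul_zero, add_zero]
    calc (eta ν (k2:ℕ) (k3:ℕ) * zchi q μ k1 (((k2:ℕ):ℤ) + ((k3:ℕ):ℤ) + 1 - ν)) •
            Hc p q s i1 j1 i2 j2 i3 j3 +
          (eta ν (k3:ℕ) (k1:ℕ) * zchi q μ k2 (((k3:ℕ):ℤ) + ((k1:ℕ):ℤ) + 1 - ν)) •
            Hc p q s i2 j2 i3 j3 i1 j1 +
          (eta ν (k1:ℕ) (k2:ℕ) * zchi q μ k3 (((k1:ℕ):ℤ) + ((k2:ℕ):ℤ) + 1 - ν)) •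
            Hc p q s i3 j3 i1 j1 i2 j2 +
          ((eta μ (k2:ℕ) (k3:ℕ) * zchi q ν k1 (((k2:ℕ):ℤ) + ((k3:ℕ):ℤ) + 1 - μ)) •
            Hc p q s i1 j1 i2 j2 i3 j3 +
          (eta μ (k3:ℕ) (k1:ℕ) * zchi q ν k2 (((k3:ℕ):ℤ) + ((k1:ℕ):ℤ) + 1 - μ)) •
            Hc p q s i2 j2 i3 j3 i1 j1 +
          (eta μ (k1:ℕ) (k2:ℕ) * zchi q ν k3 (((k1:ℕ):ℤ) + ((k2:ℕ):ℤ) + 1 - μ)) •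
            Hc p q s i3 j3 i1 j1 i2 j2)
        = ((eta ν (k2:ℕ) (k3:ℕ) * zchi q μ k1 (((k2:ℕ):ℤ) + ((k3:ℕ):ℤ) + 1 - ν) +
             eta μ (k2:ℕ) (k3:ℕ) * zchi q ν k1 (((k2:ℕ):ℤ) + ((k3:ℕ):ℤ) + 1 - μ)) •
            Hc p q s i1 j1 i2 j2 i3 j3 +
           (eta ν (k3:ℕ) (k1:ℕ) * zchi q μ k2 (((k3:ℕ):ℤ) + ((k1:ℕ):ℤ) + 1 - ν) +
             eta μ (k3:ℕ) (k1:ℕ) * zchi q ν k2 (((k3:ℕ):ℤ) + ((k1:ℕ):ℤ) + 1 - μ)) •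
            Hc p q s i2 j2 i3 j3 i1 j1 +
           (eta ν (k1:ℕ) (k2:ℕ) * zchi q μ k3 (((k1:ℕ):ℤ) + ((k2:ℕ):ℤ) + 1 - ν) +
             eta μ (k1:ℕ) (k2:ℕ) * zchi q ν k3 (((k1:ℕ):ℤ) + ((k2:ℕ):ℤ) + 1 - μ)) •
            Hc p q s i3 j3 i1 j1 i2 j2) + 0 := by
          simp only [add_smul]; abel
      _ = 0 := hgoal _ _ _ W12 W23 _ _ _ (Hc_cyc s i1 j1 i2 j2 i3 j3)
  · rw [Hc_zero hrange, Hc_zero hrange, Hc_zero hrange]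
    simp


set_option maxHeartbeats 4000000 in
/-- The brackets `{·,·}_0, …, {·,·}_{q+1}` are compatible: any linear combination of
them is again a Poisson bracket. -/
theorem stmt_11 (p q : ℕ) (hp : 2 ≤ p) (hq : 1 ≤ q)
    (br : Fin (q + 2) → (RR p q →ₗ[ℂ] RR p q →ₗ[ℂ] RR p q))
    (hbr : ∀ μ : Fin (q + 2),
      IsPoissonBracket (br μ) ∧ HasBracketValues p q (μ : ℕ) (br μ))
    (c : Fin (q + 2) → ℂ) :
    IsPoissonBracket (∑ μ : Fin (q + 2), c μ • br μ) := by
  classical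
  set D := ∑ μ : Fin (q + 2), c μ • br μ with hD
  have hanti : ∀ μ : Fin (q + 2), ∀ f g, br μ f g = -br μ g f := fun μ => (hbr μ).1.1
  have hl1 : ∀ μ : Fin (q + 2), ∀ f g h, br μ (f * g) h = br μ f h * g + f * br μ g h :=
    fun μ => (hbr μ).1.2.1
  have hl2 : ∀ μ : Fin (q + 2), ∀ f g h, br μ f (g * h) = br μ f g * h + g * br μ f h :=
    fun μ => (hbr μ).1.2.2.1
  have hval : ∀ μ : Fin (q + 2), HasBracketValues p q (μ : ℕ) (br μ) := fun μ => (hbr μ).2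
  have hDapp : ∀ f g, D f g = ∑ μ : Fin (q + 2), c μ • br μ f g := by
    intro f g
    rw [hD]
    simp [LinearMap.sum_apply, LinearMap.smul_apply]
  have Danti : ∀ f g, D f g = -D g f := by
    intro f g
    rw [hDapp, hDapp, ← Finset.sum_neg_distrib]
    exact Finset.sum_congr rfl fun μ _ => by rw [hanti μ f g, smul_neg]
  have Dl1 : ∀ f g h, D (f * g) h = D f h * g + f * D g h := by
    intro f g h
    rw [hDapp, hDapp, hDapp, Finset.sum_mul, Finset.mul_sum, ← Finset.sum_add_distrib]
    exact Finset.sum_congr rfl fun μ _ => by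
      rw [hl1 μ f g h, smul_add, smul_mul_assoc, mul_smul_comm]
  have Dl2 : ∀ f g h, D f (g * h) = D f g * h + g * D f h := by
    intro f g h
    rw [hDapp, hDapp, hDapp, Finset.sum_mul, Finset.mul_sum, ← Finset.sum_add_distrib]
    exact Finset.sum_congr rfl fun μ _ => by
      rw [hl2 μ f g h, smul_add, smul_mul_assoc, mul_smul_comm]
  have D1 : ∀ f, D 1 f = 0 := by
    intro f
    have h := Dl1 1 1 f
    rw [one_mul, mul_one, one_mul] at h
    exact (add_eq_left.mp h.symm)
  have DC : ∀ (a : ℂ) f, D (MvPolynomial.C a) f = 0 := by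
    intro a f
    have hCa : (MvPolynomial.C a : RR p q) = a • 1 := by
      rw [MvPolynomial.smul_eq_C_mul, mul_one]
    rw [hCa, map_smul, LinearMap.smul_apply, D1, smul_zero]
  have DCr : ∀ (a : ℂ) f, D f (MvPolynomial.C a) = 0 := by
    intro a f
    rw [Danti, DC, neg_zero]
  set Jf : RR p q → RR p q → RR p q → RR p q :=
    fun f g h => D f (D g h) + D g (D h f) + D h (D f g) with hJ
  have jcyc : ∀ f g h, Jf f g h = Jf g h f := by
    intro f g h; simp only [hJ]; abel
  have jaddl : ∀ f f' g h, Jf (f + f') g h = Jf f g h + Jf f' g h := by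
    intro f f' g h
    simp only [hJ, map_add, LinearMap.add_apply]
    abel
  have jC : ∀ (a : ℂ) g h, Jf (MvPolynomial.C a) g h = 0 := by
    intro a g h
    simp only [hJ]
    rw [DC a (D g h), DCr a h, map_zero, DC a g, map_zero]
    simp
  have jmul : ∀ f f' g h, Jf (f * f') g h = Jf f g h * f' + f * Jf f' g h := by
    intro f f' g h
    simp only [hJ]
    rw [Dl1 f f' (D g h), Dl2 h f f', map_add, Dl2 g (D h f) f', Dl2 g f (D h f'),
        Dl1 f f' g, map_add, Dl2 h (D f g) f', Dl2 h f (D f' g),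
        Danti f g, Danti f' g]
    ring
  have jbase : ∀ v1 v2 v3, Jf (MvPolynomial.X v1) (MvPolynomial.X v2) (MvPolynomial.X v3) = 0 := by
    intro v1 v2 v3
    have expand : ∀ f g h : RR p q,
        D f (D g h) = ∑ ν : Fin (q + 2), ∑ μ : Fin (q + 2), c ν • c μ • br μ f (br ν g h) := by
      intro f g h
      rw [hDapp g h, map_sum]
      refine Finset.sum_congr rfl fun ν _ => ?_
      rw [map_smul, hDapp f (br ν g h), Finset.smul_sum]
    set x1 := MvPolynomial.X (R := ℂ) v1
    set x2 := MvPolynomial.X (R := ℂ) v2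
    set x3 := MvPolynomial.X (R := ℂ) v3
    set A : Fin (q + 2) → Fin (q + 2) → RR p q := fun ν μ =>
      c ν • c μ • (br μ x1 (br ν x2 x3) + br μ x2 (br ν x3 x1) + br μ x3 (br ν x1 x2)) with hA
    have hJA : Jf x1 x2 x3 = ∑ ν : Fin (q + 2), ∑ μ : Fin (q + 2), A ν μ := by
      simp only [hJ, expand, ← Finset.sum_add_distrib]
      refine Finset.sum_congr rfl fun ν _ => ?_
      refine Finset.sum_congr rfl fun μ _ => ?_
      rw [hA]
      simp only [smul_add]
    have hAkey : ∀ ν μ, A ν μ + A μ ν = 0 := by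
      intro ν μ
      rw [hA]
      simp only
      rw [smul_comm (c μ) (c ν), ← smul_add, ← smul_add,
          key_s11 (by omega : (μ : ℕ) ≤ q + 1) (by omega : (ν : ℕ) ≤ q + 1)
            (hval μ) (hval ν) v1 v2 v3, smul_zero, smul_zero]
    have hsum2 : (∑ ν : Fin (q + 2), ∑ μ : Fin (q + 2), A ν μ) +
        (∑ ν : Fin (q + 2), ∑ μ : Fin (q + 2), A ν μ) = 0 := by
      nth_rewrite 2 [Finset.sum_comm]
      rw [← Finset.sum_add_distrib]
      rw [show (0 : RR p q) = ∑ ν : Fin (q + 2), (0 : RR p q) by simp]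
      refine Finset.sum_congr rfl fun ν _ => ?_
      rw [← Finset.sum_add_distrib]
      rw [show (0 : RR p q) = ∑ μ : Fin (q + 2), (0 : RR p q) by simp]
      exact Finset.sum_congr rfl fun μ _ => hAkey ν μ
    have h2S : (2 : ℂ) • (∑ ν : Fin (q + 2), ∑ μ : Fin (q + 2), A ν μ) = 0 := by
      rw [two_smul]; exact hsum2
    rw [hJA]
    rcases smul_eq_zero.mp h2S with h | h
    · exact absurd h two_ne_zero
    · exact h
  have step1 : ∀ v1 v2 h, Jf (MvPolynomial.X v1) (MvPolynomial.X v2) h = 0 := by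
    intro v1 v2 h
    induction h using MvPolynomial.induction_on with
    | C a => rw [jcyc, jcyc]; exact jC a _ _
    | add f g hf hg =>
        calc Jf (MvPolynomial.X v1) (MvPolynomial.X v2) (f + g)
            = Jf (f + g) (MvPolynomial.X v1) (MvPolynomial.X v2) := by rw [jcyc, jcyc]
          _ = Jf f (MvPolynomial.X v1) (MvPolynomial.X v2) +
              Jf g (MvPolynomial.X v1) (MvPolynomial.X v2) := jaddl _ _ _ _
          _ = 0 := by rw [jcyc f, hf, jcyc g, hg, add_zero]
    | mul_X f n hf =>
        calc Jf (MvPolynomial.X v1) (MvPolynomial.X v2) (f * MvPolynomial.X n)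
            = Jf (f * MvPolynomial.X n) (MvPolynomial.X v1) (MvPolynomial.X v2) := by
              rw [jcyc, jcyc]
          _ = Jf f (MvPolynomial.X v1) (MvPolynomial.X v2) * MvPolynomial.X n +
              f * Jf (MvPolynomial.X n) (MvPolynomial.X v1) (MvPolynomial.X v2) := jmul _ _ _ _
          _ = 0 := by rw [jcyc f, hf, jcyc (MvPolynomial.X n), jbase]; ring
  have step2 : ∀ v1 g h, Jf (MvPolynomial.X v1) g h = 0 := by
    intro v1 g h
    induction g using MvPolynomial.induction_on generalizing h with
    | C a => rw [jcyc]; exact jC a _ _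
    | add f g hf hg =>
        calc Jf (MvPolynomial.X v1) (f + g) h
            = Jf (f + g) h (MvPolynomial.X v1) := by rw [jcyc]
          _ = Jf f h (MvPolynomial.X v1) + Jf g h (MvPolynomial.X v1) := jaddl _ _ _ _
          _ = 0 := by
              rw [show Jf f h (MvPolynomial.X v1) = Jf (MvPolynomial.X v1) f h by
                    rw [jcyc f, jcyc h], hf,
                  show Jf g h (MvPolynomial.X v1) = Jf (MvPolynomial.X v1) g h by
                    rw [jcyc g, jcyc h], hg, add_zero]
    | mul_X f n hf =>
        calc Jf (MvPolynomial.X v1) (f * MvPolynomial.X n) h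
            = Jf (f * MvPolynomial.X n) h (MvPolynomial.X v1) := by rw [jcyc]
          _ = Jf f h (MvPolynomial.X v1) * MvPolynomial.X n +
              f * Jf (MvPolynomial.X n) h (MvPolynomial.X v1) := jmul _ _ _ _
          _ = 0 := by
              rw [show Jf f h (MvPolynomial.X v1) = Jf (MvPolynomial.X v1) f h by
                    rw [jcyc f, jcyc h], hf,
                  show Jf (MvPolynomial.X n) h (MvPolynomial.X v1)
                      = Jf (MvPolynomial.X v1) (MvPolynomial.X n) h by
                    rw [jcyc (MvPolynomial.X v1)], step1]
              ring
  have step3 : ∀ f g h, Jf f g h = 0 := by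
    intro f g h
    induction f using MvPolynomial.induction_on generalizing g h with
    | C a => exact jC a g h
    | add f f' hf hf' => rw [jaddl, hf, hf', add_zero]
    | mul_X f n hf => rw [jmul, hf, step2, zero_mul, mul_zero, add_zero]
  exact ⟨Danti, Dl1, Dl2, fun f g h => step3 f g h⟩
end

section
/- Fix integers p ≥ 2 and q ≥ 1, take c_0,…,c_{q+1} ∈ ℂ, set φ(x) := Σ_{μ=0}^{q+1} c_μ x^μ and {·,·}_φ := Σ_{μ=0}^{q+1} c_μ·{·,·}_μ. Writing ℓ_{ij}(x) := Σ_{k=0}^q ℓ_{ij}^k x^k ∈ R[x] and extending {·,·}_φ coefficient-wise to polynomials, for all 1 ≤ i,j,m,n ≤ p the following identity holds in R[x,y]: (x − y)·{ℓ_{ij}(x), ℓ_{mn}(y)}_φ = δ_{jm}·(ℓ_{in}(x)·φ(y) − ℓ_{in}(y)·φ(x)) − δ_{ni}·(ℓ_{mj}(x)·φ(y) − ℓ_{mj}(y)·φ(x)). -/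
namespace St12

set_option linter.unusedTactic false
set_option linter.unreachableTactic false
set_option maxHeartbeats 1000000

lemma ell_zero (p q : ℕ) (i j : Fin p) (s : ℤ) (h : s < 0 ∨ (q:ℤ) < s) : ell p q i j s = 0 := by
  rw [ell, dif_neg]; omega

lemma ell_coe (p q : ℕ) (a b : Fin p) (k : Fin (q+1)) :
    ell p q a b ((k : ℕ) : ℤ) = MvPolynomial.X (a, b, k) := by
  rw [ell, dif_pos (by constructor <;> [positivity; exact_mod_cast Nat.lt_succ_iff.mp k.isLt])]
  congr 1

noncomputable def mono (p q : ℕ) (r : RR p q) (u v : ℕ) : Polynomial (Polynomial (RR p q)) :=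
  Polynomial.C (Polynomial.C r) * Polynomial.C Polynomial.X ^ u * Polynomial.X ^ v

lemma mono_dcoeff (p q : ℕ) (r : RR p q) (u v A B : ℕ) :
    ((mono p q r u v).coeff B).coeff A = if u = A ∧ v = B then r else 0 := by
  rw [mono, ← Polynomial.C_pow, ← Polynomial.C_mul, Polynomial.coeff_C_mul, Polynomial.coeff_X_pow,
    mul_ite, mul_one, mul_zero]
  split_ifs with h1 h2 h3
  · rw [Polynomial.coeff_C_mul, Polynomial.coeff_X_pow, if_pos (by omega : A = u), mul_one]
  · rw [Polynomial.coeff_C_mul, Polynomial.coeff_X_pow, if_neg (by omega : ¬ A = u), mul_zero]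
  · exfalso; omega
  · simp

lemma monoCX (p q : ℕ) (s : ℤ) (r : RR p q) (u v : ℕ) :
    Polynomial.C Polynomial.X * (s • mono p q r u v) = s • mono p q r (u+1) v := by
  rw [mul_smul_comm]; congr 1; rw [mono, mono]; ring

lemma monoX (p q : ℕ) (s : ℤ) (r : RR p q) (u v : ℕ) :
    Polynomial.X * (s • mono p q r u v) = s • mono p q r u (v+1) := by
  rw [mul_smul_comm]; refine congrArg (fun z => s • z) ?_; rw [mono, mono]; ring

variable {M : Type} [AddCommGroup M]

lemma pickB (N B : ℕ) (f : ℕ → M) :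
    (∑ l ∈ Finset.range N, if l = B then f l else 0) = if B < N then f B else 0 := by
  rw [Finset.sum_ite_eq' (Finset.range N) B f]
  simp [Finset.mem_range]

lemma pickBsucc (N B : ℕ) (f : ℕ → M) :
    (∑ l ∈ Finset.range N, if l + 1 = B then f l else 0)
      = if 1 ≤ B ∧ B - 1 < N then f (B - 1) else 0 := by
  cases B with
  | zero => simp
  | succ B =>
      have h : ∀ l : ℕ, (l + 1 = B + 1) = (l = B) := fun l => by simp
      simp only [h, Nat.add_sub_cancel, pickB]
      simp

lemma pickR1 (N B : ℕ) (P : Prop) [Decidable P] (f : ℕ → M) :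
    (∑ l ∈ Finset.range N, if P ∧ l = B then f l else 0) = if P ∧ B < N then f B else 0 := by
  by_cases hP : P
  · simp only [hP, true_and]; exact pickB N B f
  · simp [hP]

lemma pickR2 (N B : ℕ) (P : Prop) [Decidable P] (f : ℕ → M) :
    (∑ l ∈ Finset.range N, if P ∧ l + 1 = B then f l else 0)
      = if P ∧ (1 ≤ B ∧ B - 1 < N) then f (B - 1) else 0 := by
  by_cases hP : P
  · simp only [hP, true_and]; exact pickBsucc N B f
  · simp [hP]

lemma pickR3 (N A : ℕ) (P : Prop) [Decidable P] (f : ℕ → M) :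
    (∑ k ∈ Finset.range N, if k + 1 = A ∧ P then f k else 0)
      = if (1 ≤ A ∧ A - 1 < N) ∧ P then f (A - 1) else 0 := by
  by_cases hP : P
  · simp only [hP, and_true]; exact pickBsucc N A f
  · simp [hP]

lemma pickR4 (N A : ℕ) (P : Prop) [Decidable P] (f : ℕ → M) :
    (∑ k ∈ Finset.range N, if k = A ∧ P then f k else 0)
      = if A < N ∧ P then f A else 0 := by
  by_cases hP : P
  · simp only [hP, and_true]; exact pickB N A f
  · simp [hP]

theorem key2 (q μ A B : ℕ) (hμ : μ ≤ q+1) (E : ℤ → M)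
    (hE : ∀ s : ℤ, s < 0 ∨ (q:ℤ) < s → E s = 0) :
    (if (1 ≤ A ∧ A - 1 < q+1) ∧ B < q+1 then
        eta μ (A-1) B • E (((A-1 : ℕ) : ℤ) + (B : ℤ) + 1 - (μ : ℤ)) else 0)
    - (if A < q+1 ∧ (1 ≤ B ∧ B - 1 < q+1) then
        eta μ A (B-1) • E ((A : ℤ) + ((B-1 : ℕ) : ℤ) + 1 - (μ : ℤ)) else 0)
    = (if μ = A ∧ B < q+1 then E (B : ℤ) else 0)
      - (if A < q+1 ∧ μ = B then E (A : ℤ) else 0) := by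
  have e1 : (if (1 ≤ A ∧ A - 1 < q+1) ∧ B < q+1 then
        eta μ (A-1) B • E (((A-1 : ℕ) : ℤ) + (B : ℤ) + 1 - (μ : ℤ)) else 0)
      = (if (1 ≤ A ∧ A - 1 < q+1) ∧ B < q+1 then
        eta μ (A-1) B • E ((A : ℤ) + (B : ℤ) - (μ : ℤ)) else 0) := by
    by_cases h : (1 ≤ A ∧ A - 1 < q+1) ∧ B < q+1
    · rw [if_pos h, if_pos h,
        show ((A-1 : ℕ) : ℤ) + (B : ℤ) + 1 - (μ : ℤ) = (A : ℤ) + (B : ℤ) - (μ : ℤ) by omega]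
    · rw [if_neg h, if_neg h]
  have e2 : (if A < q+1 ∧ (1 ≤ B ∧ B - 1 < q+1) then
        eta μ A (B-1) • E ((A : ℤ) + ((B-1 : ℕ) : ℤ) + 1 - (μ : ℤ)) else 0)
      = (if A < q+1 ∧ (1 ≤ B ∧ B - 1 < q+1) then
        eta μ A (B-1) • E ((A : ℤ) + (B : ℤ) - (μ : ℤ)) else 0) := by
    by_cases h : A < q+1 ∧ (1 ≤ B ∧ B - 1 < q+1)
    · rw [if_pos h, if_pos h,
        show (A : ℤ) + ((B-1 : ℕ) : ℤ) + 1 - (μ : ℤ) = (A : ℤ) + (B : ℤ) - (μ : ℤ) by omega]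
    · rw [if_neg h, if_neg h]
  rw [e1, e2]
  simp only [eta]
  split_ifs <;>
    simp only [one_smul, neg_smul, zero_smul, sub_zero, zero_sub, sub_self, neg_neg,
      sub_neg_eq_add, neg_zero] <;>
    first
      | rfl
      | (exfalso; omega)
      | ((rw [hE ((A:ℤ)+(B:ℤ)-(μ:ℤ)) (by omega)]; (try rfl); (try abel)); done)
      | ((rw [hE (B:ℤ) (by omega)]; (try rfl); (try abel)); done)
      | ((rw [hE (A:ℤ) (by omega)]; (try rfl); (try abel)); done)
      | ((rw [show ((A:ℤ)+(B:ℤ)-(μ:ℤ)) = (B:ℤ) by omega]; (try rfl); (try abel)); done)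
      | ((rw [show ((A:ℤ)+(B:ℤ)-(μ:ℤ)) = (A:ℤ) by omega]; (try rfl); (try abel)); done)
      | ((rw [show ((A:ℤ)+(B:ℤ)-(μ:ℤ)) = (B:ℤ) by omega, hE (A:ℤ) (by omega)]; (try rfl); (try abel)); done)
      | ((rw [show ((A:ℤ)+(B:ℤ)-(μ:ℤ)) = (A:ℤ) by omega, hE (B:ℤ) (by omega)]; (try rfl); (try abel)); done)
      | ((rw [hE (A:ℤ) (by omega), hE (B:ℤ) (by omega)]; (try rfl); (try abel)); done)
      | ((rw [show (B:ℤ) = (A:ℤ) by omega]; (try rfl); (try abel)); done)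
      | ((rw [show (A:ℤ) = (B:ℤ) by omega]; (try rfl); (try abel)); done)

theorem tele (p q : ℕ) (a b : Fin p) (μ : ℕ) (hμ : μ ≤ q + 1) :
    (Polynomial.C Polynomial.X - Polynomial.X) *
      (∑ k ∈ Finset.range (q+1), ∑ l ∈ Finset.range (q+1),
        eta μ k l • mono p q (ell p q a b ((k:ℤ) + (l:ℤ) + 1 - (μ:ℤ))) k l)
    = (∑ k ∈ Finset.range (q+1), mono p q (ell p q a b (k:ℤ)) μ k)
      - (∑ k ∈ Finset.range (q+1), mono p q (ell p q a b (k:ℤ)) k μ) := by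
  have hL : (Polynomial.C Polynomial.X - Polynomial.X) *
      (∑ k ∈ Finset.range (q+1), ∑ l ∈ Finset.range (q+1),
        eta μ k l • mono p q (ell p q a b ((k:ℤ) + (l:ℤ) + 1 - (μ:ℤ))) k l)
      = (∑ k ∈ Finset.range (q+1), ∑ l ∈ Finset.range (q+1),
          eta μ k l • mono p q (ell p q a b ((k:ℤ) + (l:ℤ) + 1 - (μ:ℤ))) (k+1) l)
        - (∑ k ∈ Finset.range (q+1), ∑ l ∈ Finset.range (q+1),
          eta μ k l • mono p q (ell p q a b ((k:ℤ) + (l:ℤ) + 1 - (μ:ℤ))) k (l+1)) := by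
    rw [sub_mul _ _ (∑ k ∈ Finset.range (q+1), ∑ l ∈ Finset.range (q+1),
        eta μ k l • mono p q (ell p q a b ((k:ℤ) + (l:ℤ) + 1 - (μ:ℤ))) k l)]
    congr 1
    · simp only [Finset.mul_sum]
      exact Finset.sum_congr rfl fun k _ => Finset.sum_congr rfl fun l _ => monoCX p q _ _ _ _
    · simp only [Finset.mul_sum]
      exact Finset.sum_congr rfl fun k _ => Finset.sum_congr rfl fun l _ => monoX p q _ _ _ _
  rw [hL]
  apply Polynomial.ext; intro B
  apply Polynomial.ext; intro A
  simp only [Polynomial.coeff_sub, Polynomial.finset_sum_coeff, Polynomial.coeff_smul,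
    mono_dcoeff, smul_ite_zero]
  rw [show (∑ k ∈ Finset.range (q+1), ∑ l ∈ Finset.range (q+1),
        if k + 1 = A ∧ l = B then eta μ k l • ell p q a b ((k:ℤ) + (l:ℤ) + 1 - (μ:ℤ)) else 0)
      = ∑ k ∈ Finset.range (q+1),
        if (k + 1 = A) ∧ B < q+1 then eta μ k B • ell p q a b ((k:ℤ) + (B:ℤ) + 1 - (μ:ℤ)) else 0
    from Finset.sum_congr rfl fun k _ => pickR1 (q+1) B (k+1 = A) _]
  rw [pickR3 (q+1) A (B < q+1) (fun k => eta μ k B • ell p q a b ((k:ℤ) + (B:ℤ) + 1 - (μ:ℤ)))]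
  rw [show (∑ k ∈ Finset.range (q+1), ∑ l ∈ Finset.range (q+1),
        if k = A ∧ l + 1 = B then eta μ k l • ell p q a b ((k:ℤ) + (l:ℤ) + 1 - (μ:ℤ)) else 0)
      = ∑ k ∈ Finset.range (q+1),
        if k = A ∧ (1 ≤ B ∧ B - 1 < q+1) then
          eta μ k (B-1) • ell p q a b ((k:ℤ) + ((B-1:ℕ):ℤ) + 1 - (μ:ℤ)) else 0
    from Finset.sum_congr rfl fun k _ => pickR2 (q+1) B (k = A) _]
  rw [pickR4 (q+1) A (1 ≤ B ∧ B - 1 < q+1)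
      (fun k => eta μ k (B-1) • ell p q a b ((k:ℤ) + ((B-1:ℕ):ℤ) + 1 - (μ:ℤ)))]
  rw [show (∑ k ∈ Finset.range (q+1),
        if μ = A ∧ k = B then ell p q a b (k:ℤ) else 0)
      = if μ = A ∧ B < q+1 then ell p q a b (B:ℤ) else 0
    from pickR1 (q+1) B (μ = A) _]
  rw [show (∑ k ∈ Finset.range (q+1),
        if k = A ∧ μ = B then ell p q a b (k:ℤ) else 0)
      = if A < q+1 ∧ μ = B then ell p q a b (A:ℤ) else 0
    from pickR4 (q+1) A (μ = B) _]
  exact key2 q μ A B hμ (ell p q a b) (ell_zero p q a b)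

lemma elly_mul (p q : ℕ) (a b : Fin p) (μ : ℕ) :
    (∑ k : Fin (q+1), Polynomial.C (Polynomial.C (MvPolynomial.X (a,b,k))) * Polynomial.X ^ (k:ℕ))
      * Polynomial.C Polynomial.X ^ μ
    = ∑ k ∈ Finset.range (q+1), mono p q (ell p q a b (k:ℤ)) μ k := by
  rw [Finset.sum_mul]
  rw [show (∑ k : Fin (q+1),
        Polynomial.C (Polynomial.C (MvPolynomial.X (a,b,k))) * Polynomial.X ^ (k:ℕ)
          * Polynomial.C Polynomial.X ^ μ)
      = ∑ k : Fin (q+1), mono p q (ell p q a b ((k:ℕ):ℤ)) μ (k:ℕ)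
    from Finset.sum_congr rfl fun k _ => by rw [← ell_coe p q a b k, mono]; ring]
  exact Fin.sum_univ_eq_sum_range (fun k => mono p q (ell p q a b (k:ℤ)) μ k) (q+1)

lemma ellx_mul (p q : ℕ) (a b : Fin p) (μ : ℕ) :
    (∑ k : Fin (q+1),
        Polynomial.C (Polynomial.C (MvPolynomial.X (a,b,k))) * Polynomial.C Polynomial.X ^ (k:ℕ))
      * Polynomial.X ^ μ
    = ∑ k ∈ Finset.range (q+1), mono p q (ell p q a b (k:ℤ)) k μ := by
  rw [Finset.sum_mul]
  rw [show (∑ k : Fin (q+1),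
        Polynomial.C (Polynomial.C (MvPolynomial.X (a,b,k))) * Polynomial.C Polynomial.X ^ (k:ℕ)
          * Polynomial.X ^ μ)
      = ∑ k : Fin (q+1), mono p q (ell p q a b ((k:ℕ):ℤ)) (k:ℕ) μ
    from Finset.sum_congr rfl fun k _ => by rw [← ell_coe p q a b k, mono]]
  exact Fin.sum_univ_eq_sum_range (fun k => mono p q (ell p q a b (k:ℤ)) k μ) (q+1)

lemma term_conv (p q : ℕ) (c : Fin (q+2) → ℂ) (a b : Fin p) (k l : Fin (q+1)) :
    Polynomial.C (Polynomial.C (∑ μ : Fin (q+2),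
        c μ • (eta (μ:ℕ) (k:ℕ) (l:ℕ) •
          ell p q a b (((k:ℕ):ℤ) + ((l:ℕ):ℤ) + 1 - ((μ:ℕ):ℤ)))))
      * Polynomial.C Polynomial.X ^ (k:ℕ) * Polynomial.X ^ (l:ℕ)
    = ∑ μ : Fin (q+2), c μ • (eta (μ:ℕ) (k:ℕ) (l:ℕ) •
        mono p q (ell p q a b (((k:ℕ):ℤ) + ((l:ℕ):ℤ) + 1 - ((μ:ℕ):ℤ))) (k:ℕ) (l:ℕ)) := by
  rw [map_sum, map_sum, Finset.sum_mul, Finset.sum_mul]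
  exact Finset.sum_congr rfl fun μ _ => by
    simp only [mono, ← Polynomial.smul_C, smul_mul_assoc]

lemma master2 (p q : ℕ) (c : Fin (q+2) → ℂ) (a b : Fin p) :
    (Polynomial.C Polynomial.X - Polynomial.X) *
      (∑ k : Fin (q+1), ∑ l : Fin (q+1),
        Polynomial.C (Polynomial.C (∑ μ : Fin (q+2),
            c μ • (eta (μ:ℕ) (k:ℕ) (l:ℕ) •
              ell p q a b (((k:ℕ):ℤ) + ((l:ℕ):ℤ) + 1 - ((μ:ℕ):ℤ)))))
          * Polynomial.C Polynomial.X ^ (k:ℕ) * Polynomial.X ^ (l:ℕ))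
    = (∑ k : Fin (q+1),
          Polynomial.C (Polynomial.C (MvPolynomial.X (a,b,k))) * Polynomial.X ^ (k:ℕ))
        * (∑ μ : Fin (q+2), c μ • Polynomial.C Polynomial.X ^ (μ:ℕ))
      - (∑ k : Fin (q+1),
          Polynomial.C (Polynomial.C (MvPolynomial.X (a,b,k))) * Polynomial.C Polynomial.X ^ (k:ℕ))
        * (∑ μ : Fin (q+2), c μ • Polynomial.X ^ (μ:ℕ)) := by
  rw [show (∑ k : Fin (q+1), ∑ l : Fin (q+1),
        Polynomial.C (Polynomial.C (∑ μ : Fin (q+2),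
            c μ • (eta (μ:ℕ) (k:ℕ) (l:ℕ) •
              ell p q a b (((k:ℕ):ℤ) + ((l:ℕ):ℤ) + 1 - ((μ:ℕ):ℤ)))))
          * Polynomial.C Polynomial.X ^ (k:ℕ) * Polynomial.X ^ (l:ℕ))
      = ∑ μ : Fin (q+2), c μ • (∑ k ∈ Finset.range (q+1), ∑ l ∈ Finset.range (q+1),
          eta (μ:ℕ) k l • mono p q (ell p q a b ((k:ℤ) + (l:ℤ) + 1 - ((μ:ℕ):ℤ))) k l) from ?_]
  · rw [Finset.mul_sum]
    rw [show (∑ μ : Fin (q+2), (Polynomial.C Polynomial.X - Polynomial.X) *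
          (c μ • (∑ k ∈ Finset.range (q+1), ∑ l ∈ Finset.range (q+1),
            eta (μ:ℕ) k l • mono p q (ell p q a b ((k:ℤ) + (l:ℤ) + 1 - ((μ:ℕ):ℤ))) k l)))
        = ∑ μ : Fin (q+2), c μ •
            ((∑ k ∈ Finset.range (q+1), mono p q (ell p q a b (k:ℤ)) (μ:ℕ) k)
              - (∑ k ∈ Finset.range (q+1), mono p q (ell p q a b (k:ℤ)) k (μ:ℕ)))
      from Finset.sum_congr rfl fun μ _ => by
        rw [mul_smul_comm, tele p q a b (μ:ℕ) (by omega)]]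
    rw [Finset.mul_sum, Finset.mul_sum]
    rw [show (∑ μ : Fin (q+2),
          (∑ k : Fin (q+1), Polynomial.C (Polynomial.C (MvPolynomial.X (a,b,k)))
              * Polynomial.X ^ (k:ℕ)) * (c μ • Polynomial.C Polynomial.X ^ (μ:ℕ)))
        = ∑ μ : Fin (q+2), c μ • (∑ k ∈ Finset.range (q+1), mono p q (ell p q a b (k:ℤ)) (μ:ℕ) k)
      from Finset.sum_congr rfl fun μ _ => by rw [mul_smul_comm, elly_mul]]
    rw [show (∑ μ : Fin (q+2),
          (∑ k : Fin (q+1), Polynomial.C (Polynomial.C (MvPolynomial.X (a,b,k)))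
              * Polynomial.C Polynomial.X ^ (k:ℕ)) * (c μ • Polynomial.X ^ (μ:ℕ)))
        = ∑ μ : Fin (q+2), c μ • (∑ k ∈ Finset.range (q+1), mono p q (ell p q a b (k:ℤ)) k (μ:ℕ))
      from Finset.sum_congr rfl fun μ _ => by rw [mul_smul_comm, ellx_mul]]
    rw [show (∑ μ : Fin (q+2), c μ •
          ((∑ k ∈ Finset.range (q+1), mono p q (ell p q a b (k:ℤ)) (μ:ℕ) k)
            - (∑ k ∈ Finset.range (q+1), mono p q (ell p q a b (k:ℤ)) k (μ:ℕ))))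
        = ∑ μ : Fin (q+2),
            (c μ • (∑ k ∈ Finset.range (q+1), mono p q (ell p q a b (k:ℤ)) (μ:ℕ) k)
              - c μ • (∑ k ∈ Finset.range (q+1), mono p q (ell p q a b (k:ℤ)) k (μ:ℕ)))
      from Finset.sum_congr rfl fun μ _ => smul_sub (c μ)
        (∑ k ∈ Finset.range (q+1), mono p q (ell p q a b (k:ℤ)) (μ:ℕ) k)
        (∑ k ∈ Finset.range (q+1), mono p q (ell p q a b (k:ℤ)) k (μ:ℕ))]
    exact Finset.sum_sub_distrib (G := Polynomial (Polynomial (RR p q))) _ _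
  · rw [show (∑ k : Fin (q+1), ∑ l : Fin (q+1),
          Polynomial.C (Polynomial.C (∑ μ : Fin (q+2),
              c μ • (eta (μ:ℕ) (k:ℕ) (l:ℕ) •
                ell p q a b (((k:ℕ):ℤ) + ((l:ℕ):ℤ) + 1 - ((μ:ℕ):ℤ)))))
            * Polynomial.C Polynomial.X ^ (k:ℕ) * Polynomial.X ^ (l:ℕ))
        = ∑ k : Fin (q+1), ∑ l : Fin (q+1), ∑ μ : Fin (q+2),
            c μ • (eta (μ:ℕ) (k:ℕ) (l:ℕ) •
              mono p q (ell p q a b (((k:ℕ):ℤ) + ((l:ℕ):ℤ) + 1 - ((μ:ℕ):ℤ))) (k:ℕ) (l:ℕ))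
      from Finset.sum_congr rfl fun k _ => Finset.sum_congr rfl fun l _ => term_conv p q c a b k l]
    rw [show (∑ k : Fin (q+1), ∑ l : Fin (q+1), ∑ μ : Fin (q+2),
          c μ • (eta (μ:ℕ) (k:ℕ) (l:ℕ) •
            mono p q (ell p q a b (((k:ℕ):ℤ) + ((l:ℕ):ℤ) + 1 - ((μ:ℕ):ℤ))) (k:ℕ) (l:ℕ)))
        = ∑ μ : Fin (q+2), ∑ k : Fin (q+1), ∑ l : Fin (q+1),
            c μ • (eta (μ:ℕ) (k:ℕ) (l:ℕ) •
              mono p q (ell p q a b (((k:ℕ):ℤ) + ((l:ℕ):ℤ) + 1 - ((μ:ℕ):ℤ))) (k:ℕ) (l:ℕ))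
      from (Finset.sum_congr rfl fun k _ => Finset.sum_comm).trans Finset.sum_comm]
    refine Finset.sum_congr rfl fun μ _ => ?_
    rw [Finset.smul_sum]
    rw [show (∑ k ∈ Finset.range (q+1), c μ • ∑ l ∈ Finset.range (q+1),
          eta (μ:ℕ) k l • mono p q (ell p q a b ((k:ℤ) + (l:ℤ) + 1 - ((μ:ℕ):ℤ))) k l)
        = ∑ k ∈ Finset.range (q+1), ∑ l ∈ Finset.range (q+1), c μ •
            (eta (μ:ℕ) k l • mono p q (ell p q a b ((k:ℤ) + (l:ℤ) + 1 - ((μ:ℕ):ℤ))) k l)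
      from Finset.sum_congr rfl fun k _ => Finset.smul_sum]
    rw [← Fin.sum_univ_eq_sum_range (fun k => ∑ l ∈ Finset.range (q+1), c μ •
          (eta (μ:ℕ) k l • mono p q (ell p q a b ((k:ℤ) + (l:ℤ) + 1 - ((μ:ℕ):ℤ))) k l)) (q+1)]
    exact Finset.sum_congr rfl fun k _ =>
      Fin.sum_univ_eq_sum_range (fun l => c μ •
        (eta (μ:ℕ) (k:ℕ) l • mono p q
          (ell p q a b (((k:ℕ):ℤ) + (l:ℤ) + 1 - ((μ:ℕ):ℤ))) (k:ℕ) l)) (q+1)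

end St12

/-- The generating-function formula for the Poisson bracket `{·,·}_φ`,
`φ(x) = Σ_μ c_μ x^μ`:
`(x−y)·{ℓ_{ij}(x), ℓ_{mn}(y)}_φ = δ_{jm}(ℓ_{in}(x)φ(y) − ℓ_{in}(y)φ(x))
  − δ_{ni}(ℓ_{mj}(x)φ(y) − ℓ_{mj}(y)φ(x))` in `R[x,y]`. -/
theorem stmt_12 (p q : ℕ) (hp : 2 ≤ p) (hq : 1 ≤ q)
    (br : Fin (q + 2) → (RR p q →ₗ[ℂ] RR p q →ₗ[ℂ] RR p q))
    (hbr : ∀ μ : Fin (q + 2),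
      IsPoissonBracket (br μ) ∧ HasBracketValues p q (μ : ℕ) (br μ))
    (c : Fin (q + 2) → ℂ) (i j m n : Fin p) :
    let xx : Polynomial (Polynomial (RR p q)) := Polynomial.C Polynomial.X
    let yy : Polynomial (Polynomial (RR p q)) := Polynomial.X
    let brφ : RR p q → RR p q → RR p q := fun f g => ∑ μ : Fin (q + 2), c μ • br μ f g
    let ellx : Fin p → Fin p → Polynomial (Polynomial (RR p q)) := fun a b =>
      ∑ k : Fin (q + 1),
        Polynomial.C (Polynomial.C (MvPolynomial.X (a, b, k))) * xx ^ (k : ℕ)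
    let elly : Fin p → Fin p → Polynomial (Polynomial (RR p q)) := fun a b =>
      ∑ k : Fin (q + 1),
        Polynomial.C (Polynomial.C (MvPolynomial.X (a, b, k))) * yy ^ (k : ℕ)
    let φx : Polynomial (Polynomial (RR p q)) := ∑ μ : Fin (q + 2), c μ • xx ^ (μ : ℕ)
    let φy : Polynomial (Polynomial (RR p q)) := ∑ μ : Fin (q + 2), c μ • yy ^ (μ : ℕ)
    (xx - yy) *
        (∑ k : Fin (q + 1), ∑ l : Fin (q + 1),
          Polynomial.C (Polynomial.C
              (brφ (MvPolynomial.X (i, j, k)) (MvPolynomial.X (m, n, l)))) *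
            xx ^ (k : ℕ) * yy ^ (l : ℕ)) =
      (if j = m then ellx i n * φy - elly i n * φx else 0) -
        (if n = i then ellx m j * φy - elly m j * φx else 0) := by
  intro xx yy brφ ellx elly φx φy
  unfold xx yy brφ ellx elly φx φy
  have hsub : ∀ S1 S2 : Polynomial (Polynomial (RR p q)),
      (Polynomial.C Polynomial.X - Polynomial.X) * (S1 - S2)
        = (Polynomial.C Polynomial.X - Polynomial.X) * S1
          - (Polynomial.C Polynomial.X - Polynomial.X) * S2 :=
    fun S1 S2 => mul_sub (Polynomial.C Polynomial.X - Polynomial.X) S1 S2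
  have hneg : ∀ S : Polynomial (Polynomial (RR p q)),
      (Polynomial.C Polynomial.X - Polynomial.X) * (-S)
        = -((Polynomial.C Polynomial.X - Polynomial.X) * S) := fun S => by ring
  by_cases hjm : j = m <;> by_cases hni : n = i
  · rw [if_pos hjm, if_pos hni]
    rw [show (∑ k : Fin (q + 1), ∑ l : Fin (q + 1),
          Polynomial.C (Polynomial.C
              (∑ μ : Fin (q + 2), c μ • br μ (MvPolynomial.X (i, j, k)) (MvPolynomial.X (m, n, l)))) *
            Polynomial.C Polynomial.X ^ (k : ℕ) * Polynomial.X ^ (l : ℕ))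
        = (∑ k : Fin (q+1), ∑ l : Fin (q+1),
            Polynomial.C (Polynomial.C (∑ μ : Fin (q+2),
                c μ • (eta (μ:ℕ) (k:ℕ) (l:ℕ) •
                  ell p q m j (((k:ℕ):ℤ) + ((l:ℕ):ℤ) + 1 - ((μ:ℕ):ℤ)))))
              * Polynomial.C Polynomial.X ^ (k:ℕ) * Polynomial.X ^ (l:ℕ))
          - (∑ k : Fin (q+1), ∑ l : Fin (q+1),
            Polynomial.C (Polynomial.C (∑ μ : Fin (q+2),
                c μ • (eta (μ:ℕ) (k:ℕ) (l:ℕ) •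
                  ell p q i n (((k:ℕ):ℤ) + ((l:ℕ):ℤ) + 1 - ((μ:ℕ):ℤ)))))
              * Polynomial.C Polynomial.X ^ (k:ℕ) * Polynomial.X ^ (l:ℕ))
      from ?_]
    · rw [hsub, St12.master2 p q c m j, St12.master2 p q c i n]
      ring
    · refine Eq.trans ?_ (Finset.sum_sub_distrib (G := Polynomial (Polynomial (RR p q))) _ _)
      refine Finset.sum_congr rfl fun k _ => ?_
      refine Eq.trans ?_ (Finset.sum_sub_distrib (G := Polynomial (Polynomial (RR p q))) _ _)
      refine Finset.sum_congr rfl fun l _ => ?_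
      rw [show (∑ μ : Fin (q + 2), c μ • br μ (MvPolynomial.X (i, j, k)) (MvPolynomial.X (m, n, l)))
          = (∑ μ : Fin (q+2), c μ • (eta (μ:ℕ) (k:ℕ) (l:ℕ) •
                ell p q m j (((k:ℕ):ℤ) + ((l:ℕ):ℤ) + 1 - ((μ:ℕ):ℤ))))
            - (∑ μ : Fin (q+2), c μ • (eta (μ:ℕ) (k:ℕ) (l:ℕ) •
                ell p q i n (((k:ℕ):ℤ) + ((l:ℕ):ℤ) + 1 - ((μ:ℕ):ℤ))))
        from by
          refine Eq.trans ?_ (Finset.sum_sub_distrib (G := RR p q) _ _)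
          refine Finset.sum_congr rfl fun μ _ => ?_
          rw [(hbr μ).2 i j m n k l, if_pos hni, if_pos hjm]
          module]
      rw [map_sub, map_sub]
      ring
  · rw [if_pos hjm, if_neg hni]
    rw [show (∑ k : Fin (q + 1), ∑ l : Fin (q + 1),
          Polynomial.C (Polynomial.C
              (∑ μ : Fin (q + 2), c μ • br μ (MvPolynomial.X (i, j, k)) (MvPolynomial.X (m, n, l)))) *
            Polynomial.C Polynomial.X ^ (k : ℕ) * Polynomial.X ^ (l : ℕ))
        = -(∑ k : Fin (q+1), ∑ l : Fin (q+1),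
            Polynomial.C (Polynomial.C (∑ μ : Fin (q+2),
                c μ • (eta (μ:ℕ) (k:ℕ) (l:ℕ) •
                  ell p q i n (((k:ℕ):ℤ) + ((l:ℕ):ℤ) + 1 - ((μ:ℕ):ℤ)))))
              * Polynomial.C Polynomial.X ^ (k:ℕ) * Polynomial.X ^ (l:ℕ))
      from ?_]
    · rw [hneg, St12.master2 p q c i n]
      ring
    · refine Eq.trans ?_ (Finset.sum_neg_distrib (G := Polynomial (Polynomial (RR p q))) _)
      refine Finset.sum_congr rfl fun k _ => ?_
      refine Eq.trans ?_ (Finset.sum_neg_distrib (G := Polynomial (Polynomial (RR p q))) _)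
      refine Finset.sum_congr rfl fun l _ => ?_
      rw [show (∑ μ : Fin (q + 2), c μ • br μ (MvPolynomial.X (i, j, k)) (MvPolynomial.X (m, n, l)))
          = -(∑ μ : Fin (q+2), c μ • (eta (μ:ℕ) (k:ℕ) (l:ℕ) •
                ell p q i n (((k:ℕ):ℤ) + ((l:ℕ):ℤ) + 1 - ((μ:ℕ):ℤ))))
        from by
          refine Eq.trans ?_ (Finset.sum_neg_distrib (G := RR p q) _)
          refine Finset.sum_congr rfl fun μ _ => ?_
          rw [(hbr μ).2 i j m n k l, if_neg hni, if_pos hjm]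
          module]
      rw [map_neg, map_neg]
      ring
  · rw [if_neg hjm, if_pos hni]
    rw [show (∑ k : Fin (q + 1), ∑ l : Fin (q + 1),
          Polynomial.C (Polynomial.C
              (∑ μ : Fin (q + 2), c μ • br μ (MvPolynomial.X (i, j, k)) (MvPolynomial.X (m, n, l)))) *
            Polynomial.C Polynomial.X ^ (k : ℕ) * Polynomial.X ^ (l : ℕ))
        = (∑ k : Fin (q+1), ∑ l : Fin (q+1),
            Polynomial.C (Polynomial.C (∑ μ : Fin (q+2),
                c μ • (eta (μ:ℕ) (k:ℕ) (l:ℕ) •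
                  ell p q m j (((k:ℕ):ℤ) + ((l:ℕ):ℤ) + 1 - ((μ:ℕ):ℤ)))))
              * Polynomial.C Polynomial.X ^ (k:ℕ) * Polynomial.X ^ (l:ℕ))
      from ?_]
    · rw [St12.master2 p q c m j]
      ring
    · refine Finset.sum_congr rfl fun k _ => ?_
      refine Finset.sum_congr rfl fun l _ => ?_
      rw [show (∑ μ : Fin (q + 2), c μ • br μ (MvPolynomial.X (i, j, k)) (MvPolynomial.X (m, n, l)))
          = (∑ μ : Fin (q+2), c μ • (eta (μ:ℕ) (k:ℕ) (l:ℕ) •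
                ell p q m j (((k:ℕ):ℤ) + ((l:ℕ):ℤ) + 1 - ((μ:ℕ):ℤ))))
        from Finset.sum_congr rfl fun μ _ => by
          rw [(hbr μ).2 i j m n k l, if_pos hni, if_neg hjm]
          module]
  · rw [if_neg hjm, if_neg hni]
    rw [show (∑ k : Fin (q + 1), ∑ l : Fin (q + 1),
          Polynomial.C (Polynomial.C
              (∑ μ : Fin (q + 2), c μ • br μ (MvPolynomial.X (i, j, k)) (MvPolynomial.X (m, n, l)))) *
            Polynomial.C Polynomial.X ^ (k : ℕ) * Polynomial.X ^ (l : ℕ))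
        = 0
      from ?_]
    · rw [mul_zero]; ring
    · refine Finset.sum_eq_zero fun k _ => Finset.sum_eq_zero fun l _ => ?_
      rw [show (∑ μ : Fin (q + 2), c μ • br μ (MvPolynomial.X (i, j, k)) (MvPolynomial.X (m, n, l)))
          = 0
        from Finset.sum_eq_zero fun μ _ => by
          rw [(hbr μ).2 i j m n k l, if_neg hni, if_neg hjm]
          module]
      rw [map_zero, map_zero, zero_mul, zero_mul]
end

section
/- Fix integers p ≥ 2 and q ≥ 1, let ζ = exp(2πi/p), let e = (e_1,…,e_p) ∈ (ℤ/pℤ)^p, and let σ* be the ℂ-algebra endomorphism of R determined by σ*(ℓ_{ij}^k) = ζ^{k + e_j − e_i}·ℓ_{ij}^k on generators. Then for each integer 0 ≤ μ ≤ q+1, σ* is a Poisson automorphism of (R, {·,·}_μ) — i.e. {σ*f, σ*g}_μ = σ*({f,g}_μ) for all f, g ∈ R — if and only if μ ≡ 1 (mod p). -/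
set_option maxHeartbeats 1000000 in
/-- The twist `σ*(ℓ_{ij}^k) = ζ^{k+e_j−e_i}·ℓ_{ij}^k` is a Poisson automorphism of
`(R, {·,·}_μ)` if and only if `μ ≡ 1 (mod p)`. -/
theorem stmt_13 (p q : ℕ) (hp : 2 ≤ p) (hq : 1 ≤ q) (μ : ℕ) (hμ : μ ≤ q + 1)
    (ζ : ℂ) (hζ : ζ = Complex.exp (2 * Real.pi * Complex.I / p))
    (e : Fin p → ZMod p)
    (br : RR p q →ₗ[ℂ] RR p q →ₗ[ℂ] RR p q)
    (hbr : IsPoissonBracket br ∧ HasBracketValues p q μ br)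
    (σ : RR p q →ₐ[ℂ] RR p q)
    (hσ : ∀ (i j : Fin p) (k : Fin (q + 1)),
      σ (MvPolynomial.X (i, j, k)) =
        ζ ^ ((((k : ℕ) : ZMod p) + e j - e i).val) • MvPolynomial.X (i, j, k)) :
    (∀ f g, br (σ f) (σ g) = σ (br f g)) ↔ ((μ : ZMod p) = 1) := by
  classical
  obtain ⟨⟨hanti, hL, hR, _⟩, hval⟩ := hbr
  haveI : NeZero p := ⟨by omega⟩
  have hprim : IsPrimitiveRoot ζ p := by
    rw [hζ]; exact Complex.isPrimitiveRoot_exp p (by omega)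
  have hζp : ζ ^ p = 1 := hprim.pow_eq_one
  have hmod : ∀ n : ℕ, ζ ^ (n % p) = ζ ^ n := by
    intro n
    conv_rhs => rw [← Nat.mod_add_div n p]
    rw [pow_add, pow_mul, hζp, one_pow, mul_one]
  have χadd : ∀ a b : ZMod p, ζ ^ (a + b).val = ζ ^ a.val * ζ ^ b.val := by
    intro a b
    rw [ZMod.val_add, hmod, pow_add]
  have χinj : ∀ a b : ZMod p, ζ ^ a.val = ζ ^ b.val → a = b := by
    intro a b h
    exact ZMod.val_injective p (hprim.pow_inj (ZMod.val_lt a) (ZMod.val_lt b) h)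
  have hσell : ∀ (i j : Fin p) (T : ℤ), σ (ell p q i j T) =
      ζ ^ (((T.toNat : ZMod p) + e j - e i).val) • ell p q i j T := by
    intro i j T
    unfold ell
    split
    · exact hσ i j _
    · simp
  constructor
  · intro H
    obtain ⟨k, l, hη, hT0, hTq⟩ :
        ∃ k l : Fin (q + 1), eta μ (k : ℕ) (l : ℕ) ≠ 0 ∧
          0 ≤ ((k : ℕ) : ℤ) + ((l : ℕ) : ℤ) + 1 - (μ : ℤ) ∧
          ((k : ℕ) : ℤ) + ((l : ℕ) : ℤ) + 1 - (μ : ℤ) ≤ (q : ℤ) := by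
      rcases Nat.eq_zero_or_pos μ with h0 | h1
      · refine ⟨⟨0, by omega⟩, ⟨0, by omega⟩, ?_, ?_, ?_⟩ <;>
          simp only [eta, h0] <;> norm_num <;> omega
      · refine ⟨⟨μ - 1, by omega⟩, ⟨0, by omega⟩, ?_, ?_, ?_⟩ <;>
          simp only [eta] <;> norm_num <;> omega
    set i0 : Fin p := ⟨0, by omega⟩ with hi0
    set m1 : Fin p := ⟨1, by omega⟩ with hm1
    have hne : i0 ≠ m1 := by simp [hi0, hm1, Fin.ext_iff]
    set T : ℤ := ((k : ℕ) : ℤ) + ((l : ℕ) : ℤ) + 1 - (μ : ℤ) with hT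
    have hellX : ell p q m1 i0 T = MvPolynomial.X (m1, i0, ⟨T.toNat, by omega⟩) := by
      unfold ell; rw [dif_pos ⟨hT0, hTq⟩]
    have H1 := H (MvPolynomial.X (i0, i0, k)) (MvPolynomial.X (m1, i0, l))
    rw [hσ, hσ] at H1
    simp only [map_smul, LinearMap.smul_apply] at H1
    rw [hval] at H1
    rw [if_pos rfl] at H1
    rw [if_neg hne] at H1
    rw [sub_zero] at H1
    rw [hellX] at H1
    simp only [← Int.cast_smul_eq_zsmul ℂ] at H1
    conv at H1 => rhs; rw [map_smul, hσ]
    simp only [smul_smul] at H1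
    rw [← sub_eq_zero, ← sub_smul] at H1
    rcases smul_eq_zero.mp H1 with hc | hX
    swap
    · exact absurd hX (MvPolynomial.X_ne_zero _)
    rw [sub_eq_zero] at hc
    have hηC : ((eta μ (k : ℕ) (l : ℕ) : ℤ) : ℂ) ≠ 0 := Int.cast_ne_zero.mpr hη
    have hc2 : ζ ^ (((k : ℕ) : ZMod p) + e i0 - e i0).val *
        ζ ^ (((l : ℕ) : ZMod p) + e i0 - e m1).val =
        ζ ^ (((T.toNat : ZMod p) + e i0 - e m1).val) := by
      apply mul_left_cancel₀ hηC
      linear_combination hc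
    rw [← χadd] at hc2
    have harg := χinj _ _ hc2
    have hcast : ((T.toNat : ℕ) : ZMod p)
        = ((k : ℕ) : ZMod p) + ((l : ℕ) : ZMod p) + 1 - (μ : ZMod p) := by
      rw [← Int.cast_natCast, Int.toNat_of_nonneg hT0, hT]
      push_cast
      ring
    rw [hcast] at harg
    linear_combination harg
  · intro hμ1
    have key : ∀ s t : Fin p × Fin p × Fin (q + 1),
        br (σ (MvPolynomial.X s)) (σ (MvPolynomial.X t)) =
          σ (br (MvPolynomial.X s) (MvPolynomial.X t)) := by
      rintro ⟨i, j, k⟩ ⟨m, n, l⟩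
      rw [hσ, hσ]
      simp only [map_smul, LinearMap.smul_apply]
      rw [hval]
      simp only [← Int.cast_smul_eq_zsmul ℂ]
      conv_rhs => rw [map_smul, map_sub]
      set T : ℤ := ((k : ℕ) : ℤ) + ((l : ℕ) : ℤ) + 1 - (μ : ℤ) with hT
      have hcast : 0 ≤ T → ((T.toNat : ℕ) : ZMod p)
          = ((k : ℕ) : ZMod p) + ((l : ℕ) : ZMod p) := by
        intro h0
        rw [← Int.cast_natCast, Int.toNat_of_nonneg h0, hT]
        push_cast
        rw [hμ1]
        ring
      have hA : (ζ ^ ((((k : ℕ) : ZMod p) + e j - e i).val)) •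
          (ζ ^ ((((l : ℕ) : ZMod p) + e n - e m).val)) •
          (if n = i then ell p q m j T else 0) =
          σ (if n = i then ell p q m j T else 0) := by
        by_cases hni : n = i
        · rw [if_pos hni, hσell, smul_smul]
          by_cases hTr : 0 ≤ T ∧ T ≤ (q : ℤ)
          · congr 1
            rw [← χadd]
            congr 2
            rw [hcast hTr.1, hni]
            ring
          · unfold ell
            rw [dif_neg hTr]
            simp
        · rw [if_neg hni]
          simp
      have hB : (ζ ^ ((((k : ℕ) : ZMod p) + e j - e i).val)) •
          (ζ ^ ((((l : ℕ) : ZMod p) + e n - e m).val)) •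
          (if j = m then ell p q i n T else 0) =
          σ (if j = m then ell p q i n T else 0) := by
        by_cases hjm : j = m
        · rw [if_pos hjm, hσell, smul_smul]
          by_cases hTr : 0 ≤ T ∧ T ≤ (q : ℤ)
          · congr 1
            rw [← χadd]
            congr 2
            rw [hcast hTr.1, hjm]
            ring
          · unfold ell
            rw [dif_neg hTr]
            simp
        · rw [if_neg hjm]
          simp
      rw [← hA, ← hB]
      module
    have br1L : ∀ h, br 1 h = 0 := by
      intro h
      have h2 := hL 1 1 h
      simp only [one_mul, mul_one] at h2
      exact left_eq_add.mp h2
    have brCL : ∀ (a : ℂ) (h : RR p q), br (MvPolynomial.C a) h = 0 := by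
      intro a h
      have hca : (MvPolynomial.C a : RR p q) = a • (1 : RR p q) := by
        rw [MvPolynomial.smul_eq_C_mul, mul_one]
      rw [hca, map_smul, LinearMap.smul_apply, br1L, smul_zero]
    have brCR : ∀ (a : ℂ) (h : RR p q), br h (MvPolynomial.C a) = 0 := by
      intro a h
      rw [hanti, brCL, neg_zero]
    have σC : ∀ a : ℂ, σ (MvPolynomial.C a) = MvPolynomial.C a := by
      intro a
      rw [← MvPolynomial.algebraMap_eq]
      exact σ.commutes a
    have Qgen : ∀ (s : Fin p × Fin p × Fin (q + 1)) (g : RR p q),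
        br (σ (MvPolynomial.X s)) (σ g) = σ (br (MvPolynomial.X s) g) := by
      intro s g
      induction g using MvPolynomial.induction_on with
      | C a => rw [σC, brCR, brCR, map_zero]
      | add f g hf hg => simp only [map_add, hf, hg]
      | mul_X f n hf =>
        rw [map_mul, hR, hR, map_add, map_mul, map_mul, hf, key s n]
    intro f g
    induction f using MvPolynomial.induction_on with
    | C a => rw [σC, brCL, brCL, map_zero]
    | add f1 f2 h1 h2 =>
        simp only [map_add, LinearMap.add_apply, h1, h2]
    | mul_X f n hf =>
        rw [map_mul, hL, hL, map_add, map_mul, map_mul, hf, Qgen n g]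
end

section
/- Fix integers p ≥ 2 and q ≥ 1 and an integer 0 ≤ μ ≤ q+1. Let L(x) be the p×p matrix over R[x] with (i,j) entry ℓ_{ij}(x) = Σ_{k=0}^q ℓ_{ij}^k x^k, and for integers i ≥ 0 and j let H_{i,j} ∈ R be 1/(i+1) times the coefficient of x^j in Tr(L(x)^{i+1}). Then for any i ≥ 0, the function H_{i,j} is a Casimir of {·,·}_μ for every j ∈ {0,…,μ−1} ∪ {iq+μ,…,(i+1)q}; that is, {f, H_{i,j}}_μ = 0 for all f ∈ R. -/
namespace Stmt16
open Polynomial Finset Matrix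

lemma sum_Icc_fin (q : ℕ) {M : Type*} [AddCommMonoid M] (f : ℤ → M) :
    ∑ s ∈ Finset.Icc (0 : ℤ) (q : ℤ), f s = ∑ k : Fin (q + 1), f ((k : ℕ) : ℤ) := by
  refine Finset.sum_nbij' (i := fun s => (⟨s.toNat % (q + 1), Nat.mod_lt _ (by omega)⟩ : Fin (q+1)))
    (j := fun k => ((k : ℕ) : ℤ)) ?_ ?_ ?_ ?_ ?_
  · intro a ha; exact Finset.mem_univ _
  · intro k _; simp only [Finset.mem_Icc]; constructor
    · positivity
    · exact_mod_cast Nat.le_of_lt_succ k.isLt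
  · intro a ha; simp only [Finset.mem_Icc] at ha
    simp only [Fin.val_mk]
    rw [Nat.mod_eq_of_lt (by omega)]
    omega
  · intro k _; ext
    simp only [Fin.val_mk, Int.toNat_natCast]
    exact Nat.mod_eq_of_lt k.isLt
  · intro a ha; simp only [Finset.mem_Icc] at ha
    congr 1
    simp only [Fin.val_mk]
    rw [Nat.mod_eq_of_lt (by omega)]
    omega

lemma sum_Icc_shift {M : Type*} [AddCommMonoid M] (f : ℤ → M) (a b d : ℤ) :
    ∑ s ∈ Finset.Icc a b, f (s + d) = ∑ s ∈ Finset.Icc (a + d) (b + d), f s := by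
  rw [← Finset.map_add_right_Icc, Finset.sum_map]
  rfl

variable (p q : ℕ)

noncomputable def Lm : Matrix (Fin p) (Fin p) (Polynomial (RR p q)) :=
  Matrix.of fun a b => ∑ k : Fin (q + 1),
    Polynomial.C (MvPolynomial.X (a, b, k)) * Polynomial.X ^ (k : ℕ)

noncomputable def Em (s : ℤ) : Matrix (Fin p) (Fin p) (RR p q) :=
  Matrix.of fun a b => ell p q a b s

noncomputable def Pc (t : ℕ) (d : ℤ) : Matrix (Fin p) (Fin p) (RR p q) :=
  if 0 ≤ d then Matrix.of (fun a b => ((Lm p q ^ t) a b).coeff d.toNat) else 0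

noncomputable def Cm (t : ℕ) (d s : ℤ) : Matrix (Fin p) (Fin p) (RR p q) :=
  Pc p q t d * Em p q s - Em p q s * Pc p q t d

lemma Em_zero {s : ℤ} (hs : s < 0 ∨ (q : ℤ) < s) : Em p q s = 0 := by
  ext a b
  rw [Em, Matrix.of_apply, ell, dif_neg (by omega)]
  rfl

lemma Em_in (k : Fin (q + 1)) : Em p q ((k : ℕ) : ℤ) =
    Matrix.of fun a b => MvPolynomial.X (a, b, k) := by
  ext a b
  rw [Em, Matrix.of_apply, ell, dif_pos (by exact ⟨by positivity, by exact_mod_cast Nat.le_of_lt_succ k.isLt⟩)]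
  simp only [Matrix.of_apply]
  congr 1

lemma Pc_neg {t : ℕ} {d : ℤ} (hd : d < 0) : Pc p q t d = 0 := by
  rw [Pc, if_neg (by omega)]

lemma L_coeff (a b : Fin p) (d : ℕ) :
    (Lm p q a b).coeff d = if h : d < q + 1 then MvPolynomial.X (a, b, ⟨d, h⟩) else 0 := by
  rw [Lm, Matrix.of_apply, finset_sum_coeff]
  simp only [coeff_C_mul, coeff_X_pow, mul_ite, mul_one, mul_zero]
  by_cases h : d < q + 1
  · rw [dif_pos h]
    rw [Finset.sum_eq_single (⟨d, h⟩ : Fin (q + 1))]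
    · simp
    · intro k _ hk
      rw [if_neg]
      intro hdk
      exact hk (Fin.ext hdk.symm)
    · simp
  · rw [dif_neg h]
    apply Finset.sum_eq_zero
    intro k _
    rw [if_neg]
    omega

lemma pow_coeff_high (t : ℕ) : ∀ (d : ℕ), t * q < d → ∀ (a b : Fin p),
    ((Lm p q ^ t) a b).coeff d = 0 := by
  induction t with
  | zero =>
    intro d hd a b
    rw [pow_zero, Matrix.one_apply]
    split
    · rw [Polynomial.coeff_one, if_neg (by omega)]
    · exact Polynomial.coeff_zero d
  | succ t ih =>
    intro d hd a b
    rw [pow_succ', Matrix.mul_apply, finset_sum_coeff]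
    apply Finset.sum_eq_zero
    intro c _
    rw [Polynomial.coeff_mul]
    apply Finset.sum_eq_zero
    intro x hx
    rw [Finset.HasAntidiagonal.mem_antidiagonal] at hx
    have hmul : (t + 1) * q = t * q + q := Nat.succ_mul t q
    by_cases hx1 : x.1 < q + 1
    · rw [ih x.2 (by omega) c b, mul_zero]
    · rw [L_coeff, dif_neg hx1, zero_mul]

lemma Pc_high {t : ℕ} {d : ℤ} (hd : (t * q : ℕ) < d) : Pc p q t d = 0 := by
  rw [Pc, if_pos (by omega)]
  refine Matrix.ext fun a b => ?_
  rw [Matrix.of_apply]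
  exact pow_coeff_high p q t d.toNat (by omega) a b

lemma Pc_sub (t : ℕ) (c k : ℕ) (a b : Fin p) :
    Pc p q t ((c : ℤ) - (k : ℤ)) a b =
      if (k : ℕ) ≤ c then ((Lm p q ^ t) a b).coeff (c - k) else 0 := by
  by_cases h : k ≤ c
  · rw [Pc, if_pos (by omega), if_pos h, Matrix.of_apply]
    congr 1
    omega
  · rw [Pc, if_neg (by omega), if_neg h]
    rfl

lemma Cm_Pc_zero {t : ℕ} {d s : ℤ} (h : Pc p q t d = 0) : Cm p q t d s = 0 := by
  rw [Cm, h, zero_mul, mul_zero, sub_zero]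

lemma Cm_Em_zero {t : ℕ} {d s : ℤ} (h : Em p q s = 0) : Cm p q t d s = 0 := by
  rw [Cm, h, zero_mul, mul_zero, sub_zero]

lemma mul_coeff_right (t : ℕ) (c : ℕ) :
    ∑ s ∈ Finset.Icc (0 : ℤ) (q : ℤ), Pc p q t ((c : ℤ) - s) * Em p q s =
      Matrix.of (fun a b => ((Lm p q ^ t * Lm p q) a b).coeff c) := by
  rw [sum_Icc_fin]
  refine Matrix.ext fun a b => ?_
  simp only [Matrix.sum_apply, Matrix.mul_apply, Matrix.of_apply, finset_sum_coeff]
  rw [Finset.sum_comm]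
  refine Finset.sum_congr rfl fun c' _ => ?_
  rw [show Lm p q c' b = ∑ k : Fin (q + 1), Polynomial.C (MvPolynomial.X (c', b, k)) * Polynomial.X ^ (k : ℕ) from rfl]
  rw [Finset.mul_sum, finset_sum_coeff]
  refine Finset.sum_congr rfl fun k _ => ?_
  rw [Pc_sub, Em_in, Matrix.of_apply, ← mul_assoc, Polynomial.coeff_mul_X_pow',
    ite_mul, zero_mul]
  split_ifs with h
  · rw [Polynomial.coeff_mul_C]
  · rfl

lemma mul_coeff_left (t : ℕ) (c : ℕ) :
    ∑ s ∈ Finset.Icc (0 : ℤ) (q : ℤ), Em p q s * Pc p q t ((c : ℤ) - s) =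
      Matrix.of (fun a b => ((Lm p q * Lm p q ^ t) a b).coeff c) := by
  rw [sum_Icc_fin]
  refine Matrix.ext fun a b => ?_
  simp only [Matrix.sum_apply, Matrix.mul_apply, Matrix.of_apply, finset_sum_coeff]
  rw [Finset.sum_comm]
  refine Finset.sum_congr rfl fun c' _ => ?_
  rw [show Lm p q a c' = ∑ k : Fin (q + 1), Polynomial.C (MvPolynomial.X (a, c', k)) * Polynomial.X ^ (k : ℕ) from rfl]
  rw [Finset.sum_mul, finset_sum_coeff]
  refine Finset.sum_congr rfl fun k _ => ?_
  rw [Pc_sub, Em_in, Matrix.of_apply,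
    show Polynomial.C (MvPolynomial.X (a, c', k)) * Polynomial.X ^ (k : ℕ) * (Lm p q ^ t) c' b
       = (Lm p q ^ t) c' b * Polynomial.C (MvPolynomial.X (a, c', k)) * Polynomial.X ^ (k : ℕ) by ring,
    Polynomial.coeff_mul_X_pow', mul_ite, mul_zero]
  split_ifs with h
  · rw [Polynomial.coeff_mul_C, mul_comm]
  · rfl

lemma comm_sum (t : ℕ) (c : ℤ) :
    ∑ s ∈ Finset.Icc (0 : ℤ) (q : ℤ), Cm p q t (c - s) s = 0 := by
  rcases lt_or_ge c 0 with hc | hc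
  · apply Finset.sum_eq_zero
    intro s hs
    rw [Finset.mem_Icc] at hs
    exact Cm_Pc_zero p q (Pc_neg p q (by omega))
  · obtain ⟨cn, rfl⟩ : ∃ cn : ℕ, c = (cn : ℤ) := ⟨c.toNat, (Int.toNat_of_nonneg hc).symm⟩
    simp only [Cm]
    rw [Finset.sum_sub_distrib, mul_coeff_right, mul_coeff_left, ← pow_succ, ← pow_succ',
      sub_self]

lemma comm_sum_gen (t : ℕ) (c lo hi : ℤ)
    (hlo : ∀ s : ℤ, 0 ≤ s → s ≤ (q : ℤ) → s < lo → Cm p q t (c - s) s = 0)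
    (hhi : ∀ s : ℤ, 0 ≤ s → s ≤ (q : ℤ) → hi < s → Cm p q t (c - s) s = 0) :
    ∑ s ∈ Finset.Icc lo hi, Cm p q t (c - s) s = 0 := by
  have hEm : ∀ s : ℤ, s < 0 ∨ (q : ℤ) < s → Cm p q t (c - s) s = 0 := fun s hs =>
    Cm_Em_zero p q (Em_zero p q hs)
  have h1 : ∑ s ∈ Finset.Icc lo hi, Cm p q t (c - s) s
      = ∑ s ∈ Finset.Icc (min lo 0) (max hi (q : ℤ)), Cm p q t (c - s) s := by
    apply Finset.sum_subset
    · exact Finset.Icc_subset_Icc (min_le_left _ _) (le_max_left _ _)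
    · intro s hs hns
      rw [Finset.mem_Icc] at hs
      rw [Finset.mem_Icc] at hns
      push_neg at hns
      rcases lt_or_ge s 0 with h0 | h0
      · exact hEm s (Or.inl h0)
      · rcases le_or_gt s (q : ℤ) with hq' | hq'
        · rcases lt_or_ge s lo with hlo' | hlo'
          · exact hlo s h0 hq' hlo'
          · exact hhi s h0 hq' (by specialize hns hlo'; omega)
        · exact hEm s (Or.inr hq')
  have h2 : ∑ s ∈ Finset.Icc (0 : ℤ) (q : ℤ), Cm p q t (c - s) s
      = ∑ s ∈ Finset.Icc (min lo 0) (max hi (q : ℤ)), Cm p q t (c - s) s := by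
    apply Finset.sum_subset
    · exact Finset.Icc_subset_Icc (min_le_right _ _) (le_max_right _ _)
    · intro s hs hns
      rw [Finset.mem_Icc] at hns
      push_neg at hns
      apply hEm
      rcases lt_or_ge s 0 with h0 | h0
      · exact Or.inl h0
      · exact Or.inr (by specialize hns h0; omega)
  rw [h1, ← h2, comm_sum]

lemma eta_hi {μ a b : ℕ} (h1 : a < μ) (h2 : b < μ) : _root_.eta μ a b = 1 := by
  unfold _root_.eta; rw [if_pos ⟨h1, h2⟩]

lemma eta_lo {μ a b : ℕ} (h1 : μ ≤ a) (h2 : μ ≤ b) : _root_.eta μ a b = -1 := by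
  unfold _root_.eta; rw [if_neg (by omega), if_pos ⟨h1, h2⟩]

lemma eta_mixed {μ a b : ℕ} (h : (a < μ ∧ μ ≤ b) ∨ (μ ≤ a ∧ b < μ)) : _root_.eta μ a b = 0 := by
  unfold _root_.eta; rw [if_neg (by omega), if_neg (by omega)]

lemma key (μ : ℕ) (hμ : μ ≤ q + 1) (t : ℕ) (l : Fin (q + 1)) (j : ℕ)
    (hj : j < μ ∨ t * q + μ ≤ j) :
    ∑ k : Fin (q + 1), _root_.eta μ (l : ℕ) (k : ℕ) •
      Cm p q t ((j : ℤ) - ((k : ℕ) : ℤ)) (((l : ℕ) : ℤ) + ((k : ℕ) : ℤ) + 1 - (μ : ℤ)) = 0 := by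
  by_cases hl : (l : ℕ) < μ
  · rcases hj with hjμ | hjhi
    · -- case A : l < μ, j < μ
      have step1 : ∀ k : Fin (q + 1),
          _root_.eta μ (l : ℕ) (k : ℕ) • Cm p q t ((j : ℤ) - ((k : ℕ) : ℤ))
            (((l : ℕ) : ℤ) + ((k : ℕ) : ℤ) + 1 - (μ : ℤ))
          = Cm p q t ((j : ℤ) - ((k : ℕ) : ℤ))
            (((l : ℕ) : ℤ) + ((k : ℕ) : ℤ) + 1 - (μ : ℤ)) := by
        intro k
        by_cases hk : (k : ℕ) < μ
        · rw [eta_hi hl hk, one_smul]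
        · rw [eta_mixed (Or.inl ⟨hl, by omega⟩), zero_smul,
            Cm_Pc_zero p q (Pc_neg p q (by omega))]
      refine Eq.trans (Finset.sum_congr rfl fun k _ => step1 k) ?_
      refine Eq.trans (sum_Icc_fin q
        (fun s => Cm p q t ((j : ℤ) - s) (((l : ℕ) : ℤ) + s + 1 - (μ : ℤ)))).symm ?_
      have hcongr : ∀ s ∈ Finset.Icc (0 : ℤ) (q : ℤ),
          Cm p q t ((j : ℤ) - s) (((l : ℕ) : ℤ) + s + 1 - (μ : ℤ))
          = Cm p q t (((j : ℤ) + ((l : ℕ) : ℤ) + 1 - (μ : ℤ)) - (s + (((l : ℕ) : ℤ) + 1 - (μ : ℤ))))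
              (s + (((l : ℕ) : ℤ) + 1 - (μ : ℤ))) := by
        intro s _
        congr 1 <;> ring
      refine Eq.trans (Finset.sum_congr rfl hcongr) ?_
      refine Eq.trans (sum_Icc_shift
        (fun s' => Cm p q t (((j : ℤ) + ((l : ℕ) : ℤ) + 1 - (μ : ℤ)) - s') s')
        0 (q : ℤ) (((l : ℕ) : ℤ) + 1 - (μ : ℤ))) ?_
      rw [zero_add]
      apply comm_sum_gen
      · intro s h0 hsq hslo
        exact absurd hslo (by omega)
      · intro s h0 hsq hshi
        refine Cm_Pc_zero p q (Pc_neg p q ?_)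
        have hjq : j ≤ q := by omega
        omega
    · -- case B : l < μ, t*q + μ ≤ j : termwise zero
      apply Finset.sum_eq_zero
      intro k _
      by_cases hk : (k : ℕ) < μ
      · rw [Cm_Pc_zero p q (Pc_high p q (by push_cast; omega)), smul_zero]
      · rw [eta_mixed (Or.inl ⟨hl, by omega⟩), zero_smul]
  · rcases hj with hjμ | hjhi
    · -- case C : μ ≤ l, j < μ : termwise zero
      apply Finset.sum_eq_zero
      intro k _
      by_cases hk : (k : ℕ) < μ
      · rw [eta_mixed (Or.inr ⟨by omega, hk⟩), zero_smul]
      · rw [Cm_Pc_zero p q (Pc_neg p q (by omega)), smul_zero]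
    · -- case D : μ ≤ l, t*q + μ ≤ j
      have step1 : ∀ k : Fin (q + 1),
          _root_.eta μ (l : ℕ) (k : ℕ) • Cm p q t ((j : ℤ) - ((k : ℕ) : ℤ))
            (((l : ℕ) : ℤ) + ((k : ℕ) : ℤ) + 1 - (μ : ℤ))
          = - Cm p q t ((j : ℤ) - ((k : ℕ) : ℤ))
            (((l : ℕ) : ℤ) + ((k : ℕ) : ℤ) + 1 - (μ : ℤ)) := by
        intro k
        by_cases hk : (k : ℕ) < μ
        · rw [eta_mixed (Or.inr ⟨by omega, hk⟩), zero_smul,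
            Cm_Pc_zero p q (Pc_high p q (by push_cast; omega)), neg_zero]
        · rw [eta_lo (by omega) (by omega), neg_smul, one_smul]
      refine Eq.trans (Finset.sum_congr rfl fun k _ => step1 k) ?_
      rw [Finset.sum_neg_distrib, neg_eq_zero]
      refine Eq.trans (sum_Icc_fin q
        (fun s => Cm p q t ((j : ℤ) - s) (((l : ℕ) : ℤ) + s + 1 - (μ : ℤ)))).symm ?_
      have hcongr : ∀ s ∈ Finset.Icc (0 : ℤ) (q : ℤ),
          Cm p q t ((j : ℤ) - s) (((l : ℕ) : ℤ) + s + 1 - (μ : ℤ))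
          = Cm p q t (((j : ℤ) + ((l : ℕ) : ℤ) + 1 - (μ : ℤ)) - (s + (((l : ℕ) : ℤ) + 1 - (μ : ℤ))))
              (s + (((l : ℕ) : ℤ) + 1 - (μ : ℤ))) := by
        intro s _
        congr 1 <;> ring
      refine Eq.trans (Finset.sum_congr rfl hcongr) ?_
      refine Eq.trans (sum_Icc_shift
        (fun s' => Cm p q t (((j : ℤ) + ((l : ℕ) : ℤ) + 1 - (μ : ℤ)) - s') s')
        0 (q : ℤ) (((l : ℕ) : ℤ) + 1 - (μ : ℤ))) ?_
      rw [zero_add]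
      apply comm_sum_gen
      · intro s h0 hsq hslo
        refine Cm_Pc_zero p q (Pc_high p q ?_)
        push_cast
        omega
      · intro s h0 hsq hshi
        exact absurd hshi (by omega)

section Der
variable {R : Type} [CommRing R] (D : R →+ R)

noncomputable def dP (f : Polynomial R) : Polynomial R :=
  ⟨AddMonoidAlgebra.ofCoeff (f.toFinsupp.coeff.mapRange D (map_zero D))⟩

lemma dP_coeff (f : Polynomial R) (n : ℕ) : (dP D f).coeff n = D (f.coeff n) := rfl

lemma dP_sum {ι : Type*} (F : Finset ι) (f : ι → Polynomial R) :
    dP D (∑ x ∈ F, f x) = ∑ x ∈ F, dP D (f x) := by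
  ext n
  rw [dP_coeff, finset_sum_coeff, finset_sum_coeff, map_sum]
  exact Finset.sum_congr rfl fun x _ => (dP_coeff D (f x) n).symm

lemma dP_C_mul_X_pow (r : R) (k : ℕ) : dP D (C r * X ^ k) = C (D r) * X ^ k := by
  ext n
  rw [dP_coeff, coeff_C_mul, coeff_C_mul, coeff_X_pow]
  split_ifs with h <;> simp [coeff_X_pow, h]

lemma dP_mul (hD : ∀ a b : R, D (a * b) = D a * b + a * D b) (f g : Polynomial R) : dP D (f * g) = dP D f * g + f * dP D g := by
  ext n
  rw [dP_coeff, coeff_add, coeff_mul, coeff_mul, coeff_mul, map_sum, ← Finset.sum_add_distrib]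
  refine Finset.sum_congr rfl fun x _ => ?_
  rw [hD, dP_coeff, dP_coeff]

lemma dP_one (hD1 : D 1 = 0) : dP D 1 = 0 := by
  ext n
  rw [dP_coeff, coeff_one]
  split_ifs with h <;> simp [hD1]

variable {p : ℕ}

noncomputable def dM (A : Matrix (Fin p) (Fin p) (Polynomial R)) :
    Matrix (Fin p) (Fin p) (Polynomial R) :=
  Matrix.of fun a b => dP D (A a b)

lemma dM_mul (hD : ∀ a b : R, D (a * b) = D a * b + a * D b) (A B : Matrix (Fin p) (Fin p) (Polynomial R)) :
    dM D (A * B) = dM D A * B + A * dM D B := by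
  refine Matrix.ext fun a b => ?_
  simp only [dM, Matrix.of_apply, Matrix.add_apply, Matrix.mul_apply, dP_sum]
  rw [← Finset.sum_add_distrib]
  exact Finset.sum_congr rfl fun c _ => dP_mul D hD _ _

lemma dM_one (hD1 : D 1 = 0) : dM D (1 : Matrix (Fin p) (Fin p) (Polynomial R)) = 0 := by
  refine Matrix.ext fun a b => ?_
  simp only [dM, Matrix.of_apply, Matrix.one_apply, Matrix.zero_apply]
  split_ifs with h
  · exact dP_one D hD1
  · ext n; rw [dP_coeff]; simp

lemma trace_dM (A : Matrix (Fin p) (Fin p) (Polynomial R)) :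
    (dM D A).trace = dP D A.trace := by
  rw [Matrix.trace, Matrix.trace, dP_sum]
  rfl

lemma dM_pow (hD : ∀ a b : R, D (a * b) = D a * b + a * D b) (hD1 : D 1 = 0) (A : Matrix (Fin p) (Fin p) (Polynomial R)) :
    ∀ n : ℕ, dM D (A ^ n) = ∑ t ∈ Finset.range n, A ^ t * dM D A * A ^ (n - 1 - t) := by
  intro n
  induction n with
  | zero => rw [pow_zero, Finset.range_zero, Finset.sum_empty, dM_one D hD1]
  | succ n ih =>
    rw [pow_succ', dM_mul D hD, ih, Finset.mul_sum, Finset.sum_range_succ']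
    have h0 : A ^ 0 * dM D A * A ^ (n + 1 - 1 - 0) = dM D A * A ^ n := by
      rw [pow_zero, one_mul]
      norm_num
    rw [h0, add_comm]
    rw [add_left_inj]
    refine Finset.sum_congr rfl fun t ht => ?_
    rw [← mul_assoc, ← mul_assoc, ← pow_succ']
    congr 2
    omega

lemma trace_dM_pow (hD : ∀ a b : R, D (a * b) = D a * b + a * D b) (hD1 : D 1 = 0) (A : Matrix (Fin p) (Fin p) (Polynomial R)) (n : ℕ) :
    (dM D (A ^ (n + 1))).trace = (n + 1) • (A ^ n * dM D A).trace := by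
  rw [dM_pow D hD hD1 A (n + 1), Matrix.trace_sum]
  have : ∀ t ∈ Finset.range (n + 1),
      (A ^ t * dM D A * A ^ (n + 1 - 1 - t)).trace = (A ^ n * dM D A).trace := by
    intro t ht
    rw [Finset.mem_range] at ht
    rw [Matrix.trace_mul_comm, ← mul_assoc, ← pow_add]
    have he : n + 1 - 1 - t + t = n := by omega
    rw [he]
  rw [Finset.sum_congr rfl this, Finset.sum_const, Finset.card_range]

end Der

lemma gen_case (p q μ : ℕ) (hμ : μ ≤ q + 1)
    (br : RR p q →ₗ[ℂ] RR p q →ₗ[ℂ] RR p q)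
    (hbr2 : HasBracketValues p q μ br)
    (hLeib : ∀ f g h : RR p q, br f (g * h) = br f g * h + g * br f h)
    (i j : ℕ) (hj : j < μ ∨ i * q + μ ≤ j) (m n : Fin p) (l : Fin (q + 1)) :
    br (MvPolynomial.X (m, n, l)) ((Matrix.trace (Lm p q ^ (i + 1))).coeff j) = 0 := by
  set D : RR p q →+ RR p q := (br (MvPolynomial.X (m, n, l))).toAddMonoidHom with hDdef
  have hD : ∀ a b : RR p q, D (a * b) = D a * b + a * D b := fun a b =>
    hLeib (MvPolynomial.X (m, n, l)) a b
  have hD1 : D (1 : RR p q) = 0 := by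
    have h := hD 1 1
    simp only [one_mul, mul_one] at h
    exact (right_eq_add.mp h)
  have e1 : br (MvPolynomial.X (m, n, l)) ((Matrix.trace (Lm p q ^ (i + 1))).coeff j)
      = ((dM D (Lm p q ^ (i + 1))).trace).coeff j := by
    rw [trace_dM, dP_coeff]
    rfl
  rw [e1, trace_dM_pow D hD hD1, Polynomial.coeff_smul]
  suffices h : ((Lm p q ^ i * dM D (Lm p q)).trace).coeff j = 0 by rw [h, smul_zero]
  have e2 : ∀ a b : Fin p, ((Lm p q ^ i) a b * dP D (Lm p q b a)).coeff j
      = ∑ k : Fin (q + 1), Pc p q i ((j : ℤ) - ((k : ℕ) : ℤ)) a b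
          * D (MvPolynomial.X (b, a, k)) := by
    intro a b
    rw [show dP D (Lm p q b a) = ∑ k : Fin (q + 1),
        Polynomial.C (D (MvPolynomial.X (b, a, k))) * Polynomial.X ^ (k : ℕ) by
      rw [show Lm p q b a = ∑ k : Fin (q + 1),
        Polynomial.C (MvPolynomial.X (b, a, k)) * Polynomial.X ^ (k : ℕ) from rfl, dP_sum]
      exact Finset.sum_congr rfl fun k _ => dP_C_mul_X_pow D _ _]
    rw [Finset.mul_sum, finset_sum_coeff]
    refine Finset.sum_congr rfl fun k _ => ?_
    rw [← mul_assoc, Polynomial.coeff_mul_X_pow', Pc_sub]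
    split_ifs with h
    · rw [Polynomial.coeff_mul_C]
    · rw [zero_mul]
  have e3 : ((Lm p q ^ i * dM D (Lm p q)).trace).coeff j
      = ∑ a : Fin p, ∑ b : Fin p, ∑ k : Fin (q + 1),
          Pc p q i ((j : ℤ) - ((k : ℕ) : ℤ)) a b * D (MvPolynomial.X (b, a, k)) := by
    rw [Matrix.trace, finset_sum_coeff]
    refine Finset.sum_congr rfl fun a _ => ?_
    rw [Matrix.diag_apply, Matrix.mul_apply, finset_sum_coeff]
    exact Finset.sum_congr rfl fun b _ => e2 a b
  rw [e3]
  have hval : ∀ (a b : Fin p) (k : Fin (q + 1)),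
      D (MvPolynomial.X (b, a, k)) = eta μ (l : ℕ) (k : ℕ) •
        ((if a = m then ell p q b n (((l : ℕ) : ℤ) + ((k : ℕ) : ℤ) + 1 - (μ : ℤ)) else 0) -
         (if n = b then ell p q m a (((l : ℕ) : ℤ) + ((k : ℕ) : ℤ) + 1 - (μ : ℤ)) else 0)) :=
    fun a b k => hbr2 m n b a l k
  have e4 : ∀ k : Fin (q + 1),
      ∑ a : Fin p, ∑ b : Fin p, Pc p q i ((j : ℤ) - ((k : ℕ) : ℤ)) a b
          * D (MvPolynomial.X (b, a, k))
      = (eta μ (l : ℕ) (k : ℕ) • Cm p q i ((j : ℤ) - ((k : ℕ) : ℤ))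
          (((l : ℕ) : ℤ) + ((k : ℕ) : ℤ) + 1 - (μ : ℤ))) m n := by
    intro k
    rw [Matrix.smul_apply, Cm, Matrix.sub_apply]
    simp only [hval, mul_smul_comm]
    simp only [← Finset.smul_sum]
    congr 1
    simp only [mul_sub, Finset.sum_sub_distrib]
    congr 1
    · simp only [mul_ite, mul_zero]
      rw [Finset.sum_comm]
      simp only [Finset.sum_ite_eq', Finset.mem_univ, if_true]
      rw [Matrix.mul_apply]
      refine Finset.sum_congr rfl fun b _ => ?_
      rw [Em, Matrix.of_apply]
    · simp only [mul_ite, mul_zero]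
      simp only [Finset.sum_ite_eq, Finset.mem_univ, if_true]
      rw [Matrix.mul_apply]
      refine Finset.sum_congr rfl fun a _ => ?_
      rw [Em, Matrix.of_apply, mul_comm]
  rw [show (∑ a : Fin p, ∑ b : Fin p, ∑ k : Fin (q + 1),
        Pc p q i ((j : ℤ) - ((k : ℕ) : ℤ)) a b * D (MvPolynomial.X (b, a, k)))
      = ∑ k : Fin (q + 1), ∑ a : Fin p, ∑ b : Fin p,
        Pc p q i ((j : ℤ) - ((k : ℕ) : ℤ)) a b * D (MvPolynomial.X (b, a, k)) by
    calc ∑ a : Fin p, ∑ b : Fin p, ∑ k : Fin (q + 1),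
          Pc p q i ((j : ℤ) - ((k : ℕ) : ℤ)) a b * D (MvPolynomial.X (b, a, k))
        = ∑ a : Fin p, ∑ k : Fin (q + 1), ∑ b : Fin p,
          Pc p q i ((j : ℤ) - ((k : ℕ) : ℤ)) a b * D (MvPolynomial.X (b, a, k)) :=
          Finset.sum_congr rfl fun a _ => Finset.sum_comm
      _ = ∑ k : Fin (q + 1), ∑ a : Fin p, ∑ b : Fin p,
          Pc p q i ((j : ℤ) - ((k : ℕ) : ℤ)) a b * D (MvPolynomial.X (b, a, k)) :=
          Finset.sum_comm]
  rw [Finset.sum_congr rfl fun k _ => e4 k]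
  have hms : ∑ k : Fin (q + 1), (_root_.eta μ (l : ℕ) (k : ℕ) • Cm p q i ((j : ℤ) - ((k : ℕ) : ℤ))
        (((l : ℕ) : ℤ) + ((k : ℕ) : ℤ) + 1 - (μ : ℤ))) m n
      = (∑ k : Fin (q + 1), _root_.eta μ (l : ℕ) (k : ℕ) • Cm p q i ((j : ℤ) - ((k : ℕ) : ℤ))
        (((l : ℕ) : ℤ) + ((k : ℕ) : ℤ) + 1 - (μ : ℤ))) m n := by
    rw [Matrix.sum_apply]
  rw [hms, key p q μ hμ i l j hj]
  rfl

lemma casimir_of_gen (p q : ℕ) (br : RR p q →ₗ[ℂ] RR p q →ₗ[ℂ] RR p q)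
    (hLeib1 : ∀ f g h : RR p q, br (f * g) h = br f h * g + f * br g h)
    (H : RR p q) (hgen : ∀ v, br (MvPolynomial.X v) H = 0) :
    ∀ f : RR p q, br f H = 0 := by
  intro f
  induction f using MvPolynomial.induction_on with
  | C a =>
    have h1 : br (1 : RR p q) H = 0 := by
      have h := hLeib1 1 1 H
      rw [one_mul, mul_one, one_mul] at h
      exact (right_eq_add.mp h)
    have h2 : (MvPolynomial.C a : RR p q) = a • (1 : RR p q) := by
      rw [MvPolynomial.smul_eq_C_mul, mul_one]
    rw [h2, _root_.map_smul, LinearMap.smul_apply, h1, smul_zero]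
  | add f g hf hg => rw [map_add, LinearMap.add_apply, hf, hg, add_zero]
  | mul_X f v hf => rw [hLeib1, hf, hgen, mul_zero, zero_mul, add_zero]

end Stmt16

/-- Casimirs: `H_{i,j}` is a Casimir of `{·,·}_μ` for `j ∈ {0,…,μ−1} ∪ {iq+μ,…,(i+1)q}`. -/
theorem stmt_16 (p q : ℕ) (hp : 2 ≤ p) (hq : 1 ≤ q) (μ : ℕ) (hμ : μ ≤ q + 1)
    (br : RR p q →ₗ[ℂ] RR p q →ₗ[ℂ] RR p q)
    (hbr : IsPoissonBracket br ∧ HasBracketValues p q μ br)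
    (i j : ℕ) (hj : j < μ ∨ (i * q + μ ≤ j ∧ j ≤ (i + 1) * q)) :
    let Lmat : Matrix (Fin p) (Fin p) (Polynomial (RR p q)) :=
      Matrix.of fun a b => ∑ k : Fin (q + 1),
        Polynomial.C (MvPolynomial.X (a, b, k)) * Polynomial.X ^ (k : ℕ)
    let H : RR p q :=
      (((i : ℂ) + 1)⁻¹) • (Matrix.trace (Lmat ^ (i + 1))).coeff j
    ∀ f : RR p q, br f H = 0 := by
  intro Lmat H f
  have hj' : j < μ ∨ i * q + μ ≤ j := hj.imp id And.left
  have hgen : ∀ v : Fin p × Fin p × Fin (q + 1),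
      br (MvPolynomial.X v) ((Matrix.trace (Stmt16.Lm p q ^ (i + 1))).coeff j) = 0 :=
    fun ⟨m, n, l⟩ => Stmt16.gen_case p q μ hμ br hbr.2 hbr.1.2.2.1 i j hj' m n l
  have hT : ∀ g : RR p q,
      br g ((Matrix.trace (Stmt16.Lm p q ^ (i + 1))).coeff j) = 0 :=
    Stmt16.casimir_of_gen p q br hbr.1.2.1 _ hgen
  show br f ((((i : ℂ) + 1)⁻¹) • (Matrix.trace (Stmt16.Lm p q ^ (i + 1))).coeff j) = 0
  rw [_root_.map_smul, hT f, smul_zero]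
end

section
/- Let p be a prime number and let F ⊆ K be fields containing ℂ as a subfield, such that K/F is a Galois extension of degree p with Galois group T. The group T acts on the quotient group K*/ℂ* (K* and ℂ* the multiplicative groups). Then the cokernel of the natural map F*/ℂ* → (K*/ℂ*)^T — that is, the quotient of the subgroup of T-invariant elements of K*/ℂ* by the image of F*/ℂ* — is a cyclic group of order p. -/
/-- Let `K/F` be Galois of prime degree `p`, with `ℂ ⊆ F`. The cokernel of the natural
map `F*/ℂ* → (K*/ℂ*)^T` (with `T = Gal(K/F)`) is cyclic of order `p`. Here the
invariants `(K*/ℂ*)^T` correspond to the subgroup `A ≤ K*` of elements `x` with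
`σ(x)/x ∈ ℂ*` for all `σ ∈ T`, and the cokernel is realized as the image of `A` in
`K*/B`, where `B ≤ K*` is generated by `F*` and `ℂ*`. -/
theorem stmt_18 (p : ℕ) (hp : p.Prime) (F K : Type) [Field F] [Field K]
    [Algebra ℂ F] [Algebra F K] [Algebra ℂ K] [IsScalarTower ℂ F K]
    [IsGalois F K] (hdeg : Module.finrank F K = p) :
    let S : Subgroup Kˣ := (Units.map (algebraMap ℂ K : ℂ →* K)).range
    let A : Subgroup Kˣ :=
      ⨅ σ : K ≃ₐ[F] K, S.comap ((Units.map (σ : K →* K)) / MonoidHom.id Kˣ)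
    let B : Subgroup Kˣ := S ⊔ (Units.map (algebraMap F K : F →* K)).range
    IsCyclic ↥(A.map (QuotientGroup.mk' B)) ∧
      Nat.card ↥(A.map (QuotientGroup.mk' B)) = p := by
  intro S A B
  haveI : Fact p.Prime := ⟨hp⟩
  haveI : NeZero p := ⟨hp.ne_zero⟩
  haveI hFD : FiniteDimensional F K :=
    Module.finite_of_finrank_pos (hdeg ▸ hp.pos)
  have hcardT : Nat.card (K ≃ₐ[F] K) = p := by
    rw [IsGalois.card_aut_eq_finrank, hdeg]
  -- a primitive `p`-th root of unity in `ℂ`, and its image in `K`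
  obtain ⟨ζC, hζC⟩ : ∃ z : ℂ, IsPrimitiveRoot z p :=
    ⟨_, Complex.isPrimitiveRoot_exp p hp.ne_zero⟩
  have hζK : IsPrimitiveRoot (algebraMap ℂ K ζC) p :=
    hζC.map_of_injective (algebraMap ℂ K).injective
  have hζC0 : ζC ≠ 0 := hζC.ne_zero hp.ne_zero
  -- all `p`-th roots of unity in `Kˣ` lie in `S`
  have memS : ∀ v : Kˣ, v ^ p = 1 → v ∈ S := by
    intro v hv
    have hv' : (v : K) ^ p = 1 := by
      have := congrArg Units.val hv
      simpa using this
    obtain ⟨i, -, hi⟩ := hζK.eq_pow_of_pow_eq_one hv'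
    refine ⟨(Units.mk0 ζC hζC0) ^ i, ?_⟩
    ext
    simpa using hi
  -- elements of `S` are fixed by the Galois group
  have hfixS : ∀ (τ : K ≃ₐ[F] K) (y : Kˣ), y ∈ S → τ (y : K) = y := by
    rintro τ y ⟨c, rfl⟩
    simp only [Units.coe_map, MonoidHom.coe_coe]
    rw [IsScalarTower.algebraMap_apply ℂ F K, AlgEquiv.commutes]
  -- elements of `B` are fixed by the Galois group
  have hker : ∀ τ : K ≃ₐ[F] K, B ≤ ((Units.map (τ : K →* K)) / MonoidHom.id Kˣ).ker := by
    intro τ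
    rw [sup_le_iff]
    constructor
    · intro y hy
      rw [MonoidHom.mem_ker, MonoidHom.div_apply, div_eq_one]
      ext
      simpa using hfixS τ y hy
    · rintro y ⟨w, rfl⟩
      rw [MonoidHom.mem_ker, MonoidHom.div_apply, div_eq_one]
      ext
      simp
  -- the telescoping lemma
  have key : ∀ (τ : K ≃ₐ[F] K) (x u : Kˣ), τ (x : K) = (u : K) * x → τ (u : K) = u →
      ∀ n : ℕ, (τ ^ n) (x : K) = (u : K) ^ n * x := by
    intro τ x u hx hu n
    induction n with
    | zero => simp
    | succ n ih =>
      rw [pow_succ', AlgEquiv.mul_apply, ih, map_mul, map_pow, hu, hx, pow_succ']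
      ring
  -- a generator of the Galois group
  haveI : Nontrivial (K ≃ₐ[F] K) := by
    have h1 : Fintype.card (K ≃ₐ[F] K) = p := by rw [← Nat.card_eq_fintype_card, hcardT]
    exact Fintype.one_lt_card_iff_nontrivial.mp (h1 ▸ hp.one_lt)
  obtain ⟨σ, hσ1⟩ := exists_ne (1 : K ≃ₐ[F] K)
  have hgen : ∀ τ : K ≃ₐ[F] K, ∃ n : ℕ, σ ^ n = τ := by
    intro τ
    have h1 : τ ∈ Subgroup.zpowers σ := by
      rw [zpowers_eq_top_of_prime_card hcardT hσ1]
      trivial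
    exact mem_powers_iff_mem_zpowers.mpr h1
  have hτp : ∀ τ : K ≃ₐ[F] K, τ ^ p = 1 := fun τ => hcardT ▸ pow_card_eq_one'
  -- a character of the Galois group with values roots of unity in `Kˣ`
  haveI : IsCyclic (K ≃ₐ[F] K) := isCyclic_of_prime_card hcardT
  letI : CommGroup (K ≃ₐ[F] K) := IsCyclic.commGroup
  have hexp : Monoid.exponent (K ≃ₐ[F] K) = p := by
    rw [IsCyclic.exponent_eq_card, hcardT]
  haveI hheu : HasEnoughRootsOfUnity K p := ⟨⟨_, hζK⟩, inferInstance⟩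
  haveI : HasEnoughRootsOfUnity K (Monoid.exponent (K ≃ₐ[F] K)) := hexp ▸ hheu
  obtain ⟨χ, hχσ⟩ :=
    CommGroup.exists_apply_ne_one_of_hasEnoughRootsOfUnity (K ≃ₐ[F] K) K hσ1
  have hχp : ∀ τ, (χ τ) ^ p = 1 := fun τ => by rw [← map_pow, hτp, map_one]
  have hχS : ∀ τ, χ τ ∈ S := fun τ => memS _ (hχp τ)
  have hχfix : ∀ τ g : K ≃ₐ[F] K, g • (χ τ) = χ τ := by
    intro τ g
    rw [AlgEquiv.smul_units_def]
    ext
    simpa using hfixS g _ (hχS τ)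
  -- Hilbert 90 gives an element `β` with `τ(β)/β = χ τ`
  have hcoc : groupCohomology.IsMulCocycle₁ (fun τ => χ τ) := by
    intro g h
    show χ (g * h) = g • χ h * χ g
    rw [hχfix h g, map_mul, mul_comm]
  obtain ⟨β, hβ⟩ :=
    groupCohomology.isMulCoboundary₁_of_isMulCocycle₁_of_aut_to_units _ hcoc
  have hβ' : ∀ g : K ≃ₐ[F] K, Units.map (g : K →* K) β / β = χ g := by
    intro g
    have := hβ g
    rwa [AlgEquiv.smul_units_def] at this
  -- membership criteria for `A`
  have memA : ∀ x : Kˣ, (∀ τ : K ≃ₐ[F] K, Units.map (τ : K →* K) x / x ∈ S) → x ∈ A := by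
    intro x hx
    exact Subgroup.mem_iInf.mpr fun τ => Subgroup.mem_comap.mpr (hx τ)
  have memA' : ∀ x : Kˣ, x ∈ A → ∀ τ : K ≃ₐ[F] K, Units.map (τ : K →* K) x / x ∈ S :=
    fun x hx τ => Subgroup.mem_comap.mp (Subgroup.mem_iInf.mp hx τ)
  have hβA : β ∈ A := memA β fun τ => by rw [hβ' τ]; exact hχS τ
  -- the homomorphism realizing the cokernel inside `Kˣ`
  set gσ : Kˣ →* Kˣ := (Units.map (σ : K →* K)) / MonoidHom.id Kˣ with hgσ
  have hBk : B ≤ gσ.ker := hker σ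
  set C := A.map (QuotientGroup.mk' B) with hC
  let f : (Kˣ ⧸ B) →* Kˣ := QuotientGroup.lift B gσ hBk
  let h : C →* Kˣ := f.comp (Subgroup.subtype C)
  have hval : ∀ (x : Kˣ) (hx : x ∈ A),
      h ⟨QuotientGroup.mk' B x, Subgroup.mem_map_of_mem _ hx⟩ = gσ x := fun x hx => rfl
  -- `gσ` maps `A` into the `p`-th roots of unity
  have hApow : ∀ x : Kˣ, x ∈ A → gσ x ^ p = 1 := by
    intro x hx
    have hu : Units.map (σ : K →* K) x / x ∈ S := memA' x hx σ
    set u : Kˣ := Units.map (σ : K →* K) x / x with hu'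
    have hux : Units.map (σ : K →* K) x = u * x := by
      rw [hu', div_mul_cancel]
    have hx1 : σ (x : K) = (u : K) * x := by
      have := congrArg Units.val hux
      simpa using this
    have hufix : σ (u : K) = u := hfixS σ u hu
    have hkey := key σ x u hx1 hufix p
    rw [hτp σ] at hkey
    simp only [AlgEquiv.one_apply] at hkey
    have hup : (u : K) ^ p = 1 := by
      have h5 : (u : K) ^ p * (x : K) = 1 * (x : K) := by rw [one_mul, ← hkey]
      exact mul_right_cancel₀ x.ne_zero h5
    have : gσ x = u := rfl
    rw [this]
    ext
    simpa using hup
  have hmem : ∀ c : ↥C, h c ∈ rootsOfUnity p K := by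
    rintro ⟨c, hc⟩
    obtain ⟨x, hxA, hxc⟩ := Subgroup.mem_map.mp hc
    subst hxc
    have h6 : h ⟨(QuotientGroup.mk' B) x, hc⟩ = gσ x := rfl
    rw [mem_rootsOfUnity, h6]
    exact hApow x hxA
  -- `h` is injective
  have hinj : Function.Injective h := by
    rw [injective_iff_map_eq_one]
    rintro ⟨c, hc⟩ hc1
    obtain ⟨x, hxA, hxc⟩ := Subgroup.mem_map.mp hc
    subst hxc
    have hgx : gσ x = 1 := by
      have h6 : h ⟨(QuotientGroup.mk' B) x, hc⟩ = gσ x := rfl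
      rwa [h6] at hc1
    have hσx : σ (x : K) = x := by
      have h2 : Units.map (σ : K →* K) x = x := by
        rwa [hgσ, MonoidHom.div_apply, MonoidHom.id_apply, div_eq_one] at hgx
      have := congrArg Units.val h2
      simpa using this
    have hall : ∀ τ : K ≃ₐ[F] K, τ (x : K) = x := by
      intro τ
      obtain ⟨n, rfl⟩ := hgen τ
      have := key σ x 1 (by simpa using hσx) (by simp) n
      simpa using this
    have hx2 : (x : K) ∈ IntermediateField.fixedField (⊤ : Subgroup (K ≃ₐ[F] K)) :=
      fun g => hall g.1
    rw [← IntermediateField.fixingSubgroup_bot (F := F) (E := K),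
      IsGalois.fixedField_fixingSubgroup] at hx2
    obtain ⟨a, ha⟩ := IntermediateField.mem_bot.mp hx2
    have ha0 : a ≠ 0 := by
      rintro rfl
      rw [map_zero] at ha
      exact x.ne_zero ha.symm
    have hxB : x ∈ B :=
      Subgroup.mem_sup_right ⟨Units.mk0 a ha0, Units.ext (by simpa using ha)⟩
    exact Subtype.ext ((QuotientGroup.eq_one_iff x).mpr hxB)
  -- an element of order `p` in the cokernel
  have hhcβ : h ⟨QuotientGroup.mk' B β, Subgroup.mem_map_of_mem _ hβA⟩ = χ σ := by
    rw [hval β hβA]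
    have : gσ β = Units.map (σ : K →* K) β / β := rfl
    rw [this, hβ' σ]
  have hordβ : orderOf (⟨QuotientGroup.mk' B β, Subgroup.mem_map_of_mem _ hβA⟩ : ↥C) = p := by
    rw [← orderOf_injective h hinj, hhcβ]
    exact orderOf_eq_prime (hχp σ) hχσ
  have hdvd1 : p ∣ Nat.card ↥C := hordβ ▸ orderOf_dvd_natCard _
  -- the cokernel injects into the `p`-th roots of unity
  let h' : ↥C →* ↥(rootsOfUnity p K) := h.codRestrict _ hmem
  have hinj' : Function.Injective h' := fun a b hab => hinj (congrArg Subtype.val hab)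
  haveI : Finite ↥C := Finite.of_injective h' hinj'
  have hdvd2 : Nat.card ↥C ∣ p := by
    have e := MonoidHom.ofInjective hinj'
    have h3 : Nat.card ↥C = Nat.card h'.range := Nat.card_congr e.toEquiv
    rw [h3]
    have h5 : Nat.card ↥(rootsOfUnity p K) = p := by
      rw [hζK.card_rootsOfUnity]
    exact (Subgroup.card_subgroup_dvd_card h'.range).trans (dvd_of_eq h5)
  have hcc : Nat.card ↥C = p := Nat.dvd_antisymm hdvd2 hdvd1
  exact ⟨isCyclic_of_prime_card hcc, hcc⟩
end

section
/- Let p be a prime number and let T be a group of order p acting on a set X; since p is prime, every T-orbit in X has either 1 or p elements. Let Y = X/T be the set of orbits with projection π : X → Y, let B ⊆ X be the set of fixed points of the action, and assume B is finite with |B| = N. Let Div(X) and Div(Y) be the free abelian groups on X and Y, with T acting on Div(X) by permuting basis elements, and define the pullback homomorphism f* : Div(Y) → Div(X) on basis elements by f*(π(x)) = Σ_{z ∈ T·x} z if the orbit T·x has p elements, and f*(π(x)) = p·x if x ∈ B. Then f* takes values in the subgroup Div(X)^T of T-invariant divisors, and the cokernel of f* : Div(Y) → Div(X)^T is isomorphic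 to (ℤ/pℤ)^N. -/
open scoped BigOperators

/-- Let `T` be a group of prime order `p` acting on a set `X`, with set of fixed
points `B` finite of cardinality `N`, and let `Y = X/T`. The pullback map
`f* : Div(Y) → Div(X)` (sending an orbit to the sum of its points with multiplicity,
i.e. a free orbit to the sum of its `p` points and a fixed point `x` to `p·x`) takes
values in the `T`-invariant divisors, and the cokernel of `f* : Div(Y) → Div(X)^T` is
isomorphic to `(ℤ/pℤ)^N`. -/
theorem stmt_19 (p N : ℕ) (hp : p.Prime) (T : Type) [Group T] [Fintype T]
    (hT : Nat.card T = p) (X : Type) [MulAction T X]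
    (hB : {x : X | ∀ t : T, t • x = x}.Finite)
    (hN : Nat.card {x : X | ∀ t : T, t • x = x} = N)
    (f : (Quotient (MulAction.orbitRel T X) →₀ ℤ) →+ (X →₀ ℤ))
    (hf : ∀ x : X,
      ((∀ t : T, t • x = x) →
        f (Finsupp.single (Quotient.mk (MulAction.orbitRel T X) x) 1) =
          p • Finsupp.single x 1) ∧
      ((¬ ∀ t : T, t • x = x) →
        f (Finsupp.single (Quotient.mk (MulAction.orbitRel T X) x) 1) =
          ∑ t : T, Finsupp.single (t • x) 1))
    (Inv : AddSubgroup (X →₀ ℤ))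
    (hInv : ∀ d : X →₀ ℤ, d ∈ Inv ↔
      ∀ t : T, Finsupp.equivMapDomain (MulAction.toPerm t) d = d) :
    (∀ y, f y ∈ Inv) ∧
      Nonempty ((↥Inv ⧸ ((AddMonoidHom.range f).addSubgroupOf Inv)) ≃+
        (Fin N → ZMod p)) := by
  classical
  haveI : NeZero p := ⟨hp.pos.ne'⟩
  -- Invariance characterization
  have hInv' : ∀ d : X →₀ ℤ, d ∈ Inv ↔ ∀ (t : T) (z : X), d (t • z) = d z := by
    intro d
    rw [hInv d]
    constructor
    · intro h t z
      have h1 := Finsupp.ext_iff.mp (h t⁻¹) z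
      rw [Finsupp.equivMapDomain_apply, MulAction.toPerm_symm_apply, inv_inv] at h1
      exact h1
    · intro h t
      ext z
      rw [Finsupp.equivMapDomain_apply, MulAction.toPerm_symm_apply]
      exact h t⁻¹ z
  -- fixed point implication
  have hfix : ∀ (b : X), (∀ t : T, t • b = b) → ∀ (t : T) (z : X), b = t • z → b = z := by
    intro b hb t z h
    have : t⁻¹ • b = z := by rw [h, inv_smul_smul]
    rw [hb t⁻¹] at this
    exact this
  -- a point in the orbit of a non-fixed point is not fixed
  have horb : ∀ (x : X), (¬ ∀ t : T, t • x = x) → ∀ (b : X), (∀ t : T, t • b = b) →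
      ∀ t : T, t • x ≠ b := by
    intro x hx b hb t h
    exact hx (by
      have : x = b := by
        have : t⁻¹ • b = x := by rw [← h, inv_smul_smul]
        rw [hb t⁻¹] at this; exact this.symm
      intro s; rw [this, hb s])
  -- f of a single basis element lies in Inv
  have hsingleInv : ∀ x : X,
      f (Finsupp.single (Quotient.mk (MulAction.orbitRel T X) x) 1) ∈ Inv := by
    intro x
    by_cases hx : ∀ t : T, t • x = x
    · rw [(hf x).1 hx, hInv' _]
      intro t z
      have key : (x = t • z) ↔ (x = z) :=
        ⟨fun hc => hfix x hx t z hc, fun hc => by subst hc; exact (hx t).symm⟩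
      rw [Finsupp.smul_apply, Finsupp.smul_apply, Finsupp.single_apply,
        Finsupp.single_apply]
      simp [key]
    · rw [(hf x).2 hx, hInv' _]
      intro t z
      rw [Finsupp.finset_sum_apply, Finsupp.finset_sum_apply]
      refine Fintype.sum_equiv (Equiv.mulLeft t⁻¹) _ _ ?_
      intro s
      have key : (s • x = t • z) ↔ ((t⁻¹ * s) • x = z) := by
        rw [mul_smul]
        constructor
        · intro h; rw [h, inv_smul_smul]
        · intro h; rw [← h, smul_inv_smul]
      rw [Finsupp.single_apply, Finsupp.single_apply]
      simp only [Equiv.coe_mulLeft]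
      simp [key]
      exact if_congr Iff.rfl rfl rfl
  -- f maps into Inv
  have hfInv : ∀ g, f g ∈ Inv := by
    intro g
    induction g using Finsupp.induction with
    | zero => rw [map_zero]; exact Inv.zero_mem
    | single_add a b g _ _ ih =>
      rw [map_add]
      refine Inv.add_mem ?_ ih
      have hsb : Finsupp.single a b = b • Finsupp.single a (1 : ℤ) := by
        rw [Finsupp.smul_single, smul_eq_mul, mul_one]
      rw [hsb, map_zsmul]
      obtain ⟨x, rfl⟩ := Quotient.exists_rep a
      exact Inv.zsmul_mem (hsingleInv x) b
  -- injectivity of t ↦ t • x for non-fixed x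
  have hinj : ∀ x : X, (¬ ∀ t : T, t • x = x) → ∀ s t : T, s • x = t • x → s = t := by
    intro x hx s t h
    have hst : t⁻¹ * s ∈ MulAction.stabilizer T x := by
      rw [MulAction.mem_stabilizer_iff, mul_smul, h, inv_smul_smul]
    have hdvd := Subgroup.card_subgroup_dvd_card (MulAction.stabilizer T x)
    rw [hT] at hdvd
    rcases hp.eq_one_or_self_of_dvd _ hdvd with h1 | h2
    · have := Subgroup.card_eq_one.mp h1
      rw [this, Subgroup.mem_bot] at hst
      have : s = t := by
        have := congrArg (t * ·) hst
        simpa [mul_assoc] using this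
      exact this
    · exfalso
      apply hx
      have htop : MulAction.stabilizer T x = ⊤ :=
        Subgroup.eq_top_of_card_eq _ (by rw [h2, hT])
      intro t
      have : t ∈ MulAction.stabilizer T x := htop ▸ Subgroup.mem_top t
      exact this
  -- value of f on a free-orbit single
  have hFval : ∀ x : X, (¬ ∀ t : T, t • x = x) → ∀ z : X,
      (f (Finsupp.single (Quotient.mk (MulAction.orbitRel T X) x) 1)) z =
        if z ∈ MulAction.orbit T x then 1 else 0 := by
    intro x hx z
    rw [(hf x).2 hx, Finsupp.finset_sum_apply]
    by_cases hz : z ∈ MulAction.orbit T x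
    · obtain ⟨t₀, ht₀⟩ := MulAction.mem_orbit_iff.mp hz
      rw [if_pos hz]
      rw [Finset.sum_eq_single t₀ (fun t _ ht => by
        rw [Finsupp.single_apply, if_neg]
        intro hc
        exact ht (hinj x hx t t₀ (by rw [hc, ht₀]))) (fun h => absurd (Finset.mem_univ t₀) h)]
      rw [Finsupp.single_apply, if_pos ht₀]
    · rw [if_neg hz]
      refine Finset.sum_eq_zero (fun t _ => ?_)
      rw [Finsupp.single_apply, if_neg]
      intro hc
      exact hz (MulAction.mem_orbit_iff.mpr ⟨t, hc⟩)
  -- value of f on a fixed-point single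
  have hGval : ∀ x : X, (∀ t : T, t • x = x) →
      f (Finsupp.single (Quotient.mk (MulAction.orbitRel T X) x) 1) =
        Finsupp.single x (p : ℤ) := by
    intro x hx
    rw [(hf x).1 hx]
    ext z
    rw [Finsupp.smul_apply, Finsupp.single_apply, Finsupp.single_apply]
    by_cases h : x = z
    · rw [if_pos h, if_pos h]; simp
    · rw [if_neg h, if_neg h]; simp
  -- single with coefficient
  have hsmul : ∀ (a : Quotient (MulAction.orbitRel T X)) (c : ℤ),
      f (Finsupp.single a c) = c • f (Finsupp.single a 1) := by
    intro a c
    have hsb : Finsupp.single a c = c • Finsupp.single a (1 : ℤ) := by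
      rw [Finsupp.smul_single, smul_eq_mul, mul_one]
    rw [hsb, map_zsmul]
  -- f values at fixed points are divisible by p
  have hdvdfix : ∀ (g) (b : X), (∀ t : T, t • b = b) → (p : ℤ) ∣ (f g) b := by
    intro g b hb
    induction g using Finsupp.induction with
    | zero => rw [map_zero]; exact dvd_zero _
    | single_add a c g _ _ ih =>
      rw [map_add, Finsupp.add_apply]
      refine dvd_add ?_ ih
      obtain ⟨x, rfl⟩ := Quotient.exists_rep a
      rw [hsmul, Finsupp.smul_apply]
      by_cases hx : ∀ t : T, t • x = x
      · rw [hGval x hx, Finsupp.single_apply]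
        by_cases h : x = b
        · rw [if_pos h]; exact Dvd.dvd.mul_left dvd_rfl c
        · rw [if_neg h]; simp
      · rw [hFval x hx b, if_neg]
        · simp
        · intro hc
          obtain ⟨t, ht⟩ := MulAction.mem_orbit_iff.mp hc
          exact horb x hx b hb t ht
  -- main: invariant divisors divisible at fixed points are in the range of f
  have main : ∀ n (d : X →₀ ℤ), d.support.card = n → d ∈ Inv →
      (∀ b : X, (∀ t : T, t • b = b) → (p : ℤ) ∣ d b) → ∃ g, f g = d := by
    intro n
    induction n using Nat.strong_induction_on with
    | _ n IH =>
      intro d hdcard hdInv hdvd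
      rcases Finset.eq_empty_or_nonempty d.support with hs | ⟨x, hx⟩
      · exact ⟨0, by rw [map_zero]; exact (Finsupp.support_eq_empty.mp hs).symm⟩
      have hdx : d x ≠ 0 := Finsupp.mem_support_iff.mp hx
      by_cases hxf : ∀ t : T, t • x = x
      · -- x is a fixed point
        obtain ⟨c, hc⟩ := hdvd x hxf
        have hfc : f (Finsupp.single (Quotient.mk (MulAction.orbitRel T X) x) c) =
            Finsupp.single x (d x) := by
          rw [hsmul, hGval x hxf, Finsupp.smul_single', hc, mul_comm]
        set d' := d - Finsupp.single x (d x) with hd'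
        have hd'val : ∀ z, d' z = if x = z then 0 else d z := by
          intro z
          rw [hd', Finsupp.sub_apply, Finsupp.single_apply]
          by_cases h : x = z
          · rw [if_pos h, if_pos h, h, sub_self]
          · rw [if_neg h, if_neg h, sub_zero]
        have hsub : d'.support ⊆ d.support.erase x := by
          intro z hz
          rw [Finsupp.mem_support_iff, hd'val] at hz
          rcases eq_or_ne x z with h | h
          · exact absurd (if_pos h) hz
          · rw [if_neg h] at hz
            exact Finset.mem_erase.mpr ⟨h.symm, Finsupp.mem_support_iff.mpr hz⟩
        have hlt : d'.support.card < n := by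
          calc d'.support.card ≤ (d.support.erase x).card := Finset.card_le_card hsub
          _ < d.support.card := Finset.card_erase_lt_of_mem hx
          _ = n := hdcard
        obtain ⟨g, hg⟩ := IH _ hlt d' rfl
          (Inv.sub_mem hdInv (hfc ▸ hfInv _))
          (by
            intro b hb
            rw [hd'val]
            by_cases h : x = b
            · rw [if_pos h]; exact dvd_zero _
            · rw [if_neg h]; exact hdvd b hb)
        refine ⟨g + Finsupp.single (Quotient.mk (MulAction.orbitRel T X) x) c, ?_⟩
        rw [map_add, hg, hfc, hd', sub_add_cancel]
      · -- x has a free orbit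
        set c := d x with hcdef
        have hfc : f (Finsupp.single (Quotient.mk (MulAction.orbitRel T X) x) c) =
            c • f (Finsupp.single (Quotient.mk (MulAction.orbitRel T X) x) 1) := hsmul _ c
        set F := f (Finsupp.single (Quotient.mk (MulAction.orbitRel T X) x) 1) with hFdef
        set d' := d - c • F with hd'
        have hdorb : ∀ z ∈ MulAction.orbit T x, d z = c := by
          intro z hz
          obtain ⟨t, ht⟩ := MulAction.mem_orbit_iff.mp hz
          rw [← ht, (hInv' d).mp hdInv t x, hcdef]
        have hd'val : ∀ z, d' z = if z ∈ MulAction.orbit T x then 0 else d z := by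
          intro z
          rw [hd', Finsupp.sub_apply, Finsupp.smul_apply, hFval x hxf z]
          by_cases h : z ∈ MulAction.orbit T x
          · rw [if_pos h, if_pos h, smul_eq_mul, mul_one, hdorb z h, sub_self]
          · rw [if_neg h, if_neg h, smul_eq_mul, mul_zero, sub_zero]
        have hsub : d'.support ⊆ d.support.erase x := by
          intro z hz
          rw [Finsupp.mem_support_iff, hd'val] at hz
          by_cases h : z ∈ MulAction.orbit T x
          · exact absurd (if_pos h) hz
          · rw [if_neg h] at hz
            refine Finset.mem_erase.mpr ⟨?_, Finsupp.mem_support_iff.mpr hz⟩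
            intro hzx
            exact h (by rw [hzx]; exact MulAction.mem_orbit_self x)
        have hlt : d'.support.card < n := by
          calc d'.support.card ≤ (d.support.erase x).card := Finset.card_le_card hsub
          _ < d.support.card := Finset.card_erase_lt_of_mem hx
          _ = n := hdcard
        obtain ⟨g, hg⟩ := IH _ hlt d' rfl
          (Inv.sub_mem hdInv (by rw [← hfc] at *; exact hfc ▸ hfInv _))
          (by
            intro b hb
            rw [hd'val, if_neg]
            · exact hdvd b hb
            · intro hc2
              obtain ⟨t, ht⟩ := MulAction.mem_orbit_iff.mp hc2
              exact horb x hxf b hb t ht)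
        refine ⟨g + Finsupp.single (Quotient.mk (MulAction.orbitRel T X) x) c, ?_⟩
        rw [map_add, hg, hfc, hd', sub_add_cancel]
  -- set up the equivalence of fixed points with Fin N
  haveI : Fintype {x : X | ∀ t : T, t • x = x} := hB.fintype
  have hcard : Fintype.card {x : X | ∀ t : T, t • x = x} = N := by
    rw [← Nat.card_eq_fintype_card]; exact hN
  let e : {x : X | ∀ t : T, t • x = x} ≃ Fin N := Fintype.equivFinOfCardEq hcard
  -- the quotient map ψ
  let ψ : ↥Inv →+ (Fin N → ZMod p) :=
    { toFun := fun d i => (((d : X →₀ ℤ) ((e.symm i : X)) : ℤ) : ZMod p)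
      map_zero' := by funext i; simp
      map_add' := by
        intro a b
        funext i
        simp [Finsupp.add_apply] }
  have hψ : ∀ (d : ↥Inv) (i : Fin N), ψ d i = (((d : X →₀ ℤ) ((e.symm i : X)) : ℤ) : ZMod p) :=
    fun _ _ => rfl
  -- ψ is surjective
  have hsurj : Function.Surjective ψ := by
    intro v
    set d : X →₀ ℤ := ∑ i : Fin N, Finsupp.single ((e.symm i : X)) ((v i).val : ℤ) with hd
    have hdInv : d ∈ Inv := by
      rw [hInv' d]
      intro t z
      rw [hd, Finsupp.finset_sum_apply, Finsupp.finset_sum_apply]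
      refine Finset.sum_congr rfl (fun i _ => ?_)
      rw [Finsupp.single_apply, Finsupp.single_apply]
      have hbfix : ∀ s : T, s • ((e.symm i : X)) = (e.symm i : X) := (e.symm i).2
      by_cases h : (e.symm i : X) = z
      · rw [if_pos h, if_pos (by rw [← h]; exact (hbfix t).symm)]
      · rw [if_neg h, if_neg (fun hc => h (hfix _ hbfix t z hc))]
    refine ⟨⟨d, hdInv⟩, ?_⟩
    funext i
    rw [hψ]
    have hval : d ((e.symm i : X)) = ((v i).val : ℤ) := by
      rw [hd, Finsupp.finset_sum_apply]
      rw [Finset.sum_eq_single i (fun j _ hj => by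
        rw [Finsupp.single_apply, if_neg]
        intro hc
        exact hj (e.symm.injective (Subtype.ext hc))) (fun h => absurd (Finset.mem_univ i) h)]
      rw [Finsupp.single_apply, if_pos rfl]
    rw [hval]
    push_cast
    exact ZMod.natCast_rightInverse (v i)
  -- kernel of ψ is the image of f
  have hker : ψ.ker = (AddMonoidHom.range f).addSubgroupOf Inv := by
    ext d
    rw [AddMonoidHom.mem_ker, AddSubgroup.mem_addSubgroupOf, AddMonoidHom.mem_range]
    constructor
    · intro h
      refine main (d : X →₀ ℤ).support.card (d : X →₀ ℤ) rfl d.2 ?_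
      intro b hb
      have hbB : b ∈ {x : X | ∀ t : T, t • x = x} := hb
      have := congrFun h (e ⟨b, hbB⟩)
      rw [hψ] at this
      simp only [Equiv.symm_apply_apply] at this
      rwa [Pi.zero_apply, ZMod.intCast_zmod_eq_zero_iff_dvd] at this
    · rintro ⟨g, hg⟩
      funext i
      rw [hψ, ← hg, Pi.zero_apply, ZMod.intCast_zmod_eq_zero_iff_dvd]
      exact hdvdfix g _ (e.symm i).2
  refine ⟨hfInv, ?_⟩
  rw [← hker]
  exact ⟨QuotientAddGroup.quotientKerEquivOfSurjective ψ hsurj⟩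
end
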